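/- arXiv:2306.09748 — 7 statements merged into one kernel-verified Lean document; each statement's English description precedes it below -/
import Mathlib

section
/- Let z0 be a Lebesgue-integrable function on [0,∞) and let T' > 0. Suppose q : [0,T') × [0,∞) → ℝ is such that q(0,r) = 1 for all r ≥ 0, q(t,·) is continuous for each t, for every T'' < T' there exist constants 0 < a ≤ b with a ≤ q(t,r) ≤ b for all t ∈ [0,T''] and r ≥ 0, the curve t ↦ q(t,·) is differentiable into the Banach space of bounded continuous functions on [0,∞) with the supremum norm, and ∂_t q(t,r) = q(t,r) · ∫_r^∞ (z0(s)/q(t,s)) ds for all t ∈ [0,T') and r ≥ 0. Then q(t,r) = (1 + (t/2)∫_r^∞ z0(s) ds)² for all t ∈ [0,T') and r ≥ 0. -/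
open MeasureTheory Set

section helpers
set_option maxHeartbeats 1000000

lemma fubini_half (f : ℝ → ℝ) (r : ℝ) (hf : IntegrableOn f (Ioi r)) :
    ∫ s in Ioi r, f s * ∫ σ in Ioi s, f σ = (∫ s in Ioi r, f s)^2 / 2 := by
  set μ := volume.restrict (Ioi r) with hμ
  have hfμ : Integrable f μ := hf
  have hF : Integrable (fun p : ℝ × ℝ => f p.1 * f p.2) (μ.prod μ) := hfμ.mul_prod hfμ
  have hA : MeasurableSet {p : ℝ × ℝ | p.1 < p.2} :=
    measurableSet_lt measurable_fst measurable_snd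
  have hB : MeasurableSet {p : ℝ × ℝ | p.2 < p.1} :=
    measurableSet_lt measurable_snd measurable_fst
  have hD : MeasurableSet {p : ℝ × ℝ | p.1 = p.2} :=
    measurableSet_eq_fun measurable_fst measurable_snd
  -- the diagonal is null
  have hDnull : (μ.prod μ) {p : ℝ × ℝ | p.1 = p.2} = 0 := by
    rw [Measure.prod_apply hD]
    have : ∀ x : ℝ, μ (Prod.mk x ⁻¹' {p : ℝ × ℝ | p.1 = p.2}) = 0 := by
      intro x
      have : Prod.mk x ⁻¹' {p : ℝ × ℝ | p.1 = p.2} = {x} := by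
        ext y; simp [eq_comm]
      rw [this]
      exact le_antisymm ((Measure.restrict_le_self _).trans_eq (by simp)) bot_le
    simp [this]
  -- integral over A equals the target integral J
  have hIA : Integrable ({p : ℝ × ℝ | p.1 < p.2}.indicator fun p => f p.1 * f p.2) (μ.prod μ) :=
    hF.indicator hA
  have hIB : Integrable ({p : ℝ × ℝ | p.2 < p.1}.indicator fun p => f p.1 * f p.2) (μ.prod μ) :=
    hF.indicator hB
  have claim1 : ∫ p : ℝ × ℝ, {p : ℝ × ℝ | p.1 < p.2}.indicator (fun p => f p.1 * f p.2) p ∂(μ.prod μ)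
      = ∫ s in Ioi r, f s * ∫ σ in Ioi s, f σ := by
    rw [MeasureTheory.integral_prod _ hIA]
    refine setIntegral_congr_fun measurableSet_Ioi (fun x hx => ?_)
    have h1 : ∀ y : ℝ, {p : ℝ × ℝ | p.1 < p.2}.indicator (fun p => f p.1 * f p.2) (x, y)
        = (Ioi x).indicator (fun y => f x * f y) y := by
      intro y
      by_cases h : x < y <;> simp [Set.indicator, h]
    simp_rw [h1]
    rw [integral_indicator measurableSet_Ioi, hμ, Measure.restrict_restrict measurableSet_Ioi]
    rw [Set.Ioi_inter_Ioi]
    have : max x r = x := max_eq_left (le_of_lt hx)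
    rw [this, integral_const_mul]
  have claim2 : ∫ p : ℝ × ℝ, {p : ℝ × ℝ | p.2 < p.1}.indicator (fun p => f p.1 * f p.2) p ∂(μ.prod μ)
      = ∫ p : ℝ × ℝ, {p : ℝ × ℝ | p.1 < p.2}.indicator (fun p => f p.1 * f p.2) p ∂(μ.prod μ) := by
    have hswap : ∀ p : ℝ × ℝ, {p : ℝ × ℝ | p.2 < p.1}.indicator (fun p => f p.1 * f p.2) p
        = {p : ℝ × ℝ | p.1 < p.2}.indicator (fun p => f p.1 * f p.2) p.swap := by
      intro p
      by_cases h : p.2 < p.1 <;> simp [Set.indicator, Prod.swap, h, mul_comm]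
    simp_rw [hswap]
    rw [← MeasureTheory.integral_map measurable_swap.aemeasurable]
    · rw [MeasureTheory.Measure.prod_swap]
    · rw [MeasureTheory.Measure.prod_swap]
      exact hIA.aestronglyMeasurable
  have claim3 : (fun p : ℝ × ℝ => f p.1 * f p.2) =ᵐ[μ.prod μ]
      (fun p => {p : ℝ × ℝ | p.1 < p.2}.indicator (fun p => f p.1 * f p.2) p
        + {p : ℝ × ℝ | p.2 < p.1}.indicator (fun p => f p.1 * f p.2) p) := by
    refine (measure_mono_null ?_ hDnull : (μ.prod μ) {p : ℝ × ℝ | ¬ _} = 0)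
    intro p hp
    simp only [Set.mem_setOf_eq] at hp ⊢
    by_contra hne
    rcases lt_trichotomy p.1 p.2 with h | h | h
    · exact hp (by simp [Set.indicator, h, not_lt.mpr (le_of_lt h)])
    · exact hne h
    · exact hp (by simp [Set.indicator, h, not_lt.mpr (le_of_lt h)])
  have claim4 : ∫ p : ℝ × ℝ, f p.1 * f p.2 ∂(μ.prod μ) = (∫ s, f s ∂μ) * (∫ s, f s ∂μ) :=
    integral_prod_mul f f
  have : (∫ s, f s ∂μ) * (∫ s, f s ∂μ)
      = (∫ s in Ioi r, f s * ∫ σ in Ioi s, f σ) + (∫ s in Ioi r, f s * ∫ σ in Ioi s, f σ) := by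
    rw [← claim4, integral_congr_ae claim3, integral_add hIA hIB, claim1, claim2, claim1]
  rw [pow_two]
  linarith [this]


lemma aux_bound {a A B D δ : ℝ} (ha : 0 < a) (hA : a ≤ A) (hB : a ≤ B) :
    |1/A - 1/B + δ * D / B^2| ≤
      |A - B - δ*D| * (a⁻¹)^2 + |δ| * |D| * |A - B| * (a⁻¹)^3 := by
  have hA0 : 0 < A := lt_of_lt_of_le ha hA
  have hB0 : 0 < B := lt_of_lt_of_le ha hB
  have key : 1/A - 1/B + δ * D / B^2
      = -((A - B - δ*D)/(A*B)) + δ*D*(A-B)/(A*B^2) := by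
    field_simp
    ring
  rw [key]
  have h1 : |(-((A - B - δ*D)/(A*B)))| ≤ |A - B - δ*D| * (a⁻¹)^2 := by
    rw [abs_neg, abs_div]
    rw [div_le_iff₀ (by positivity)]
    have : |A * B| = A * B := abs_of_pos (by positivity)
    rw [this]
    calc |A - B - δ*D| = |A - B - δ*D| * ((a⁻¹)^2 * a^2) := by
          rw [inv_pow, inv_mul_cancel₀ (by positivity)]; ring
      _ ≤ |A - B - δ*D| * ((a⁻¹)^2 * (A*B)) := by
          gcongr
          nlinarith
      _ = |A - B - δ*D| * (a⁻¹)^2 * (A*B) := by ring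
  have h2 : |δ*D*(A-B)/(A*B^2)| ≤ |δ| * |D| * |A - B| * (a⁻¹)^3 := by
    rw [abs_div, abs_mul, abs_mul]
    rw [div_le_iff₀ (by positivity)]
    have : |A * B^2| = A * B^2 := abs_of_pos (by positivity)
    rw [this]
    calc |δ| * |D| * |A - B| = |δ| * |D| * |A - B| * ((a⁻¹)^3 * a^3) := by
          rw [inv_pow, inv_mul_cancel₀ (by positivity)]; ring
      _ ≤ |δ| * |D| * |A - B| * ((a⁻¹)^3 * (A*B^2)) := by
          gcongr
          calc a^3 = a * a^2 := by ring
            _ ≤ A * B^2 := by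
                apply mul_le_mul hA _ (by positivity) (le_of_lt hA0)
                nlinarith
      _ = |δ| * |D| * |A - B| * (a⁻¹)^3 * (A*B^2) := by ring
  calc |(-((A - B - δ*D)/(A*B))) + δ*D*(A-B)/(A*B^2)|
      ≤ |(-((A - B - δ*D)/(A*B)))| + |δ*D*(A-B)/(A*B^2)| := abs_add_le _ _
    _ ≤ _ := add_le_add h1 h2

lemma tail_eq (f : ℝ → ℝ) (hf : Integrable f) (s : ℝ) :
    ∫ σ in Ioi s, f σ = (∫ σ in Ioi 0, f σ) - ∫ σ in (0:ℝ)..s, f σ := by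
  rcases le_or_gt 0 s with h | h
  · rw [intervalIntegral.integral_of_le h]
    have hsplit : ∫ σ in Ioi 0, f σ = (∫ σ in Ioc 0 s, f σ) + ∫ σ in Ioi s, f σ := by
      rw [← setIntegral_union (Set.Ioc_disjoint_Ioi le_rfl) measurableSet_Ioi
        (hf.integrableOn) (hf.integrableOn), Set.Ioc_union_Ioi_eq_Ioi h]
    linarith [hsplit]
  · rw [intervalIntegral.integral_of_ge (le_of_lt h)]
    have hsplit : ∫ σ in Ioi s, f σ = (∫ σ in Ioc s 0, f σ) + ∫ σ in Ioi 0, f σ := by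
      rw [← setIntegral_union (Set.Ioc_disjoint_Ioi le_rfl) measurableSet_Ioi
        (hf.integrableOn) (hf.integrableOn), Set.Ioc_union_Ioi_eq_Ioi (le_of_lt h)]
    linarith [hsplit]

lemma cont_tail (f : ℝ → ℝ) (hf : Integrable f) :
    Continuous fun s => ∫ σ in Ioi s, f σ := by
  have : (fun s => ∫ σ in Ioi s, f σ)
      = fun s => (∫ σ in Ioi 0, f σ) - ∫ σ in (0:ℝ)..s, f σ := by
    ext s; exact tail_eq f hf s
  rw [this]
  exact continuous_const.sub
    (intervalIntegral.continuous_primitive (fun a b => hf.intervalIntegrable) 0)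

end helpers

set_option maxHeartbeats 2000000 in
/-- uniqueness for the Liouville-type equation: any suitably bounded solution
of `∂ₜ q = q · ∫_r^∞ z0/q` with `q(0,·) ≡ 1` is the explicit Liouville solution. -/
theorem liouville_uniqueness (z0 : ℝ → ℝ) (hz0 : IntegrableOn z0 (Ici 0))
    (T' : ℝ) (hT' : 0 < T')
    (q : ℝ → ℝ → ℝ)
    (hq0 : ∀ r : ℝ, 0 ≤ r → q 0 r = 1)
    (hqcont : ∀ t ∈ Ico (0:ℝ) T', ContinuousOn (q t) (Ici 0))
    (hbounds : ∀ T'' : ℝ, T'' < T' → ∃ a b : ℝ, 0 < a ∧ a ≤ b ∧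
      ∀ t ∈ Icc (0:ℝ) T'', ∀ r : ℝ, 0 ≤ r → a ≤ q t r ∧ q t r ≤ b)
    (Q : ℝ → BoundedContinuousFunction {r : ℝ // 0 ≤ r} ℝ)
    (hQ : ∀ t ∈ Ico (0:ℝ) T', ∀ x : {r : ℝ // 0 ≤ r}, Q t x = q t x.1)
    (hQdiff : ∀ t ∈ Ico (0:ℝ) T', DifferentiableWithinAt ℝ Q (Ico 0 T') t)
    (hpde : ∀ t ∈ Ico (0:ℝ) T', ∀ r : ℝ, 0 ≤ r →
      HasDerivWithinAt (fun τ => q τ r)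
        (q t r * ∫ s in Ioi r, z0 s / q t s) (Ico 0 T') t) :
    ∀ t ∈ Ico (0:ℝ) T', ∀ r : ℝ, 0 ≤ r →
      q t r = (1 + t / 2 * ∫ s in Ioi r, z0 s) ^ 2 := by
  intro t ht r hr
  -- notation
  set u : ℝ → ℝ → ℝ := fun t' s => ∫ σ in Ioi s, z0 σ / q t' σ with hu_def
  set Z : ℝ := ∫ s in Ioi r, z0 s with hZ_def
  have h0mem : (0:ℝ) ∈ Ico (0:ℝ) T' := ⟨le_rfl, hT'⟩
  -- positivity
  have hpos : ∀ t' ∈ Ico (0:ℝ) T', ∀ s : ℝ, 0 ≤ s → 0 < q t' s := by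
    intro t' ht' s hs
    obtain ⟨a, b, ha, hab, h⟩ := hbounds t' ht'.2
    exact lt_of_lt_of_le ha (h t' ⟨ht'.1, le_rfl⟩ s hs).1
  -- the key derivative of u
  have huderiv : ∀ t' ∈ Ico (0:ℝ) T',
      HasDerivWithinAt (fun τ => u τ r) (-((u t' r)^2) / 2) (Ico 0 T') t' := by
    intro t1 ht1
    set T'' : ℝ := (t1 + T') / 2 with hT''def
    have ht1T : t1 < T'' := by rw [hT''def]; linarith [ht1.2]
    have hTT : T'' < T' := by rw [hT''def]; linarith [ht1.2]
    have hsub : Icc (0:ℝ) T'' ⊆ Ico 0 T' := fun x hx => ⟨hx.1, lt_of_le_of_lt hx.2 hTT⟩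
    have ht1mem : t1 ∈ Icc (0:ℝ) T'' := ⟨ht1.1, le_of_lt ht1T⟩
    obtain ⟨a, b, ha, hab, hbd⟩ := hbounds T'' hTT
    have hIoiIci : Ioi r ⊆ Ici (0:ℝ) := fun x hx => le_trans hr (le_of_lt hx)
    -- integrability of z0 / q τ on Ici 0
    have hfint : ∀ τ ∈ Icc (0:ℝ) T'', IntegrableOn (fun s => z0 s / q τ s) (Ici 0) := by
      intro τ hτ
      have hτ' : τ ∈ Ico (0:ℝ) T' := hsub hτ
      have hmeas : AEStronglyMeasurable (fun s => z0 s / q τ s) (volume.restrict (Ici 0)) := by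
        have h1 : AEStronglyMeasurable z0 (volume.restrict (Ici 0)) := hz0.1
        have h2 : AEStronglyMeasurable (fun s => (q τ s)⁻¹) (volume.restrict (Ici 0)) :=
          ((hqcont τ hτ').inv₀ (fun s hs => ne_of_gt (hpos τ hτ' s hs))).aestronglyMeasurable
            measurableSet_Ici
        simpa [div_eq_mul_inv, Pi.mul_def] using h1.mul h2
      refine Integrable.mono' ((hz0.abs).mul_const a⁻¹) hmeas ?_
      refine (ae_restrict_iff' measurableSet_Ici).2 (Filter.Eventually.of_forall fun s hs => ?_)
      have hq1 : a ≤ q τ s := (hbd τ hτ s hs).1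
      have hq2 : 0 < q τ s := hpos τ hτ' s hs
      rw [Real.norm_eq_abs, abs_div, abs_of_pos hq2, div_eq_mul_inv]
      gcongr
    have hz0abs : IntegrableOn (fun s => |z0 s|) (Ici 0) := hz0.abs
    set I0 : ℝ := ∫ s in Ici 0, |z0 s| with hI0def
    have hI0nn : 0 ≤ I0 := by positivity
    -- bound on u
    have hubd : ∀ τ ∈ Icc (0:ℝ) T'', ∀ s : ℝ, 0 ≤ s → |u τ s| ≤ I0 * a⁻¹ := by
      intro τ hτ s hs
      have hIoisub : Ioi s ⊆ Ici (0:ℝ) := fun x hx => le_trans hs (le_of_lt hx)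
      have h1 : |u τ s| ≤ ∫ σ in Ioi s, |z0 σ / q τ σ| := by
        simp only [hu_def, ← Real.norm_eq_abs]
        exact norm_integral_le_integral_norm _
      have h2 : ∫ σ in Ioi s, |z0 σ / q τ σ| ≤ ∫ σ in Ioi s, |z0 σ| * a⁻¹ := by
        refine setIntegral_mono_on (((hfint τ hτ).mono_set hIoisub).abs)
          ((hz0abs.mono_set hIoisub).mul_const a⁻¹) measurableSet_Ioi (fun σ hσ => ?_)
        have hσ0 : (0:ℝ) ≤ σ := le_trans hs (le_of_lt hσ)
        have hq2 : 0 < q τ σ := hpos τ (hsub hτ) σ hσ0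
        rw [abs_div, abs_of_pos hq2, div_eq_mul_inv]
        gcongr
        exact (hbd τ hτ σ hσ0).1
      have h3 : ∫ σ in Ioi s, |z0 σ| * a⁻¹ ≤ ∫ σ in Ici 0, |z0 σ| * a⁻¹ := by
        refine setIntegral_mono_set (hz0abs.mul_const a⁻¹) ?_ (HasSubset.Subset.eventuallyLE hIoisub)
        exact Filter.Eventually.of_forall fun σ => by positivity
      have h4 : ∫ σ in Ici 0, |z0 σ| * a⁻¹ = I0 * a⁻¹ := by
        rw [hI0def, ← integral_mul_const]
      linarith
    -- the derivative of Q at t1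
    set Qd : BoundedContinuousFunction {r : ℝ // 0 ≤ r} ℝ := derivWithin Q (Ico 0 T') t1
      with hQddef
    have hQd : HasDerivWithinAt Q Qd (Ico 0 T') t1 := (hQdiff t1 ht1).hasDerivWithinAt
    -- pointwise identification of Qd
    have hQdpt : ∀ x : {r : ℝ // 0 ≤ r}, Qd x = q t1 x.1 * u t1 x.1 := by
      intro x
      have h1 : HasDerivWithinAt (⇑(BoundedContinuousFunction.evalCLM (𝕜 := ℝ) x) ∘ Q)
          ((BoundedContinuousFunction.evalCLM (𝕜 := ℝ) x) Qd) (Ico 0 T') t1 :=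
        (BoundedContinuousFunction.evalCLM (𝕜 := ℝ) x).hasFDerivAt.comp_hasDerivWithinAt t1 hQd
      have h2 : HasDerivWithinAt (fun τ => q τ x.1) (Qd x) (Ico 0 T') t1 :=
        h1.congr (fun τ hτ => (hQ τ hτ x).symm) ((hQ t1 ht1 x).symm)
      exact ((uniqueDiffOn_Ico 0 T') t1 ht1).eq_deriv _ h2 (hpde t1 ht1 x.1 x.2)
    -- integrability of the L-integrand
    have huAESM : AEStronglyMeasurable (fun s => u t1 s) (volume.restrict (Ioi r)) := by
      set g : ℝ → ℝ := (Ici 0).indicator (fun σ => z0 σ / q t1 σ) with hgdef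
      have hgint : Integrable g := (integrable_indicator_iff measurableSet_Ici).2
        (hfint t1 ht1mem)
      have hcont : Continuous fun s => ∫ σ in Ioi s, g σ := cont_tail g hgint
      refine (hcont.aestronglyMeasurable.restrict).congr ?_
      refine (ae_restrict_iff' measurableSet_Ioi).2 (Filter.Eventually.of_forall fun s hs => ?_)
      have hs0 : (0:ℝ) ≤ s := le_trans hr (le_of_lt hs)
      refine setIntegral_congr_fun measurableSet_Ioi (fun σ hσ => ?_)
      rw [hgdef]
      exact indicator_of_mem (le_trans hs0 (le_of_lt hσ)) _
    have hHAESM : AEStronglyMeasurable (fun s => z0 s * u t1 s / q t1 s)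
        (volume.restrict (Ioi r)) := by
      have h1 : AEStronglyMeasurable z0 (volume.restrict (Ioi r)) :=
        hz0.1.mono_measure (Measure.restrict_mono hIoiIci le_rfl)
      have h2 : AEStronglyMeasurable (fun s => (q t1 s)⁻¹) (volume.restrict (Ioi r)) :=
        ((((hqcont t1 ht1).mono hIoiIci)).inv₀
          (fun s hs => ne_of_gt (hpos t1 ht1 s (hIoiIci hs)))).aestronglyMeasurable
          measurableSet_Ioi
      have := (h1.mul huAESM).mul h2
      simpa [div_eq_mul_inv, mul_assoc, Pi.mul_def] using this
    have hLint : IntegrableOn (fun s => z0 s * u t1 s / q t1 s) (Ioi r) := by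
      refine Integrable.mono' (((hz0abs.mono_set hIoiIci)).mul_const (I0 * a⁻¹ * a⁻¹)) hHAESM ?_
      refine (ae_restrict_iff' measurableSet_Ioi).2 (Filter.Eventually.of_forall fun s hs => ?_)
      have hs0 : (0:ℝ) ≤ s := hIoiIci hs
      have hq2 : 0 < q t1 s := hpos t1 ht1 s hs0
      have hq1 : a ≤ q t1 s := (hbd t1 ht1mem s hs0).1
      have hub := hubd t1 ht1mem s hs0
      rw [Real.norm_eq_abs, abs_div, abs_mul, abs_of_pos hq2]
      calc |z0 s| * |u t1 s| / q t1 s ≤ |z0 s| * (I0 * a⁻¹) / a := by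
            gcongr
        _ = |z0 s| * (I0 * a⁻¹ * a⁻¹) := by
            rw [div_eq_mul_inv]; ring
    -- integrability of z0/q τ on Ioi r for τ in the window
    have hint1 : ∀ τ ∈ Icc (0:ℝ) T'', IntegrableOn (fun s => z0 s / q τ s) (Ioi r) :=
      fun τ hτ => (hfint τ hτ).mono_set hIoiIci
    -- the candidate derivative
    set L : ℝ := ∫ s in Ioi r, -(z0 s * u t1 s / q t1 s) with hLdef
    have hLval : L = -((u t1 r)^2) / 2 := by
      have h1 : L = -∫ s in Ioi r, (z0 s / q t1 s) * u t1 s := by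
        rw [hLdef, integral_neg]
        congr 1
        refine setIntegral_congr_fun measurableSet_Ioi (fun s hs => ?_)
        ring
      have h2 : ∫ s in Ioi r, (z0 s / q t1 s) * ∫ σ in Ioi s, z0 σ / q t1 σ
          = (∫ s in Ioi r, z0 s / q t1 s)^2 / 2 :=
        fubini_half (fun s => z0 s / q t1 s) r (hint1 t1 ht1mem)
      rw [h1]
      simp only [hu_def]
      rw [h2]
      ring
    -- the main isLittleO estimate
    set I1 : ℝ := ∫ s in Ioi r, |z0 s| with hI1def
    have hI1nn : 0 ≤ I1 := by positivity
    set K0 : ℝ := (a⁻¹)^2 + ‖Qd‖ * (a⁻¹)^3 with hK0def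
    have hK0nn : 0 ≤ K0 := by positivity
    have hR : (fun τ => Q τ - Q t1 - (τ - t1) • Qd) =o[nhdsWithin t1 (Ico 0 T')]
        fun τ => τ - t1 := hasDerivWithinAt_iff_isLittleO.mp hQd
    have hQtend : Filter.Tendsto (fun τ => ‖Q τ - Q t1‖) (nhdsWithin t1 (Ico 0 T')) (nhds 0) := by
      have hc : Filter.Tendsto Q (nhdsWithin t1 (Ico 0 T')) (nhds (Q t1)) :=
        (hQdiff t1 ht1).continuousWithinAt
      have := (hc.sub (tendsto_const_nhds (x := Q t1))).norm
      simpa using this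
    have h2o : (fun τ => ‖τ - t1‖ * ‖Q τ - Q t1‖) =o[nhdsWithin t1 (Ico 0 T')]
        fun τ => τ - t1 := by
      have := (Asymptotics.isBigO_refl (fun τ : ℝ => τ - t1)
        (nhdsWithin t1 (Ico 0 T'))).norm_left.mul_isLittleO
        ((Asymptotics.isLittleO_one_iff ℝ).2 hQtend)
      simpa using this
    have hsum : (fun τ => (I1 * K0) * (‖Q τ - Q t1 - (τ - t1) • Qd‖ + ‖τ - t1‖ * ‖Q τ - Q t1‖))
        =o[nhdsWithin t1 (Ico 0 T')] fun τ => τ - t1 :=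
      (hR.norm_left.add h2o).const_mul_left (I1 * K0)
    have hev0 : ∀ᶠ τ in nhdsWithin t1 (Ico 0 T'), τ ∈ Icc (0:ℝ) T'' := by
      have h1 : ∀ᶠ τ in nhdsWithin t1 (Ico 0 T'), τ ∈ Ico (0:ℝ) T' := self_mem_nhdsWithin
      have h2 : ∀ᶠ τ in nhdsWithin t1 (Ico 0 T'), τ ∈ Iio T'' :=
        mem_nhdsWithin_of_mem_nhds (Iio_mem_nhds ht1T)
      filter_upwards [h1, h2] with τ hτ1 hτ2
      exact ⟨hτ1.1, le_of_lt hτ2⟩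
    have hmain : HasDerivWithinAt (fun τ => u τ r) L (Ico 0 T') t1 := by
      rw [hasDerivWithinAt_iff_isLittleO]
      refine Asymptotics.IsBigO.trans_isLittleO ?_ hsum
      rw [Asymptotics.isBigO_iff]
      refine ⟨1, ?_⟩
      filter_upwards [hev0] with τ hτ''
      have hτIco : τ ∈ Ico (0:ℝ) T' := hsub hτ''
      set δ : ℝ := τ - t1 with hδdef
      -- rewrite the difference as a single integral
      have hEint1 := hint1 τ hτ''
      have hEint2 := hint1 t1 ht1mem
      have hsplit : ∫ s in Ioi r, (z0 s / q τ s - z0 s / q t1 s + δ * (z0 s * u t1 s / q t1 s))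
          = ((∫ s in Ioi r, z0 s / q τ s) - ∫ s in Ioi r, z0 s / q t1 s)
            + δ * ∫ s in Ioi r, (z0 s * u t1 s / q t1 s) := by
        have hfg : IntegrableOn (fun s => z0 s / q τ s - z0 s / q t1 s) (Ioi r) :=
          hEint1.sub hEint2
        have hdh : IntegrableOn (fun s => δ * (z0 s * u t1 s / q t1 s)) (Ioi r) :=
          hLint.const_mul δ
        rw [integral_add hfg hdh, integral_sub hEint1 hEint2, integral_const_mul]
      have heq : u τ r - u t1 r - δ • L
          = ∫ s in Ioi r, (z0 s / q τ s - z0 s / q t1 s + δ * (z0 s * u t1 s / q t1 s)) := by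
        rw [hsplit, smul_eq_mul, hLdef, integral_neg]
        simp only [hu_def]
        ring
      -- pointwise bound
      have hptbd : ∀ s ∈ Ioi r, |z0 s / q τ s - z0 s / q t1 s + δ * (z0 s * u t1 s / q t1 s)|
          ≤ |z0 s| * (K0 * (‖Q τ - Q t1 - δ • Qd‖ + |δ| * ‖Q τ - Q t1‖)) := by
        intro s hs
        have hs0 : (0:ℝ) ≤ s := hIoiIci hs
        have hA : a ≤ q τ s := (hbd τ hτ'' s hs0).1
        have hB : a ≤ q t1 s := (hbd t1 ht1mem s hs0).1
        have hBpos : 0 < q t1 s := lt_of_lt_of_le ha hB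
        have hDval : Qd ⟨s, hs0⟩ = q t1 s * u t1 s := hQdpt ⟨s, hs0⟩
        have hexpr : z0 s / q τ s - z0 s / q t1 s + δ * (z0 s * u t1 s / q t1 s)
            = z0 s * (1 / q τ s - 1 / q t1 s + δ * Qd ⟨s, hs0⟩ / (q t1 s)^2) := by
          rw [hDval]
          field_simp
        rw [hexpr, abs_mul]
        have hbd1 := aux_bound (A := q τ s) (B := q t1 s) (D := Qd ⟨s, hs0⟩) (δ := δ) ha hA hB
        have hRapp : q τ s - q t1 s - δ * Qd ⟨s, hs0⟩ = (Q τ - Q t1 - δ • Qd) ⟨s, hs0⟩ := by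
          simp [hQ τ hτIco ⟨s, hs0⟩, hQ t1 ht1 ⟨s, hs0⟩]
        have hb1 : |q τ s - q t1 s - δ * Qd ⟨s, hs0⟩| ≤ ‖Q τ - Q t1 - δ • Qd‖ := by
          rw [hRapp, ← Real.norm_eq_abs]
          exact BoundedContinuousFunction.norm_coe_le_norm _ _
        have hb2 : |q τ s - q t1 s| ≤ ‖Q τ - Q t1‖ := by
          have : q τ s - q t1 s = (Q τ - Q t1) ⟨s, hs0⟩ := by
            simp [hQ τ hτIco ⟨s, hs0⟩, hQ t1 ht1 ⟨s, hs0⟩]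
          rw [this, ← Real.norm_eq_abs]
          exact BoundedContinuousFunction.norm_coe_le_norm _ _
        have hb3 : |Qd ⟨s, hs0⟩| ≤ ‖Qd‖ := by
          rw [← Real.norm_eq_abs]
          exact BoundedContinuousFunction.norm_coe_le_norm _ _
        have hfinal : |q τ s - q t1 s - δ * Qd ⟨s, hs0⟩| * (a⁻¹)^2
            + |δ| * |Qd ⟨s, hs0⟩| * |q τ s - q t1 s| * (a⁻¹)^3
            ≤ K0 * (‖Q τ - Q t1 - δ • Qd‖ + |δ| * ‖Q τ - Q t1‖) := by
          rw [hK0def]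
          have ha2 : (0:ℝ) ≤ (a⁻¹)^2 := by positivity
          have ha3 : (0:ℝ) ≤ (a⁻¹)^3 := by positivity
          have hn1 : (0:ℝ) ≤ ‖Q τ - Q t1 - δ • Qd‖ := norm_nonneg _
          have hn2 : (0:ℝ) ≤ ‖Q τ - Q t1‖ := norm_nonneg _
          have hn3 : (0:ℝ) ≤ ‖Qd‖ := norm_nonneg _
          have hd : (0:ℝ) ≤ |δ| := abs_nonneg _
          have e1 : |q τ s - q t1 s - δ * Qd ⟨s, hs0⟩| * (a⁻¹)^2
              ≤ ‖Q τ - Q t1 - δ • Qd‖ * (a⁻¹)^2 := by gcongr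
          have e2 : |δ| * |Qd ⟨s, hs0⟩| * |q τ s - q t1 s| * (a⁻¹)^3
              ≤ |δ| * ‖Qd‖ * ‖Q τ - Q t1‖ * (a⁻¹)^3 := by gcongr <;> positivity
          nlinarith [mul_nonneg (mul_nonneg hd hn3) hn2, mul_nonneg hn1 (mul_nonneg hn3 ha3),
            mul_nonneg (mul_nonneg hd hn2) ha2]
        exact mul_le_mul_of_nonneg_left (le_trans hbd1 hfinal) (abs_nonneg _)
      -- integrate the bound
      have hEint : IntegrableOn
          (fun s => z0 s / q τ s - z0 s / q t1 s + δ * (z0 s * u t1 s / q t1 s)) (Ioi r) :=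
        (hEint1.sub hEint2).add (hLint.const_mul δ)
      have hnorm : ‖u τ r - u t1 r - δ • L‖
          ≤ I1 * (K0 * (‖Q τ - Q t1 - δ • Qd‖ + |δ| * ‖Q τ - Q t1‖)) := by
        rw [heq, Real.norm_eq_abs]
        have h1 := norm_integral_le_integral_norm (μ := volume.restrict (Ioi r))
          (fun s => z0 s / q τ s - z0 s / q t1 s + δ * (z0 s * u t1 s / q t1 s))
        rw [Real.norm_eq_abs] at h1
        simp only [Real.norm_eq_abs] at h1
        have h2 : ∫ s in Ioi r, |z0 s / q τ s - z0 s / q t1 s + δ * (z0 s * u t1 s / q t1 s)|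
            ≤ ∫ s in Ioi r, |z0 s| * (K0 * (‖Q τ - Q t1 - δ • Qd‖ + |δ| * ‖Q τ - Q t1‖)) :=
          setIntegral_mono_on hEint.abs
            ((hz0abs.mono_set hIoiIci).mul_const _) measurableSet_Ioi hptbd
        have h3 : ∫ s in Ioi r, |z0 s| * (K0 * (‖Q τ - Q t1 - δ • Qd‖ + |δ| * ‖Q τ - Q t1‖))
            = I1 * (K0 * (‖Q τ - Q t1 - δ • Qd‖ + |δ| * ‖Q τ - Q t1‖)) := by
          rw [hI1def, ← integral_mul_const]
        exact le_trans (le_trans h1 h2) (le_of_eq h3)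
      have hend : ‖u τ r - u t1 r - δ • L‖
          ≤ 1 * ‖I1 * K0 * (‖Q τ - Q t1 - δ • Qd‖ + ‖δ‖ * ‖Q τ - Q t1‖)‖ := by
        rw [one_mul, Real.norm_eq_abs (I1 * K0 * _), abs_of_nonneg (by positivity)]
        calc ‖u τ r - u t1 r - δ • L‖
            ≤ I1 * (K0 * (‖Q τ - Q t1 - δ • Qd‖ + |δ| * ‖Q τ - Q t1‖)) := hnorm
          _ = I1 * K0 * (‖Q τ - Q t1 - δ • Qd‖ + ‖δ‖ * ‖Q τ - Q t1‖) := by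
              rw [Real.norm_eq_abs]; ring
      exact hend
    rw [hLval] at hmain
    exact hmain
  -- constancy helper
  have hconst : ∀ f : ℝ → ℝ, (∀ t' ∈ Ico (0:ℝ) T', HasDerivWithinAt f 0 (Ico 0 T') t') →
      ∀ t' ∈ Ico (0:ℝ) T', f t' = f 0 := by
    intro f hf t' ht'
    refine Convex.is_const_of_fderivWithin_eq_zero (convex_Ico 0 T')
      (fun x hx => (hf x hx).differentiableWithinAt) (fun x hx => ?_) ht' h0mem
    have h1 := (hf x hx).hasFDerivWithinAt.fderivWithin ((uniqueDiffOn_Ico 0 T') x hx)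
    rw [h1]
    ext y
    simp
  -- derivative of sqrt of q
  have hsqrt : ∀ t' ∈ Ico (0:ℝ) T',
      HasDerivWithinAt (fun τ => Real.sqrt (q τ r))
        ((q t' r * u t' r) / (2 * Real.sqrt (q t' r))) (Ico 0 T') t' := by
    intro t' ht'
    exact (hpde t' ht' r hr).sqrt (ne_of_gt (hpos t' ht' r hr))
  -- w := u * sqrt q is constant
  have hwderiv : ∀ t' ∈ Ico (0:ℝ) T',
      HasDerivWithinAt (fun τ => u τ r * Real.sqrt (q τ r)) 0 (Ico 0 T') t' := by
    intro t' ht'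
    have h := (huderiv t' ht').mul (hsqrt t' ht')
    refine h.congr_deriv (Eq.symm ?_)
    have hq0' : 0 < q t' r := hpos t' ht' r hr
    have hs : Real.sqrt (q t' r) ^ 2 = q t' r := Real.sq_sqrt (le_of_lt hq0')
    have hsne : Real.sqrt (q t' r) ≠ 0 := ne_of_gt (Real.sqrt_pos.mpr hq0')
    field_simp
    linear_combination (u t' r ^ 2) * hs
  have hw0 : u 0 r * Real.sqrt (q 0 r) = Z := by
    rw [hq0 r hr, Real.sqrt_one, mul_one, hu_def, hZ_def]
    refine setIntegral_congr_fun measurableSet_Ioi (fun σ hσ => ?_)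
    rw [hq0 σ (le_of_lt (lt_of_le_of_lt hr hσ)), div_one]
  have hwt : ∀ t' ∈ Ico (0:ℝ) T', u t' r * Real.sqrt (q t' r) = Z := by
    intro t' ht'
    rw [hconst _ hwderiv t' ht', hw0]
  -- sqrt q has derivative Z / 2
  have hsqrtZ : ∀ t' ∈ Ico (0:ℝ) T',
      HasDerivWithinAt (fun τ => Real.sqrt (q τ r)) (Z / 2) (Ico 0 T') t' := by
    intro t' ht'
    have h := hsqrt t' ht'
    have hq0' : 0 < q t' r := hpos t' ht' r hr
    have hs : Real.sqrt (q t' r) ^ 2 = q t' r := Real.sq_sqrt (le_of_lt hq0')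
    have hsne : Real.sqrt (q t' r) ≠ 0 := ne_of_gt (Real.sqrt_pos.mpr hq0')
    have : (q t' r * u t' r) / (2 * Real.sqrt (q t' r)) = Z / 2 := by
      rw [← hwt t' ht']
      field_simp
      linear_combination (-u t' r) * hs
    rwa [this] at h
  -- g := sqrt q - τ Z/2 is constant
  have hg : ∀ t' ∈ Ico (0:ℝ) T',
      HasDerivWithinAt (fun τ => Real.sqrt (q τ r) - τ * (Z / 2)) 0 (Ico 0 T') t' := by
    intro t' ht'
    have h := (hsqrtZ t' ht').sub ((hasDerivAt_mul_const (Z/2)).hasDerivWithinAt)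
    simpa [Pi.sub_def] using h
  have hfin : Real.sqrt (q t r) - t * (Z / 2) = Real.sqrt (q 0 r) - 0 * (Z / 2) :=
    hconst _ hg t ht
  rw [hq0 r hr, Real.sqrt_one] at hfin
  have hsq : Real.sqrt (q t r) = 1 + t / 2 * Z := by linarith [hfin]
  have := Real.sq_sqrt (le_of_lt (hpos t ht r hr))
  rw [← this, hsq]
end

section
/- Let a > 0 and let 𝒞 denote the set of bounded continuous functions v : [0,∞) → ℝ with v(r) > a for all r ≥ 0, regarded as a subset of the Banach space C_b([0,∞);ℝ) of bounded continuous functions with the supremum norm. Let F, F̃ : 𝒞 → C_b([0,∞);ℝ) satisfy the monotonicity property: whenever v, ṽ ∈ 𝒞 and v(r) ≤ ṽ(r) for all r ≥ 0, then F(v)(r) ≤ F̃(ṽ)(r) for all r ≥ 0. Assume F̃ is locally Lipschitz with respect to the supremum norm. Let ũ : [0,T̃) → 𝒞 be a differentiable curve with ũ'(t) = F̃(ũ(t)) for all t, let u : [0,T) → 𝒞 be a differentiable curve with u'(t) = F(u(t)) for all t, and suppose u(0) = ũ(0). Then ũ(t)(r) ≥ u(t)(r) for all t ∈ [0, min(T,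 T̃)) and all r ≥ 0. -/
/-!
Write `D t = ‖(u t - ũ t)⁺‖` for the amount by which `u` exceeds `ũ`. By monotonicity
`F (u s) ≤ F̃ (u s ⊔ ũ s)`, and `u s ⊔ ũ s` lies at distance `D s` from `ũ s`, so wherever `F̃` is
`K`-Lipschitz each `s ↦ u s x - ũ s x` grows with slope at most `K * D s`. On a short interval
`[τ, b]` with `D τ = 0` this gives `max D ≤ K * (b - τ) * max D`, hence `D = 0` there as soon as
`K * (b - τ) < 1`. Continuous induction on the closed set `{t | u t ≤ ũ t}` spreads this over
`[0, min T T̃)`.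
-/

open Set Filter Topology Metric BoundedContinuousFunction
open scoped NNReal

theorem dist_sup_eq_norm_posPart {E : Type*} [NormedAddCommGroup E] [Lattice E] [AddRightMono E]
    (f g : E) : dist (f ⊔ g) g = ‖(f - g)⁺‖ := by
  rw [dist_eq_norm, sup_sub, sub_self, posPart_def]

theorem sub_le_mul_sub_of_hasDerivWithinAt_le {f f' : ℝ → ℝ} {a b C : ℝ}
    (hf : ∀ s ∈ Icc a b, HasDerivWithinAt f (f' s) (Icc a b) s) (hf' : ∀ s ∈ Icc a b, f' s ≤ C)
    {s : ℝ} (hs : s ∈ Icc a b) : f s - f a ≤ C * (s - a) := by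
  have hf_int : ∀ s ∈ interior (Icc a b), HasDerivAt f (f' s) s := fun s hs =>
    (hf s (interior_subset hs)).hasDerivAt (mem_interior_iff_mem_nhds.1 hs)
  refine (convex_Icc a b).image_sub_le_mul_sub_of_deriv_le
    (fun s hs => (hf s hs).continuousWithinAt)
    (fun s hs => (hf_int s hs).differentiableAt.differentiableWithinAt)
    (fun s hs => ?_) a (left_mem_Icc.2 (hs.1.trans hs.2)) s hs hs.1
  rw [(hf_int s hs).deriv]
  exact hf' s (interior_subset hs)

namespace BoundedContinuousFunction

variable {α : Type*} [TopologicalSpace α]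

theorem norm_posPart_le_iff {f : α →ᵇ ℝ} {c : ℝ} (hc : 0 ≤ c) :
    ‖f⁺‖ ≤ c ↔ ∀ x, f x ≤ c := by
  rw [norm_le hc]
  refine forall_congr' fun x => ?_
  rw [coe_posPart, Pi.posPart_apply, posPart_def, Real.norm_eq_abs,
    abs_of_nonneg (le_max_right _ _), max_le_iff, and_iff_left hc]

theorem apply_sub_apply_le_mul_norm_posPart {C S : Set (α →ᵇ ℝ)}
    {F G : (α →ᵇ ℝ) → α →ᵇ ℝ} (hmono : ∀ v ∈ C, ∀ w ∈ C, v ≤ w → F v ≤ G w)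
    {K : ℝ≥0} (hG : LipschitzOnWith K G S) {v w : α →ᵇ ℝ} (hv : v ∈ C) (hvw : v ⊔ w ∈ C)
    (hvwS : v ⊔ w ∈ S) (hwS : w ∈ S) (x : α) :
    F v x - G w x ≤ K * ‖(v - w)⁺‖ :=
  calc F v x - G w x ≤ (G (v ⊔ w) - G w) x :=
        sub_le_sub_right (hmono v hv _ hvw le_sup_left x) _
    _ ≤ dist (G (v ⊔ w)) (G w) :=
        dist_eq_norm (G (v ⊔ w)) (G w) ▸ (Real.le_norm_self _).trans (norm_coe_le_norm _ x)
    _ ≤ K * dist (v ⊔ w) w := hG.dist_le_mul _ hvwS _ hwS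
    _ = K * ‖(v - w)⁺‖ := by rw [dist_sup_eq_norm_posPart]

theorem le_of_deriv_sub_le_mul_norm_posPart {u v u' v' : ℝ → α →ᵇ ℝ} {a b : ℝ} {K : ℝ≥0}
    (hK : K * (b - a) < 1)
    (hu : ∀ s ∈ Icc a b, HasDerivWithinAt u (u' s) (Icc a b) s)
    (hv : ∀ s ∈ Icc a b, HasDerivWithinAt v (v' s) (Icc a b) s)
    (hbound : ∀ s ∈ Icc a b, ∀ x, u' s x - v' s x ≤ K * ‖(u s - v s)⁺‖)
    (ha : u a ≤ v a) : ∀ s ∈ Icc a b, u s ≤ v s := by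
  intro s hs
  have hD : ContinuousOn (fun s => ‖(u s - v s)⁺‖) (Icc a b) :=
    (continuous_norm.comp continuous_posPart).comp_continuousOn
      fun s hs => (hu s hs).continuousWithinAt.sub (hv s hs).continuousWithinAt
  obtain ⟨s₀, hs₀, hmax⟩ := isCompact_Icc.exists_isMaxOn ⟨s, hs⟩ hD
  set M := ‖(u s₀ - v s₀)⁺‖
  have hexcess : ∀ s ∈ Icc a b, ∀ x, u s x - v s x ≤ K * M * (b - a) := by
    intro s hs x
    have hx : ∀ s ∈ Icc a b,
        HasDerivWithinAt (fun s => u s x - v s x) (u' s x - v' s x) (Icc a b) s := fun s hs =>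
      ((evalCLM ℝ x).hasFDerivAt.comp_hasDerivWithinAt s (hu s hs)).sub
        ((evalCLM ℝ x).hasFDerivAt.comp_hasDerivWithinAt s (hv s hs))
    have hgrowth := sub_le_mul_sub_of_hasDerivWithinAt_le hx
      (fun s hs => (hbound s hs x).trans (mul_le_mul_of_nonneg_left (hmax hs) K.coe_nonneg)) hs
    have hstart : u a x - v a x ≤ 0 := sub_nonpos.2 (ha x)
    have hlength : K * M * (s - a) ≤ K * M * (b - a) := by gcongr; exact hs.2
    linarith
  have hM : M ≤ K * M * (b - a) :=
    (norm_posPart_le_iff (by have := hs.1.trans hs.2; positivity)).2 (hexcess s₀ hs₀)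
  have hM0 : M ≤ 0 := by nlinarith [norm_nonneg (u s₀ - v s₀)⁺]
  rw [← sub_nonpos, ← posPart_eq_zero, ← norm_le_zero_iff]
  exact (hmax hs).trans hM0

theorem eventually_nhdsGE_le_of_hasDerivWithinAt
    {C : Set (α →ᵇ ℝ)} (hC : SupClosed C) {F G : (α →ᵇ ℝ) → α →ᵇ ℝ}
    (hmono : ∀ v ∈ C, ∀ w ∈ C, v ≤ w → F v ≤ G w) {u v : ℝ → α →ᵇ ℝ} {τ ε : ℝ} {K : ℝ≥0}
    (hε : 0 < ε) (hG : LipschitzOnWith K G (ball (v τ) ε ∩ C)) {I : Set ℝ} (hI : I ∈ 𝓝[≥] τ)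
    (hu : ∀ s ∈ I, HasDerivWithinAt u (F (u s)) I s)
    (hv : ∀ s ∈ I, HasDerivWithinAt v (G (v s)) I s)
    (huC : ∀ s ∈ I, u s ∈ C) (hvC : ∀ s ∈ I, v s ∈ C) (hτ : u τ ≤ v τ) :
    ∀ᶠ s in 𝓝[≥] τ, u s ≤ v s := by
  have hτI : τ ∈ I := mem_of_mem_nhdsWithin (mem_Ici.2 le_rfl) hI
  have hu_lim : Tendsto u (𝓝[≥] τ) (𝓝 (u τ)) :=
    (hu τ hτI).continuousWithinAt.mono_of_mem_nhdsWithin hI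
  have hv_lim : Tendsto v (𝓝[≥] τ) (𝓝 (v τ)) :=
    (hv τ hτI).continuousWithinAt.mono_of_mem_nhdsWithin hI
  have hD_lim : Tendsto (fun s => ‖(u s - v s)⁺‖) (𝓝[≥] τ) (𝓝 0) := by
    have h0 : ‖(u τ - v τ)⁺‖ = 0 := by rw [posPart_eq_zero.2 (sub_nonpos.2 hτ), norm_zero]
    exact h0 ▸ ((continuous_posPart.tendsto _).comp (hu_lim.sub hv_lim)).norm
  have hK_lim : Tendsto (fun s => K * (s - τ)) (𝓝[≥] τ) (𝓝 0) := by
    have : Continuous fun s : ℝ => K * (s - τ) := by fun_prop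
    simpa using (this.tendsto τ).mono_left nhdsWithin_le_nhds
  have hsmall : ∀ᶠ s in 𝓝[≥] τ, s ∈ I ∧ ‖(u s - v s)⁺‖ < ε / 2 ∧
      dist (v s) (v τ) < ε / 2 ∧ K * (s - τ) < 1 :=
    (show ∀ᶠ s in 𝓝[≥] τ, s ∈ I from hI).and <|
      (hD_lim.eventually (gt_mem_nhds (half_pos hε))).and <|
      (hv_lim.eventually (ball_mem_nhds _ (half_pos hε))).and
      (hK_lim.eventually (gt_mem_nhds one_pos))
  obtain ⟨b, hτb, hsub⟩ := mem_nhdsGE_iff_exists_Icc_subset.1 hsmall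
  refine mem_nhdsGE_iff_exists_Icc_subset.2 ⟨b, hτb, ?_⟩
  have hIcc : Icc τ b ⊆ I := fun s hs => (hsub hs).1
  refine le_of_deriv_sub_le_mul_norm_posPart (hsub (right_mem_Icc.2 hτb.le)).2.2.2
    (fun s hs => (hu s (hIcc hs)).mono hIcc) (fun s hs => (hv s (hIcc hs)).mono hIcc)
    (fun s hs x => ?_) hτ
  obtain ⟨hsI, hDs, hvs, -⟩ := hsub hs
  have hvs' : v s ∈ ball (v τ) ε ∩ C := ⟨by rw [mem_ball]; linarith, hvC s hsI⟩
  refine apply_sub_apply_le_mul_norm_posPart hmono hG (huC s hsI)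
    (hC (huC s hsI) (hvC s hsI)) ⟨?_, hC (huC s hsI) (hvC s hsI)⟩ hvs' x
  rw [mem_ball]
  calc dist (u s ⊔ v s) (v τ) ≤ dist (u s ⊔ v s) (v s) + dist (v s) (v τ) := dist_triangle _ _ _
    _ < ε := by rw [dist_sup_eq_norm_posPart]; linarith

end BoundedContinuousFunction

theorem forall_Ico_le_of_eventually_nhdsGE_le {β X : Type*} [ConditionallyCompleteLinearOrder β]
    [TopologicalSpace β] [OrderTopology β] [DenselyOrdered β]
    [TopologicalSpace X] [Preorder X] [OrderClosedTopology X] {u v : β → X} {a b : β}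
    (hu : ContinuousOn u (Ico a b)) (hv : ContinuousOn v (Ico a b)) (ha : u a ≤ v a)
    (hstep : ∀ τ ∈ Ico a b, u τ ≤ v τ → ∀ᶠ s in 𝓝[≥] τ, u s ≤ v s) :
    ∀ t ∈ Ico a b, u t ≤ v t := by
  intro t ht
  have hsub : Icc a t ⊆ Ico a b := Icc_subset_Ico_right ht.2
  have hclosed : IsClosed ({s | u s ≤ v s} ∩ Icc a t) := by
    rw [inter_comm]
    exact ((hu.mono hsub).prodMk (hv.mono hsub)).preimage_isClosed_of_isClosed isClosed_Icc
      OrderClosedTopology.isClosed_le'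
  exact hclosed.Icc_subset_of_forall_mem_nhdsWithin ha
    (fun τ hτ => nhdsWithin_mono _ Ioi_subset_Ici_self
      (hstep τ ⟨hτ.2.1, hτ.2.2.trans ht.2⟩ hτ.1)) ⟨ht.1, le_rfl⟩

theorem banach_comparison_general (a : ℝ)
    (F Ftil : BoundedContinuousFunction {r : ℝ // 0 ≤ r} ℝ →
      BoundedContinuousFunction {r : ℝ // 0 ≤ r} ℝ)
    (hmono : ∀ v vtil : BoundedContinuousFunction {r : ℝ // 0 ≤ r} ℝ,
      (∀ x, a < v x) → (∀ x, a < vtil x) → (∀ x, v x ≤ vtil x) →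
      ∀ x, F v x ≤ Ftil vtil x)
    (hlip : ∀ v : BoundedContinuousFunction {r : ℝ // 0 ≤ r} ℝ, (∀ x, a < v x) →
      ∃ ε > (0:ℝ), ∃ K : NNReal, LipschitzOnWith K Ftil
        (Metric.ball v ε ∩ {w : BoundedContinuousFunction {r : ℝ // 0 ≤ r} ℝ | ∀ x, a < w x}))
    (T Ttil : ℝ)
    (util u : ℝ → BoundedContinuousFunction {r : ℝ // 0 ≤ r} ℝ)
    (hutilmem : ∀ t ∈ Ico (0:ℝ) Ttil, ∀ x, a < util t x)
    (hutil : ∀ t ∈ Ico (0:ℝ) Ttil, HasDerivWithinAt util (Ftil (util t)) (Ico 0 Ttil) t)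
    (humem : ∀ t ∈ Ico (0:ℝ) T, ∀ x, a < u t x)
    (hu : ∀ t ∈ Ico (0:ℝ) T, HasDerivWithinAt u (F (u t)) (Ico 0 T) t)
    (hinit : u 0 = util 0) :
    ∀ t ∈ Ico (0:ℝ) (min T Ttil), ∀ x, u t x ≤ util t x := by
  have hC : SupClosed {w : BoundedContinuousFunction {r : ℝ // 0 ≤ r} ℝ | ∀ x, a < w x} :=
    fun v _ w hw x => (hw x).trans_le (le_max_right (v x) (w x))
  have hT : Ico 0 (min T Ttil) ⊆ Ico 0 T := Ico_subset_Ico_right (min_le_left _ _)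
  have hTtil : Ico 0 (min T Ttil) ⊆ Ico 0 Ttil := Ico_subset_Ico_right (min_le_right _ _)
  have hu' : ∀ t ∈ Ico 0 (min T Ttil), HasDerivWithinAt u (F (u t)) (Ico 0 (min T Ttil)) t :=
    fun t ht => (hu t (hT ht)).mono hT
  have hutil' : ∀ t ∈ Ico 0 (min T Ttil),
      HasDerivWithinAt util (Ftil (util t)) (Ico 0 (min T Ttil)) t :=
    fun t ht => (hutil t (hTtil ht)).mono hTtil
  refine forall_Ico_le_of_eventually_nhdsGE_le (fun t ht => (hu' t ht).continuousWithinAt)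
    (fun t ht => (hutil' t ht).continuousWithinAt) hinit.le fun τ hτ hle => ?_
  obtain ⟨ε, hε, K, hK⟩ := hlip (util τ) (hutilmem τ (hTtil hτ))
  exact eventually_nhdsGE_le_of_hasDerivWithinAt hC (fun v hv w hw => hmono v w hv hw) hε hK
    (mem_of_superset (Ico_mem_nhdsGE hτ.2) (Ico_subset_Ico_left hτ.1)) hu' hutil'
    (fun t ht => humem t (hT ht)) (fun t ht => hutilmem t (hTtil ht)) hle

/-- comparison theorem for ODEs on the Banach space of bounded continuous
functions on `[0,∞)`.  `𝒞` is the set of bounded continuous functions with values `> a`. -/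
theorem banach_comparison (a : ℝ) (ha : 0 < a)
    (F Ftil : BoundedContinuousFunction {r : ℝ // 0 ≤ r} ℝ →
      BoundedContinuousFunction {r : ℝ // 0 ≤ r} ℝ)
    (hmono : ∀ v vtil : BoundedContinuousFunction {r : ℝ // 0 ≤ r} ℝ,
      (∀ x, a < v x) → (∀ x, a < vtil x) → (∀ x, v x ≤ vtil x) →
      ∀ x, F v x ≤ Ftil vtil x)
    (hlip : ∀ v : BoundedContinuousFunction {r : ℝ // 0 ≤ r} ℝ, (∀ x, a < v x) →
      ∃ ε > (0:ℝ), ∃ K : NNReal, LipschitzOnWith K Ftil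
        (Metric.ball v ε ∩ {w : BoundedContinuousFunction {r : ℝ // 0 ≤ r} ℝ | ∀ x, a < w x}))
    (T Ttil : ℝ)
    (util u : ℝ → BoundedContinuousFunction {r : ℝ // 0 ≤ r} ℝ)
    (hutilmem : ∀ t ∈ Ico (0:ℝ) Ttil, ∀ x, a < util t x)
    (hutil : ∀ t ∈ Ico (0:ℝ) Ttil, HasDerivWithinAt util (Ftil (util t)) (Ico 0 Ttil) t)
    (humem : ∀ t ∈ Ico (0:ℝ) T, ∀ x, a < u t x)
    (hu : ∀ t ∈ Ico (0:ℝ) T, HasDerivWithinAt u (F (u t)) (Ico 0 T) t)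
    (hinit : u 0 = util 0) :
    ∀ t ∈ Ico (0:ℝ) (min T Ttil), ∀ x, u t x ≤ util t x :=
  banach_comparison_general a F Ftil hmono hlip T Ttil util u hutilmem hutil humem hu hinit
end

section
/- Let n ≥ 1 be an integer and let ω : [0,∞) → ℝ be continuous with ∫_0^∞ s^n |ω(s)| ds < ∞. Define u(r) = (r^{1−n}/n) ∫_0^r s^n ω(s) ds + (r/n) ∫_r^∞ ω(s) ds for r > 0. Then u is twice continuously differentiable on (0,∞), lim_{r→0⁺} u(r) = 0, lim_{r→∞} u(r)/r = 0, and for every r > 0 one has −(u''(r) + ((n−1)/r) u'(r) − ((n−1)/r²) u(r)) = ω(r). Moreover u is the unique such solution: if v is twice continuously differentiable on (0,∞), satisfies −(v''(r) + ((n−1)/r) v'(r) − ((n−1)/r²) v(r)) = ω(r) for all r > 0, lim_{r→0⁺} v(r) = 0 and lim_{r→∞} v(r)/r = 0, then v = u. -/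
open MeasureTheory Set

namespace GreensAux

open Filter

noncomputable def Aint (n : ℕ) (ω : ℝ → ℝ) (r : ℝ) : ℝ := ∫ s in Ioc (0:ℝ) r, s ^ n * ω s
noncomputable def Bint (ω : ℝ → ℝ) (r : ℝ) : ℝ := ∫ s in Ioi r, ω s
noncomputable def Ufun (n : ℕ) (ω : ℝ → ℝ) (r : ℝ) : ℝ :=
  (r ^ ((1:ℤ) - (n:ℤ)) / n) * Aint n ω r + (r / n) * Bint ω r
noncomputable def U1 (n : ℕ) (ω : ℝ → ℝ) (r : ℝ) : ℝ :=
  ((1 - (n:ℝ)) / n) * r ^ (-(n:ℤ)) * Aint n ω r + Bint ω r / n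
noncomputable def U2 (n : ℕ) (ω : ℝ → ℝ) (r : ℝ) : ℝ :=
  ((n:ℝ) - 1) * r ^ (-(n:ℤ) - 1) * Aint n ω r - ω r

variable {n : ℕ} {ω : ℝ → ℝ}

lemma omega_meas (hωc : ContinuousOn ω (Ici 0)) :
    AEStronglyMeasurable ω (volume.restrict (Ioi (0:ℝ))) :=
  (hωc.mono Ioi_subset_Ici_self).aestronglyMeasurable measurableSet_Ioi

lemma omega_int (hn : 1 ≤ n) (hωc : ContinuousOn ω (Ici 0))
    (hωint : IntegrableOn (fun s => s ^ n * |ω s|) (Ioi 0)) :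
    IntegrableOn ω (Ioi (0:ℝ)) := by
  have h1 : IntegrableOn ω (Ioc (0:ℝ) 1) := by
    have : IntegrableOn ω (Icc (0:ℝ) 1) volume :=
      (hωc.mono (Icc_subset_Ici_self : Icc (0:ℝ) 1 ⊆ Ici 0)).integrableOn_Icc
    exact this.mono_set Ioc_subset_Icc_self
  have h2 : IntegrableOn ω (Ioi (1:ℝ)) := by
    refine Integrable.mono' (hωint.mono_set (Ioi_subset_Ioi zero_le_one))
      ((omega_meas hωc).mono_measure (Measure.restrict_mono (Ioi_subset_Ioi zero_le_one) le_rfl)) ?_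
    refine (ae_restrict_iff' measurableSet_Ioi).2 (ae_of_all _ fun s hs => ?_)
    have hs1 : (1:ℝ) ≤ s := le_of_lt hs
    have : (1:ℝ) ≤ s ^ n := one_le_pow₀ hs1
    calc ‖ω s‖ = |ω s| := rfl
      _ ≤ s ^ n * |ω s| := le_mul_of_one_le_left (abs_nonneg _) this
  have : IntegrableOn ω (Ioc (0:ℝ) 1 ∪ Ioi 1) := h1.union h2
  rwa [Ioc_union_Ioi_eq_Ioi zero_le_one] at this

lemma pow_omega_int (hωc : ContinuousOn ω (Ici 0))
    (hωint : IntegrableOn (fun s => s ^ n * |ω s|) (Ioi 0)) :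
    IntegrableOn (fun s => s ^ n * ω s) (Ioi (0:ℝ)) := by
  refine Integrable.mono' hωint
    (((continuous_pow n).aestronglyMeasurable.mono_measure le_rfl).mul (omega_meas hωc)) ?_
  refine (ae_restrict_iff' measurableSet_Ioi).2 (ae_of_all _ fun s hs => ?_)
  have : ‖s ^ n * ω s‖ = |s ^ n| * |ω s| := abs_mul _ _
  rw [this, abs_pow, abs_of_pos hs]


lemma omega_contAt (hωc : ContinuousOn ω (Ici 0)) {r : ℝ} (hr : 0 < r) :
    ContinuousAt ω r :=
  hωc.continuousAt (Ici_mem_nhds hr)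

lemma hasDerivAt_Aint (hωc : ContinuousOn ω (Ici 0))
    (hωint : IntegrableOn (fun s => s ^ n * |ω s|) (Ioi 0)) {r : ℝ} (hr : 0 < r) :
    HasDerivAt (Aint n ω) (r ^ n * ω r) r := by
  set f : ℝ → ℝ := fun s => s ^ n * ω s with hf
  have hint : IntervalIntegrable f volume 0 r := by
    rw [intervalIntegrable_iff, uIoc_of_le hr.le]
    exact (pow_omega_int hωc hωint).mono_set Ioc_subset_Ioi_self
  have hmeas : StronglyMeasurableAtFilter f (nhds r) volume :=
    ⟨Ioi 0, Ioi_mem_nhds hr,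
      ((continuous_pow n).aestronglyMeasurable.mono_measure le_rfl).mul (omega_meas hωc)⟩
  have hcont : ContinuousAt f r := ((continuous_pow n).continuousAt).mul (omega_contAt hωc hr)
  have H := intervalIntegral.integral_hasDerivAt_right hint hmeas hcont
  refine H.congr_of_eventuallyEq ?_
  filter_upwards [Ioi_mem_nhds hr] with x hx
  rw [Aint, intervalIntegral.integral_of_le (le_of_lt hx)]

lemma Bint_eq (hn : 1 ≤ n) (hωc : ContinuousOn ω (Ici 0))
    (hωint : IntegrableOn (fun s => s ^ n * |ω s|) (Ioi 0)) {r : ℝ} (hr : 0 < r) :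
    Bint ω r = Bint ω 1 - ∫ s in (1:ℝ)..r, ω s := by
  have hInt := omega_int hn hωc hωint
  rcases le_or_gt 1 r with h | h
  · have hsplit := setIntegral_union (f := ω) (μ := volume) (Ioc_disjoint_Ioi_same) measurableSet_Ioi
      (hInt.mono_set ((Ioc_subset_Ioi_self).trans (Ioi_subset_Ioi zero_lt_one.le)))
      (hInt.mono_set (Ioi_subset_Ioi (lt_of_lt_of_le zero_lt_one h).le))
    rw [Ioc_union_Ioi_eq_Ioi h] at hsplit
    rw [intervalIntegral.integral_of_le h, Bint, Bint]
    linarith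
  · have hsplit := setIntegral_union (f := ω) (μ := volume) (Ioc_disjoint_Ioi_same) measurableSet_Ioi
      (hInt.mono_set ((Ioc_subset_Ioi_self).trans (Ioi_subset_Ioi hr.le)))
      (hInt.mono_set (Ioi_subset_Ioi zero_lt_one.le))
    rw [Ioc_union_Ioi_eq_Ioi h.le] at hsplit
    rw [intervalIntegral.integral_symm, intervalIntegral.integral_of_le h.le, Bint, Bint]
    linarith

lemma hasDerivAt_Bint (hn : 1 ≤ n) (hωc : ContinuousOn ω (Ici 0))
    (hωint : IntegrableOn (fun s => s ^ n * |ω s|) (Ioi 0)) {r : ℝ} (hr : 0 < r) :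
    HasDerivAt (Bint ω) (-(ω r)) r := by
  have hInt := omega_int hn hωc hωint
  have hint : IntervalIntegrable ω volume 1 r := by
    rw [intervalIntegrable_iff]
    refine hInt.mono_set ?_
    rw [uIoc_eq_union]
    rintro x (hx | hx)
    · exact lt_trans zero_lt_one hx.1
    · exact lt_trans hr hx.1
  have hmeas : StronglyMeasurableAtFilter ω (nhds r) volume :=
    ⟨Ioi 0, Ioi_mem_nhds hr, omega_meas hωc⟩
  have H := (intervalIntegral.integral_hasDerivAt_right hint hmeas (omega_contAt hωc hr)).const_sub
    (Bint ω 1)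
  refine H.congr_of_eventuallyEq ?_
  filter_upwards [Ioi_mem_nhds hr] with x hx
  exact Bint_eq hn hωc hωint hx


-- zpow rewriting helpers
lemma zpow_one_sub {r : ℝ} (hr : 0 < r) : r ^ ((1:ℤ) - (n:ℤ)) = r / r ^ n := by
  rw [zpow_sub₀ hr.ne', zpow_one, zpow_natCast]

lemma zpow_negn {r : ℝ} (hr : 0 < r) : r ^ (-(n:ℤ)) = 1 / r ^ n := by
  rw [zpow_neg, zpow_natCast, one_div]

lemma zpow_negn1 {r : ℝ} (hr : 0 < r) : r ^ (-(n:ℤ) - 1) = 1 / (r ^ n * r) := by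
  rw [zpow_sub₀ hr.ne', zpow_neg, zpow_natCast, zpow_one, inv_eq_one_div, div_div]

lemma hasDerivAt_Ufun (hn : 1 ≤ n) (hωc : ContinuousOn ω (Ici 0))
    (hωint : IntegrableOn (fun s => s ^ n * |ω s|) (Ioi 0)) {r : ℝ} (hr : 0 < r) :
    HasDerivAt (Ufun n ω) (U1 n ω r) r := by
  have hA := hasDerivAt_Aint hωc hωint hr
  have hB := hasDerivAt_Bint hn hωc hωint hr
  have hz := (hasDerivAt_zpow ((1:ℤ) - (n:ℤ)) r (Or.inl hr.ne')).div_const (n:ℝ)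
  have hid : HasDerivAt (fun x : ℝ => x / n) (1 / n) r := (hasDerivAt_id r).div_const _
  have H := (hz.mul hA).add (hid.mul hB)
  have hne : (r:ℝ) ≠ 0 := hr.ne'
  have hpne : (r:ℝ) ^ n ≠ 0 := pow_ne_zero _ hne
  have hnne : (n:ℝ) ≠ 0 := Nat.cast_ne_zero.2 (by omega)
  refine H.congr_deriv ?_
  rw [U1, zpow_negn hr, zpow_one_sub hr,
    show (1:ℤ) - (n:ℤ) - 1 = -(n:ℤ) from by ring, zpow_negn hr]
  push_cast
  field_simp
  ring

lemma hasDerivAt_U1 (hn : 1 ≤ n) (hωc : ContinuousOn ω (Ici 0))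
    (hωint : IntegrableOn (fun s => s ^ n * |ω s|) (Ioi 0)) {r : ℝ} (hr : 0 < r) :
    HasDerivAt (U1 n ω) (U2 n ω r) r := by
  have hA := hasDerivAt_Aint hωc hωint hr
  have hB := hasDerivAt_Bint hn hωc hωint hr
  have hz := (hasDerivAt_zpow (-(n:ℤ)) r (Or.inl hr.ne')).const_mul ((1 - (n:ℝ)) / n)
  have H := (hz.mul hA).add (hB.div_const n)
  have hne : (r:ℝ) ≠ 0 := hr.ne'
  have hpne : (r:ℝ) ^ n ≠ 0 := pow_ne_zero _ hne
  have hnne : (n:ℝ) ≠ 0 := Nat.cast_ne_zero.2 (by omega)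
  refine H.congr_deriv ?_
  rw [U2, zpow_negn1 hr, zpow_negn hr]
  push_cast
  field_simp
  ring


section main
variable (hn : 1 ≤ n) (hωc : ContinuousOn ω (Ici 0))
  (hωint : IntegrableOn (fun s => s ^ n * |ω s|) (Ioi 0))
  {u : ℝ → ℝ}
  (hu : ∀ r : ℝ, 0 < r → u r = Ufun n ω r)
include hn hωc hωint hu

lemma hasDerivAt_u {r : ℝ} (hr : 0 < r) : HasDerivAt u (U1 n ω r) r := by
  refine (hasDerivAt_Ufun hn hωc hωint hr).congr_of_eventuallyEq ?_
  filter_upwards [Ioi_mem_nhds hr] with x hx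
  exact hu x hx

lemma deriv_u_eq {r : ℝ} (hr : 0 < r) : deriv u r = U1 n ω r :=
  (hasDerivAt_u hn hωc hωint hu hr).deriv

lemma deriv2_u_eq {r : ℝ} (hr : 0 < r) : deriv (deriv u) r = U2 n ω r := by
  have hev : deriv u =ᶠ[nhds r] U1 n ω := by
    filter_upwards [Ioi_mem_nhds hr] with x hx
    exact deriv_u_eq hn hωc hωint hu hx
  rw [hev.deriv_eq]
  exact (hasDerivAt_U1 hn hωc hωint hr).deriv

lemma ode_u {r : ℝ} (hr : 0 < r) :
    -(deriv (deriv u) r + ((n:ℝ) - 1) / r * deriv u r - ((n:ℝ) - 1) / r ^ 2 * u r) = ω r := by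
  rw [deriv2_u_eq hn hωc hωint hu hr, deriv_u_eq hn hωc hωint hu hr, hu r hr,
    Ufun, U1, U2, zpow_one_sub hr, zpow_negn hr, zpow_negn1 hr]
  have hne : (r:ℝ) ≠ 0 := hr.ne'
  have hpne : (r:ℝ) ^ n ≠ 0 := pow_ne_zero _ hne
  have hnne : (n:ℝ) ≠ 0 := Nat.cast_ne_zero.2 (by omega)
  field_simp
  ring

lemma contDiff_u : ContDiffOn ℝ 2 u (Ioi 0) := by
  have hdu : ∀ x ∈ Ioi (0:ℝ), deriv u x = U1 n ω x := fun x hx =>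
    deriv_u_eq hn hωc hωint hu hx
  have hdU1 : ∀ x ∈ Ioi (0:ℝ), deriv (U1 n ω) x = U2 n ω x := fun x hx =>
    (hasDerivAt_U1 hn hωc hωint hx).deriv
  have hU2c : ContinuousOn (U2 n ω) (Ioi 0) := by
    have hAc : ContinuousOn (Aint n ω) (Ioi 0) := fun x hx =>
      (hasDerivAt_Aint hωc hωint hx).continuousAt.continuousWithinAt
    have hzc : ContinuousOn (fun x : ℝ => x ^ (-(n:ℤ) - 1)) (Ioi 0) := fun x hx =>
      ((continuousAt_zpow₀ x _ (Or.inl (ne_of_gt hx))).continuousWithinAt)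
    exact ((continuousOn_const.mul hzc).mul hAc).sub (hωc.mono Ioi_subset_Ici_self)
  have h2 : (2 : WithTop ℕ∞) = 1 + 1 := by norm_num
  rw [h2, contDiffOn_succ_iff_deriv_of_isOpen isOpen_Ioi]
  refine ⟨fun x hx => (hasDerivAt_u hn hωc hωint hu hx).differentiableAt.differentiableWithinAt,
    by simp, ?_⟩
  refine ContDiffOn.congr ?_ hdu
  have h1 : (1 : WithTop ℕ∞) = 0 + 1 := by norm_num
  rw [h1, contDiffOn_succ_iff_deriv_of_isOpen isOpen_Ioi]
  refine ⟨fun x hx => (hasDerivAt_U1 hn hωc hωint hx).differentiableAt.differentiableWithinAt,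
    by simp, ?_⟩
  rw [contDiffOn_zero]
  exact ContinuousOn.congr hU2c hdU1

end main

section lims
variable (hn : 1 ≤ n) (hωc : ContinuousOn ω (Ici 0))
  (hωint : IntegrableOn (fun s => s ^ n * |ω s|) (Ioi 0))
include hn hωc hωint

-- |B r| ≤ ∫_{Ioi 0} |ω| for r > 0
lemma Bint_bound {r : ℝ} (hr : 0 < r) :
    |Bint ω r| ≤ ∫ s in Ioi (0:ℝ), |ω s| := by
  have hInt := omega_int hn hωc hωint
  calc |Bint ω r| ≤ ∫ s in Ioi r, |ω s| := by
        simpa [Bint] using norm_integral_le_integral_norm (μ := volume.restrict (Ioi r)) ω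
    _ ≤ ∫ s in Ioi (0:ℝ), |ω s| := by
        refine setIntegral_mono_set hInt.norm ?_ ?_
        · exact ae_of_all _ fun s => abs_nonneg _
        · exact HasSubset.Subset.eventuallyLE (Ioi_subset_Ioi hr.le)

lemma Aint_bound_global {r : ℝ} :
    |Aint n ω r| ≤ ∫ s in Ioi (0:ℝ), s ^ n * |ω s| := by
  calc |Aint n ω r| ≤ ∫ s in Ioc (0:ℝ) r, ‖s ^ n * ω s‖ := by
        simpa [Aint] using norm_integral_le_integral_norm (μ := volume.restrict (Ioc 0 r)) fun s => s ^ n * ω s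
    _ ≤ ∫ s in Ioi (0:ℝ), s ^ n * |ω s| := by
        have heq : ∀ s ∈ Ioc (0:ℝ) r, ‖s ^ n * ω s‖ = s ^ n * |ω s| := by
          intro s hs
          rw [norm_mul, norm_pow, Real.norm_eq_abs, Real.norm_eq_abs, abs_of_pos hs.1]
        rw [setIntegral_congr_fun measurableSet_Ioc heq]
        refine setIntegral_mono_set hωint ?_ ?_
        · exact (ae_restrict_iff' measurableSet_Ioi).2 (ae_of_all _ fun s hs => mul_nonneg (pow_nonneg (le_of_lt hs) n) (abs_nonneg _))
        · exact HasSubset.Subset.eventuallyLE Ioc_subset_Ioi_self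

lemma tendsto_u_zero : Tendsto (Ufun n ω) (nhdsWithin 0 (Ioi 0)) (nhds 0) := by
  obtain ⟨M, hM⟩ := (isCompact_Icc (a := (0:ℝ)) (b := 1)).exists_bound_of_continuousOn
    (hωc.mono Icc_subset_Ici_self)
  have hM0 : 0 ≤ M := le_trans (norm_nonneg _) (hM 0 ⟨le_rfl, zero_le_one⟩)
  set Cω := ∫ s in Ioi (0:ℝ), |ω s| with hCω
  have hCω0 : 0 ≤ Cω := setIntegral_nonneg measurableSet_Ioi fun s _ => abs_nonneg _
  have hnn : (1:ℝ) ≤ n := by exact_mod_cast hn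
  have key : ∀ r ∈ Ioc (0:ℝ) 1, ‖Ufun n ω r‖ ≤ (M + Cω) / n * r := by
    intro r hr
    have hr0 : 0 < r := hr.1
    have hr1 : r ≤ 1 := hr.2
    have hpow : (0:ℝ) < r ^ n := pow_pos hr0 n
    have hAb : |Aint n ω r| ≤ M * r ^ n * r := by
      have hb := norm_setIntegral_le_of_norm_le_const (μ := volume) (s := Ioc (0:ℝ) r)
        (f := fun s => s ^ n * ω s) (C := M * r ^ n)
        (by rw [Real.volume_Ioc]; exact ENNReal.ofReal_lt_top) ?_
      · rw [measureReal_def, Real.volume_Ioc, sub_zero, ENNReal.toReal_ofReal hr0.le] at hb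
        exact hb
      · intro s hs
        have hs0 : 0 < s := hs.1
        have hsr : s ≤ r := hs.2
        rw [norm_mul, norm_pow, Real.norm_eq_abs, Real.norm_eq_abs, abs_of_pos hs0]
        have h1 : s ^ n ≤ r ^ n := pow_le_pow_left₀ hs0.le hsr n
        have h2 : |ω s| ≤ M := hM s ⟨hs0.le, le_trans hsr hr1⟩
        calc s ^ n * |ω s| ≤ r ^ n * M := by
              exact mul_le_mul h1 h2 (abs_nonneg _) hpow.le
          _ = M * r ^ n := mul_comm _ _
    have hBb : |Bint ω r| ≤ Cω := Bint_bound hn hωc hωint hr0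
    have e1 : ‖Ufun n ω r‖ ≤ |r ^ ((1:ℤ) - (n:ℤ)) / n| * |Aint n ω r| + |r / n| * |Bint ω r| := by
      rw [Ufun]
      calc ‖_ + _‖ ≤ ‖_‖ + ‖_‖ := norm_add_le _ _
        _ = _ := by rw [Real.norm_eq_abs, Real.norm_eq_abs, abs_mul, abs_mul]
    have hz : |r ^ ((1:ℤ) - (n:ℤ)) / n| = r / r ^ n / n := by
      rw [abs_div, zpow_one_sub hr0, abs_div, abs_of_pos hr0, abs_of_pos hpow,
        Nat.abs_cast]
    have hrn : |r / (n:ℝ)| = r / n := by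
      rw [abs_div, abs_of_pos hr0, Nat.abs_cast]
    have hn0 : (0:ℝ) < n := by exact_mod_cast Nat.pos_of_ne_zero (by omega)
    have t1 : r / r ^ n / n * |Aint n ω r| ≤ M / n * r := by
      calc r / r ^ n / n * |Aint n ω r| ≤ r / r ^ n / n * (M * r ^ n * r) := by
            apply mul_le_mul_of_nonneg_left hAb; positivity
        _ = M / n * (r * r) := by field_simp
        _ ≤ M / n * (1 * r) := by
            apply mul_le_mul_of_nonneg_left _ (by positivity)
            exact mul_le_mul_of_nonneg_right hr1 hr0.le
        _ = M / n * r := by ring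
    have t2 : r / n * |Bint ω r| ≤ Cω / n * r := by
      calc r / n * |Bint ω r| ≤ r / n * Cω := by
            apply mul_le_mul_of_nonneg_left hBb; positivity
        _ = Cω / n * r := by ring
    calc ‖Ufun n ω r‖ ≤ r / r ^ n / n * |Aint n ω r| + r / n * |Bint ω r| := by
          rw [hz, hrn] at e1; exact e1
      _ ≤ M / n * r + Cω / n * r := add_le_add t1 t2
      _ = (M + Cω) / n * r := by ring
  refine squeeze_zero_norm' (a := fun r : ℝ => (M + Cω) / n * r) ?_ ?_
  · filter_upwards [Ioc_mem_nhdsGT_of_mem (⟨le_rfl, zero_lt_one⟩ :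
      (0:ℝ) ∈ Ico (0:ℝ) 1)] with r hr
    exact key r hr
  · have : Tendsto (fun r : ℝ => (M + Cω) / n * r) (nhds 0) (nhds ((M + Cω) / n * 0)) :=
      (continuous_const.mul continuous_id).tendsto 0
    rw [mul_zero] at this
    exact this.mono_left nhdsWithin_le_nhds

lemma tendsto_Bint_zero : Tendsto (Bint ω) atTop (nhds 0) := by
  have hInt1 : IntegrableOn ω (Ioi (1:ℝ)) :=
    (omega_int hn hωc hωint).mono_set (Ioi_subset_Ioi zero_le_one)
  have h1 := intervalIntegral_tendsto_integral_Ioi (μ := volume) 1 hInt1 (tendsto_id (x := atTop))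
  have h2 : Tendsto (fun r : ℝ => Bint ω 1 - ∫ s in (1:ℝ)..r, ω s) atTop
      (nhds (Bint ω 1 - ∫ s in Ioi (1:ℝ), ω s)) := tendsto_const_nhds.sub h1
  have h3 : Bint ω 1 - ∫ s in Ioi (1:ℝ), ω s = 0 := by rw [Bint]; ring
  rw [h3] at h2
  refine h2.congr' ?_
  filter_upwards [eventually_gt_atTop (0:ℝ)] with r hr
  exact (Bint_eq hn hωc hωint hr).symm

lemma tendsto_u_div_atTop : Tendsto (fun r => Ufun n ω r / r) atTop (nhds 0) := by
  set CA := ∫ s in Ioi (0:ℝ), s ^ n * |ω s| with hCA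
  have hCA0 : 0 ≤ CA := setIntegral_nonneg measurableSet_Ioi fun s hs => by
    have : (0:ℝ) < s := hs
    positivity
  have hn0 : (0:ℝ) < n := by exact_mod_cast Nat.pos_of_ne_zero (by omega)
  have T1 : Tendsto (fun r : ℝ => Aint n ω r / r ^ n / n) atTop (nhds 0) := by
    refine squeeze_zero_norm' (a := fun r : ℝ => CA / n / r ^ n) ?_ ?_
    · filter_upwards [eventually_ge_atTop (1:ℝ)] with r hr
      have hr0 : (0:ℝ) < r := lt_of_lt_of_le zero_lt_one hr
      have hpow : (0:ℝ) < r ^ n := pow_pos hr0 n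
      have : ‖Aint n ω r / r ^ n / n‖ = |Aint n ω r| / r ^ n / n := by
        rw [Real.norm_eq_abs, abs_div, abs_div, abs_of_pos hpow, Nat.abs_cast]
      rw [this]
      have := Aint_bound_global hn hωc hωint (r := r)
      calc |Aint n ω r| / r ^ n / n ≤ CA / r ^ n / n := by gcongr
        _ = CA / n / r ^ n := by ring
    · have h1 : Tendsto (fun r : ℝ => r ^ n) atTop atTop :=
        tendsto_pow_atTop (by omega)
      have h2 : Tendsto (fun r : ℝ => CA / n / r ^ n) atTop (nhds 0) := by
        simpa [div_eq_mul_inv] using h1.inv_tendsto_atTop.const_mul (CA / n)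
      exact h2
  have T2 : Tendsto (fun r : ℝ => Bint ω r / n) atTop (nhds 0) := by
    simpa using (tendsto_Bint_zero hn hωc hωint).div_const (n:ℝ)
  have := T1.add T2
  rw [add_zero] at this
  refine this.congr' ?_
  filter_upwards [eventually_gt_atTop (0:ℝ)] with r hr
  have hpow : (r:ℝ) ^ n ≠ 0 := (pow_pos hr n).ne'
  rw [Ufun, zpow_one_sub hr]
  field_simp

end lims

section uniq
variable (hn : 1 ≤ n) (hωc : ContinuousOn ω (Ici 0))
  (hωint : IntegrableOn (fun s => s ^ n * |ω s|) (Ioi 0))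
  {u : ℝ → ℝ}
  (hu : ∀ r : ℝ, 0 < r → u r = Ufun n ω r)

set_option maxHeartbeats 2000000 in
include hn hωc hωint hu in
lemma uniqueness (v : ℝ → ℝ) (hv : ContDiffOn ℝ 2 v (Ioi 0))
    (hveq : ∀ r : ℝ, 0 < r →
      -(deriv (deriv v) r + ((n:ℝ) - 1) / r * deriv v r - ((n:ℝ) - 1) / r ^ 2 * v r) = ω r)
    (hv0 : Tendsto v (nhdsWithin 0 (Ioi 0)) (nhds 0))
    (hvinf : Tendsto (fun r => v r / r) atTop (nhds 0)) :
    ∀ r : ℝ, 0 < r → v r = u r := by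
  have hnne : (n:ℝ) ≠ 0 := Nat.cast_ne_zero.2 (by omega)
  -- limits of u
  have hu0 : Tendsto u (nhdsWithin 0 (Ioi 0)) (nhds 0) := by
    refine (tendsto_u_zero hn hωc hωint).congr' ?_
    filter_upwards [self_mem_nhdsWithin] with x hx
    exact (hu x hx).symm
  have huinf : Tendsto (fun r => u r / r) atTop (nhds 0) := by
    refine (tendsto_u_div_atTop hn hωc hωint).congr' ?_
    filter_upwards [eventually_gt_atTop (0:ℝ)] with x hx
    rw [hu x hx]
  set w : ℝ → ℝ := fun x => v x - u x with hw
  -- differentiability of v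
  have h2 : (2 : WithTop ℕ∞) = 1 + 1 := by norm_num
  rw [h2, contDiffOn_succ_iff_deriv_of_isOpen isOpen_Ioi] at hv
  have hv1 : DifferentiableOn ℝ v (Ioi 0) := hv.1
  have hv2 : DifferentiableOn ℝ (deriv v) (Ioi 0) :=
    hv.2.2.differentiableOn one_ne_zero
  -- derivative facts for w
  have hwat : ∀ x : ℝ, 0 < x → HasDerivAt w (deriv v x - U1 n ω x) x := by
    intro x hx
    exact ((hv1.differentiableAt (Ioi_mem_nhds hx)).hasDerivAt).sub
      (hasDerivAt_u hn hωc hωint hu hx)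
  have hwderiv : ∀ x : ℝ, 0 < x → deriv w x = deriv v x - U1 n ω x := fun x hx =>
    (hwat x hx).deriv
  have hwat2 : ∀ x : ℝ, 0 < x →
      HasDerivAt (deriv w) (deriv (deriv v) x - U2 n ω x) x := by
    intro x hx
    have hDV : HasDerivAt (deriv v) (deriv (deriv v) x) x :=
      (hv2.differentiableAt (Ioi_mem_nhds hx)).hasDerivAt
    have H := hDV.sub (hasDerivAt_U1 hn hωc hωint hx)
    refine H.congr_of_eventuallyEq ?_
    filter_upwards [Ioi_mem_nhds hx] with y hy
    exact hwderiv y hy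
  -- the homogeneous ODE for w
  have hODE : ∀ x : ℝ, 0 < x →
      (deriv (deriv v) x - U2 n ω x) + ((n:ℝ) - 1) / x * (deriv v x - U1 n ω x)
        - ((n:ℝ) - 1) / x ^ 2 * w x = 0 := by
    intro x hx
    have h1 := hveq x hx
    have h2 := ode_u hn hωc hωint hu hx
    rw [deriv_u_eq hn hωc hωint hu hx, deriv2_u_eq hn hωc hωint hu hx] at h2
    have hux : u x = Ufun n ω x := hu x hx
    simp only [hw]
    linear_combination h2 - h1
  -- g := w' + (n-1) w / x  has zero derivative
  set g : ℝ → ℝ := fun x => deriv w x + ((n:ℝ) - 1) * w x / x with hg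
  have hgat : ∀ x : ℝ, 0 < x → HasDerivAt g 0 x := by
    intro x hx
    have hq : HasDerivAt (fun y => ((n:ℝ) - 1) * w y / y)
        ((((n:ℝ) - 1) * (deriv v x - U1 n ω x) * x - ((n:ℝ) - 1) * w x * 1) / x ^ 2) x :=
      (((hwat x hx).const_mul _).div (hasDerivAt_id x) hx.ne')
    have H : HasDerivAt (fun y => deriv w y + ((n:ℝ) - 1) * w y / y)
        ((deriv (deriv v) x - U2 n ω x) +
          ((((n:ℝ) - 1) * (deriv v x - U1 n ω x) * x - ((n:ℝ) - 1) * w x * 1) / x ^ 2)) x :=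
      (hwat2 x hx).add hq
    have hval : (deriv (deriv v) x - U2 n ω x) +
          ((((n:ℝ) - 1) * (deriv v x - U1 n ω x) * x - ((n:ℝ) - 1) * w x * 1) / x ^ 2) = 0 := by
      have h := hODE x hx
      have hDw2 : deriv (deriv v) x - U2 n ω x =
          ((n:ℝ) - 1) / x ^ 2 * w x - ((n:ℝ) - 1) / x * (deriv v x - U1 n ω x) := by
        linarith
      rw [hDw2]
      field_simp
      ring
    rw [hval] at H
    exact H
  -- g is constant
  have hgdiff : DifferentiableOn ℝ g (Ioi 0) := fun x hx =>
    (hgat x hx).differentiableAt.differentiableWithinAt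
  have hgzero : ∀ x ∈ Ioi (0:ℝ), fderivWithin ℝ g (Ioi 0) x = 0 := by
    intro x hx
    rw [fderivWithin_of_isOpen isOpen_Ioi hx, ((hgat x hx).hasFDerivAt).fderiv]
    ext t
    simp
  have hgc : ∀ x ∈ Ioi (0:ℝ), g x = g 1 := fun x hx =>
    (convex_Ioi 0).is_const_of_fderivWithin_eq_zero hgdiff hgzero hx (mem_Ioi.2 zero_lt_one)
  set c : ℝ := g 1 with hc
  clear_value c
  -- h := x^(n-1) w - c x^n / n has zero derivative
  set hfun : ℝ → ℝ := fun y => y ^ ((n:ℤ) - 1) * w y - c * y ^ n / n with hhfun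
  have hhat : ∀ x : ℝ, 0 < x → HasDerivAt hfun 0 x := by
    intro x hx
    have hp1 := (hasDerivAt_zpow ((n:ℤ) - 1) x (Or.inl hx.ne')).mul (hwat x hx)
    have hp2 := ((hasDerivAt_pow n x).const_mul c).div_const (n:ℝ)
    have H := hp1.sub hp2
    have hdw : deriv w x = deriv v x - U1 n ω x := hwderiv x hx
    have hgx : deriv w x + ((n:ℝ) - 1) * w x / x = c := hgc x hx
    rw [hdw] at hgx
    have hdwx : deriv v x - U1 n ω x = c - ((n:ℝ) - 1) * w x / x := by linarith
    have hval : (((n:ℤ) - 1 : ℤ) : ℝ) * x ^ ((n:ℤ) - 1 - 1) * w x +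
        x ^ ((n:ℤ) - 1) * (deriv v x - U1 n ω x) - c * ((n:ℕ) * x ^ (n - 1)) / n = 0 := by
      have hz1 : x ^ ((n:ℤ) - 1) = x ^ n / x := by
        rw [zpow_sub₀ hx.ne', zpow_one, zpow_natCast]
      have hz2 : x ^ ((n:ℤ) - 1 - 1) = x ^ n / x / x := by
        rw [zpow_sub₀ hx.ne', zpow_sub₀ hx.ne', zpow_one, zpow_natCast]
      have hz3 : (x:ℝ) ^ (n - 1 : ℕ) = x ^ n / x := by
        rw [eq_div_iff hx.ne', ← pow_succ, Nat.sub_add_cancel hn]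
      rw [hz1, hz2, hz3, hdwx]
      push_cast
      have hxne : x ≠ 0 := hx.ne'
      have hpne : x ^ n ≠ 0 := pow_ne_zero _ hxne
      field_simp
      ring
    rw [hval] at H
    exact H
  have hhdiff : DifferentiableOn ℝ hfun (Ioi 0) := fun x hx =>
    (hhat x hx).differentiableAt.differentiableWithinAt
  have hhzero : ∀ x ∈ Ioi (0:ℝ), fderivWithin ℝ hfun (Ioi 0) x = 0 := by
    intro x hx
    rw [fderivWithin_of_isOpen isOpen_Ioi hx, ((hhat x hx).hasFDerivAt).fderiv]
    ext t
    simp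
  have hhc : ∀ x ∈ Ioi (0:ℝ), hfun x = hfun 1 := fun x hx =>
    (convex_Ioi 0).is_const_of_fderivWithin_eq_zero hhdiff hhzero hx (mem_Ioi.2 zero_lt_one)
  set d : ℝ := hfun 1 with hd
  clear_value d
  -- explicit formula for w
  have hwform : ∀ x : ℝ, 0 < x → v x - u x = c * x / n + d * (x / x ^ n) := by
    intro x hx
    have hx1 := hhc x hx
    have hz1 : x ^ ((n:ℤ) - 1) = x ^ n / x := by
      rw [zpow_sub₀ hx.ne', zpow_one, zpow_natCast]
    rw [hhfun] at hx1
    simp only [hz1, hw] at hx1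
    have hxne : x ≠ 0 := hx.ne'
    have hpne : x ^ n ≠ 0 := pow_ne_zero _ hxne
    field_simp at hx1 ⊢
    linear_combination hx1
  -- limits give d = 0 then c = 0
  have hw0 : Tendsto (fun x => v x - u x) (nhdsWithin 0 (Ioi 0)) (nhds 0) := by
    have := hv0.sub hu0
    rwa [sub_zero] at this
  have hT : Tendsto (fun x => d * (x / x ^ n)) (nhdsWithin 0 (Ioi 0)) (nhds 0) := by
    have hlin : Tendsto (fun x : ℝ => c * x / n) (nhdsWithin 0 (Ioi 0)) (nhds 0) := by
      have : Tendsto (fun x : ℝ => c * x / n) (nhds 0) (nhds (c * 0 / n)) :=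
        ((continuous_const.mul continuous_id).div_const _).tendsto 0
      rw [mul_zero, zero_div] at this
      exact this.mono_left nhdsWithin_le_nhds
    have := hw0.sub hlin
    rw [sub_zero] at this
    refine this.congr' ?_
    filter_upwards [self_mem_nhdsWithin] with x hx
    rw [hwform x hx]
    ring
  have hd0 : d = 0 := by
    have hcont : Tendsto (fun x : ℝ => x ^ (n - 1 : ℕ)) (nhdsWithin 0 (Ioi 0))
        (nhds ((0:ℝ) ^ (n - 1 : ℕ))) :=
      ((continuous_pow (n - 1)).tendsto 0).mono_left nhdsWithin_le_nhds
    have hmul := hT.mul hcont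
    rw [zero_mul] at hmul
    have hconst : Tendsto (fun _ : ℝ => d) (nhdsWithin 0 (Ioi 0)) (nhds 0) := by
      refine hmul.congr' ?_
      filter_upwards [self_mem_nhdsWithin] with x hx
      have hxne : x ≠ 0 := ne_of_gt hx
      have hpne : x ^ n ≠ 0 := pow_ne_zero _ hxne
      have hxx : x * x ^ (n - 1 : ℕ) = x ^ n := by
        rw [← pow_succ', Nat.sub_add_cancel hn]
      field_simp
      linear_combination d * hxx
    exact tendsto_nhds_unique tendsto_const_nhds hconst
  have hc0 : c = 0 := by
    have hwinf : Tendsto (fun x => (v x - u x) / x) atTop (nhds 0) := by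
      have := hvinf.sub huinf
      rw [sub_zero] at this
      exact this.congr fun x => (sub_div _ _ _).symm
    have hconst : Tendsto (fun _ : ℝ => c / n) atTop (nhds 0) := by
      refine hwinf.congr' ?_
      filter_upwards [eventually_gt_atTop (0:ℝ)] with x hx
      rw [hwform x hx, hd0]
      field_simp
      ring
    have : c / n = 0 := tendsto_nhds_unique tendsto_const_nhds hconst
    field_simp at this
    simpa using this
  intro r hr
  have := hwform r hr
  rw [hc0, hd0] at this
  norm_num at this
  linarith
end uniq

end GreensAux

/-- Green-function inversion of the radial vector Laplacian `−Δ` on `ℝⁿ`,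
with uniqueness. -/
theorem greens_function_H1dot (n : ℕ) (hn : 1 ≤ n) (ω : ℝ → ℝ)
    (hωc : ContinuousOn ω (Ici 0))
    (hωint : IntegrableOn (fun s => s ^ n * |ω s|) (Ioi 0))
    (u : ℝ → ℝ)
    (hu : ∀ r : ℝ, 0 < r → u r =
      (r ^ ((1:ℤ) - (n:ℤ)) / n) * (∫ s in Ioc (0:ℝ) r, s ^ n * ω s) +
        (r / n) * ∫ s in Ioi r, ω s) :
    ContDiffOn ℝ 2 u (Ioi 0) ∧
    Filter.Tendsto u (nhdsWithin 0 (Ioi 0)) (nhds 0) ∧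
    Filter.Tendsto (fun r => u r / r) Filter.atTop (nhds 0) ∧
    (∀ r : ℝ, 0 < r →
      -(deriv (deriv u) r + ((n:ℝ) - 1) / r * deriv u r - ((n:ℝ) - 1) / r ^ 2 * u r) = ω r) ∧
    (∀ v : ℝ → ℝ, ContDiffOn ℝ 2 v (Ioi 0) →
      (∀ r : ℝ, 0 < r →
        -(deriv (deriv v) r + ((n:ℝ) - 1) / r * deriv v r - ((n:ℝ) - 1) / r ^ 2 * v r) = ω r) →
      Filter.Tendsto v (nhdsWithin 0 (Ioi 0)) (nhds 0) →
      Filter.Tendsto (fun r => v r / r) Filter.atTop (nhds 0) →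
      ∀ r : ℝ, 0 < r → v r = u r) := by
  have hu' : ∀ r : ℝ, 0 < r → u r = GreensAux.Ufun n ω r := by
    intro r hr
    rw [hu r hr]
    rfl
  refine ⟨GreensAux.contDiff_u hn hωc hωint hu', ?_, ?_,
    fun r hr => GreensAux.ode_u hn hωc hωint hu' hr,
    fun v hv hveq hv0 hvinf => GreensAux.uniqueness hn hωc hωint hu' v hv hveq hv0 hvinf⟩
  · refine (GreensAux.tendsto_u_zero hn hωc hωint).congr' ?_
    filter_upwards [self_mem_nhdsWithin] with x hx
    exact (hu' x hx).symm
  · refine (GreensAux.tendsto_u_div_atTop hn hωc hωint).congr' ?_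
    filter_upwards [Filter.eventually_gt_atTop (0:ℝ)] with x hx
    rw [hu' x hx]
end

section
/- Let n ≥ 3 be an integer and let ω : [0,∞) → ℝ be continuous with ∫_0^∞ (1+s²) |ω(s)| ds < ∞. Define φ(r,s) = s^{2−n}/(2n(n−2)) − r² s^{−n}/(2n(n+2)) and δ(r,s) = r·s·φ(r,s) for (r,s) ∈ D, and define u(r) = ∫_0^r δ(s,r) s^{n−1} ω(s) ds + ∫_r^∞ δ(r,s) s^{n−1} ω(s) ds for r > 0. Then u is four times continuously differentiable on (0,∞), lim_{r→0⁺} u(r) = 0, and L(Lu)(r) = ω(r) for every r > 0, where (Lv)(r) := v''(r) + ((n−1)/r) v'(r) − ((n−1)/r²) v(r). -/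
open MeasureTheory Set

/-- The radial form of the vector Laplacian on `ℝⁿ` acting on radial vector fields. -/
noncomputable def radialVecLaplacian (n : ℕ) (v : ℝ → ℝ) (r : ℝ) : ℝ :=
  deriv (deriv v) r + ((n:ℝ) - 1) / r * deriv v r - ((n:ℝ) - 1) / r ^ 2 * v r


noncomputable def Gf.F (ω : ℝ → ℝ) (k : ℕ) (r : ℝ) : ℝ := ∫ s in Ioc (0:ℝ) r, s ^ k * ω s
noncomputable def Gf.G (ω : ℝ → ℝ) (k : ℕ) (r : ℝ) : ℝ := ∫ s in Ioi r, s ^ k * ω s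

namespace Gf
variable {ω : ℝ → ℝ}

lemma contOn (hωc : ContinuousOn ω (Ici 0)) (k : ℕ) : ContinuousOn (fun s => s ^ k * ω s) (Ici 0) :=
  (continuous_pow k).continuousOn.mul hωc

lemma intOnIoc (hωc : ContinuousOn ω (Ici 0)) (k : ℕ) (r : ℝ) : IntegrableOn (fun s => s ^ k * ω s) (Ioc 0 r) := by
  rcases le_or_gt r 0 with h | h
  · rw [Ioc_eq_empty (by exact not_lt.2 h)]; simp [IntegrableOn]
  · exact (((contOn hωc k).mono Icc_subset_Ici_self).integrableOn_Icc).mono_set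
      Ioc_subset_Icc_self

lemma intOnIoi (hωc : ContinuousOn ω (Ici 0)) (hωint : IntegrableOn (fun s => (1 + s ^ 2) * |ω s|) (Ioi 0)) (k : ℕ) (hk : k ≤ 2) (r : ℝ) (hr : 0 ≤ r) :
    IntegrableOn (fun s => s ^ k * ω s) (Ioi r) := by
  have : IntegrableOn (fun s => s ^ k * ω s) (Ioi 0) := by
    refine Integrable.mono hωint (((contOn hωc k).mono ?_).aestronglyMeasurable measurableSet_Ioi) ?_
    · exact Ioi_subset_Ici_self.trans (by norm_num)
    · filter_upwards [ae_restrict_mem measurableSet_Ioi] with s hs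
      have hs0 : (0:ℝ) < s := hs
      rw [Real.norm_eq_abs, Real.norm_eq_abs, abs_mul, abs_mul, abs_abs, abs_of_nonneg (by positivity : (0:ℝ) ≤ 1 + s^2)]
      gcongr
      have h1 : |s| ^ k ≤ max 1 (|s|^2) := by
        rcases le_or_gt (|s|) 1 with h | h
        · exact le_max_of_le_left (pow_le_one₀ (abs_nonneg s) h)
        · exact le_max_of_le_right (pow_le_pow_right₀ h.le hk)
      calc |s ^ k| = |s| ^ k := abs_pow s k
        _ ≤ max 1 (|s|^2) := h1
        _ ≤ 1 + s ^ 2 := by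
            rw [sq_abs]; rcases max_cases 1 (s^2) with ⟨h,_⟩ | ⟨h,_⟩ <;> rw [h] <;> nlinarith [sq_nonneg s]
  exact this.mono_set (Ioi_subset_Ioi hr)

lemma F_eq (k : ℕ) {r : ℝ} (hr : 0 ≤ r) : F ω k r = ∫ s in (0:ℝ)..r, s ^ k * ω s := by
  rw [intervalIntegral.integral_of_le hr]; rfl

lemma hasDerivAt_F (hωc : ContinuousOn ω (Ici 0)) (k : ℕ) {r : ℝ} (hr : 0 < r) :
    HasDerivAt (F ω k) (r ^ k * ω r) r := by
  have hev : F ω k =ᶠ[nhds r] fun x => ∫ s in (0:ℝ)..x, s ^ k * ω s := by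
    filter_upwards [eventually_gt_nhds hr] with x hx
    exact F_eq k hx.le
  refine HasDerivAt.congr_of_eventuallyEq ?_ hev
  refine intervalIntegral.integral_hasDerivAt_right ?_ ?_ ?_
  · rw [intervalIntegrable_iff_integrableOn_Ioc_of_le hr.le]; exact intOnIoc hωc k r
  · exact ⟨Ioi 0, Ioi_mem_nhds hr,
      ((contOn hωc k).mono Ioi_subset_Ici_self).aestronglyMeasurable measurableSet_Ioi⟩
  · exact (contOn hωc k).continuousAt (Ici_mem_nhds hr)

lemma hasDerivAt_G (hωc : ContinuousOn ω (Ici 0))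
    (hωint : IntegrableOn (fun s => (1 + s ^ 2) * |ω s|) (Ioi 0)) (k : ℕ) (hk : k ≤ 2)
    {r : ℝ} (hr : 0 < r) : HasDerivAt (G ω k) (-(r ^ k * ω r)) r := by
  have hev : G ω k =ᶠ[nhds r] fun x => (∫ s in Ioi (0:ℝ), s ^ k * ω s) - F ω k x := by
    filter_upwards [eventually_gt_nhds hr] with x hx
    have hsplit : (∫ s in Ioi (0:ℝ), s ^ k * ω s) = F ω k x + G ω k x := by
      rw [F, G, ← setIntegral_union (Ioc_disjoint_Ioi le_rfl) measurableSet_Ioi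
        (intOnIoc hωc k x) (intOnIoi hωc hωint k hk x hx.le), Ioc_union_Ioi_eq_Ioi hx.le]
    rw [hsplit]; ring
  refine HasDerivAt.congr_of_eventuallyEq ?_ hev
  exact (hasDerivAt_F hωc k hr).const_sub _

lemma pow_bound (k : ℕ) (hk : k ≤ 2) {s : ℝ} (hs : 0 < s) :
    |s ^ k * ω s| ≤ (1 + s ^ 2) * |ω s| := by
  rw [abs_mul, abs_pow]
  refine mul_le_mul ?_ le_rfl (abs_nonneg _) (by positivity)
  have h1 : |s| ^ k ≤ max 1 (|s|^2) := by
    rcases le_or_gt (|s|) 1 with h | h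
    · exact le_max_of_le_left (pow_le_one₀ (abs_nonneg s) h)
    · exact le_max_of_le_right (pow_le_pow_right₀ h.le hk)
  calc |s| ^ k ≤ max 1 (|s|^2) := h1
    _ ≤ 1 + s ^ 2 := by
        rw [sq_abs]; rcases max_cases 1 (s^2) with ⟨h,_⟩ | ⟨h,_⟩ <;> rw [h] <;> nlinarith [sq_nonneg s]

lemma abs_G_le (hωc : ContinuousOn ω (Ici 0))
    (hωint : IntegrableOn (fun s => (1 + s ^ 2) * |ω s|) (Ioi 0)) (k : ℕ) (hk : k ≤ 2)
    {r : ℝ} (hr : 0 < r) :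
    |G ω k r| ≤ ∫ s in Ioi (0:ℝ), (1 + s ^ 2) * |ω s| := by
  have h1 : |G ω k r| ≤ ∫ s in Ioi r, |s ^ k * ω s| :=
    norm_integral_le_integral_norm (μ := volume.restrict (Ioi r)) (fun s => s ^ k * ω s)
  refine h1.trans ?_
  have h2 : (∫ s in Ioi r, |s ^ k * ω s|) ≤ ∫ s in Ioi r, (1 + s ^ 2) * |ω s| := by
    refine setIntegral_mono_on ((intOnIoi hωc hωint k hk r hr.le).abs) (hωint.mono_set (Ioi_subset_Ioi hr.le)) measurableSet_Ioi ?_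
    intro s hs; exact pow_bound k hk (hr.trans hs)
  refine h2.trans ?_
  refine setIntegral_mono_set hωint ?_ (HasSubset.Subset.eventuallyLE (Ioi_subset_Ioi hr.le))
  filter_upwards [ae_restrict_mem measurableSet_Ioi] with s _
  positivity

lemma abs_F_le (hωc : ContinuousOn ω (Ici 0))
    (hωint : IntegrableOn (fun s => (1 + s ^ 2) * |ω s|) (Ioi 0)) (k : ℕ) (hk : 2 ≤ k)
    {r : ℝ} (hr : 0 < r) (hr1 : r ≤ 1) :
    |F ω k r| ≤ r ^ (k - 2) * ∫ s in Ioi (0:ℝ), (1 + s ^ 2) * |ω s| := by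
  have h1 : |F ω k r| ≤ ∫ s in Ioc (0:ℝ) r, |s ^ k * ω s| :=
    norm_integral_le_integral_norm (μ := volume.restrict (Ioc (0:ℝ) r)) (fun s => s ^ k * ω s)
  refine h1.trans ?_
  have h2 : (∫ s in Ioc (0:ℝ) r, |s ^ k * ω s|) ≤
      ∫ s in Ioc (0:ℝ) r, r ^ (k - 2) * ((1 + s ^ 2) * |ω s|) := by
    refine setIntegral_mono_on ((intOnIoc hωc k r).abs)
      ((hωint.mono_set Ioc_subset_Ioi_self).const_mul _) measurableSet_Ioc ?_
    intro s hs
    rw [abs_mul, abs_pow, abs_of_pos hs.1]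
    have hsk : s ^ k ≤ r ^ (k - 2) * s ^ 2 := by
      calc s ^ k = s ^ (k - 2) * s ^ 2 := by rw [← pow_add]; congr 1; omega
        _ ≤ r ^ (k - 2) * s ^ 2 := by gcongr; exact hs.1.le; exact hs.2
    calc s ^ k * |ω s| ≤ (r ^ (k-2) * s ^ 2) * |ω s| := by gcongr
      _ ≤ r ^ (k-2) * ((1 + s^2) * |ω s|) := by
          rw [mul_assoc]
          refine mul_le_mul_of_nonneg_left ?_ (by positivity)
          nlinarith [sq_nonneg s, abs_nonneg (ω s)]
  refine h2.trans ?_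
  rw [MeasureTheory.integral_const_mul]
  refine mul_le_mul_of_nonneg_left ?_ (by positivity)
  refine setIntegral_mono_set hωint ?_ (HasSubset.Subset.eventuallyLE Ioc_subset_Ioi_self)
  filter_upwards [ae_restrict_mem measurableSet_Ioi] with s _
  positivity



noncomputable def c1 (n : ℕ) : ℝ := 2 * n * ((n:ℝ) - 2)
noncomputable def c2 (n : ℕ) : ℝ := 2 * n * ((n:ℝ) + 2)

lemma c1_pos {n : ℕ} (hn : 3 ≤ n) : 0 < c1 n := by
  have : (3:ℝ) ≤ n := by exact_mod_cast hn
  unfold c1; nlinarith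
lemma c2_pos {n : ℕ} (hn : 3 ≤ n) : 0 < c2 n := by
  have : (3:ℝ) ≤ n := by exact_mod_cast hn
  unfold c2; nlinarith

noncomputable def U0 (ω : ℝ → ℝ) (n : ℕ) (r : ℝ) : ℝ :=
  r ^ 3 / (r ^ n * c1 n) * F ω n r - r / (r ^ n * c2 n) * F ω (n + 2) r
    + r / c1 n * G ω 2 r - r ^ 3 / c2 n * G ω 0 r

noncomputable def U1 (ω : ℝ → ℝ) (n : ℕ) (r : ℝ) : ℝ :=
  (3 - (n:ℝ)) * r ^ 2 / (r ^ n * c1 n) * F ω n r + ((n:ℝ) - 1) / (r ^ n * c2 n) * F ω (n + 2) r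
    + 1 / c1 n * G ω 2 r - 3 * r ^ 2 / c2 n * G ω 0 r

noncomputable def U2 (ω : ℝ → ℝ) (n : ℕ) (r : ℝ) : ℝ :=
  (3 - (n:ℝ)) * (2 - (n:ℝ)) * r / (r ^ n * c1 n) * F ω n r
    - (n:ℝ) * ((n:ℝ) - 1) / (r ^ n * r * c2 n) * F ω (n + 2) r - 6 * r / c2 n * G ω 0 r

noncomputable def U3 (ω : ℝ → ℝ) (n : ℕ) (r : ℝ) : ℝ :=
  (3 - (n:ℝ)) * (2 - (n:ℝ)) * (1 - (n:ℝ)) / (r ^ n * c1 n) * F ω n r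
    + (n:ℝ) * ((n:ℝ) - 1) * ((n:ℝ) + 1) / (r ^ n * r ^ 2 * c2 n) * F ω (n + 2) r
    - 6 / c2 n * G ω 0 r

noncomputable def U4 (ω : ℝ → ℝ) (n : ℕ) (r : ℝ) : ℝ :=
  (n:ℝ) * ((n:ℝ) - 1) * ((n:ℝ) - 2) * ((n:ℝ) - 3) / (r ^ n * r * c1 n) * F ω n r
    - (n:ℝ) * ((n:ℝ) - 1) * ((n:ℝ) + 1) * ((n:ℝ) + 2) / (r ^ n * r ^ 3 * c2 n) * F ω (n + 2) r
    + ω r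

noncomputable def W (ω : ℝ → ℝ) (n : ℕ) (r : ℝ) : ℝ :=
  r / r ^ n * F ω n r + r * G ω 0 r

noncomputable def W1 (ω : ℝ → ℝ) (n : ℕ) (r : ℝ) : ℝ :=
  (1 - (n:ℝ)) / r ^ n * F ω n r + G ω 0 r

noncomputable def W2 (ω : ℝ → ℝ) (n : ℕ) (r : ℝ) : ℝ :=
  (n:ℝ) * ((n:ℝ) - 1) / (r ^ n * r) * F ω n r - (n:ℝ) * ω r

section derivs
variable (hωc : ContinuousOn ω (Ici 0))
  (hωint : IntegrableOn (fun s => (1 + s ^ 2) * |ω s|) (Ioi 0))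
include hωc hωint

lemma hasDerivAt_U0 {n : ℕ} (hn : 3 ≤ n) {r : ℝ} (hr : 0 < r) :
    HasDerivAt (U0 ω n) (U1 ω n r) r := by
  obtain ⟨m, rfl⟩ : ∃ m, n = m + 3 := ⟨n - 3, by omega⟩
  have hr0 : r ≠ 0 := hr.ne'
  have hc1 : c1 (m+3) ≠ 0 := (c1_pos hn).ne'
  have hc2 : c2 (m+3) ≠ 0 := (c2_pos hn).ne'
  have hF1 := hasDerivAt_F hωc (m+3) hr
  have hF2 := hasDerivAt_F hωc (m+3+2) hr
  have hG1 := hasDerivAt_G hωc hωint 2 le_rfl hr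
  have hG0 := hasDerivAt_G hωc hωint 0 (by norm_num) hr
  have hden : r ^ (m+3) * c1 (m+3) ≠ 0 := by
    exact mul_ne_zero (pow_ne_zero _ hr0) hc1
  have hden2 : r ^ (m+3) * c2 (m+3) ≠ 0 := by
    exact mul_ne_zero (pow_ne_zero _ hr0) hc2
  have h1 := ((hasDerivAt_pow 3 r).div ((hasDerivAt_pow (m+3) r).mul_const (c1 (m+3))) hden).mul hF1
  have h2 := ((hasDerivAt_id r).div ((hasDerivAt_pow (m+3) r).mul_const (c2 (m+3))) hden2).mul hF2
  have h3 := (((hasDerivAt_id r).div_const (c1 (m+3))).mul hG1)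
  have h4 := (((hasDerivAt_pow 3 r).div_const (c2 (m+3))).mul hG0)
  have H := ((h1.sub h2).add h3).sub h4
  have hfun : U0 ω (m+3) = fun x => x ^ 3 / (x ^ (m+3) * c1 (m+3)) * F ω (m+3) x
      - x / (x ^ (m+3) * c2 (m+3)) * F ω (m+3+2) x
      + x / c1 (m+3) * G ω 2 x - x ^ 3 / c2 (m+3) * G ω 0 x := rfl
  rw [hfun]
  convert H using 1
  show U1 ω (m+3) r = _
  simp only [U1, c1, c2] at hc1 hc2 ⊢
  push_cast at hc1 hc2 ⊢
  have hm1 : (m:ℝ) + 3 - 2 ≠ 0 := by have := (Nat.cast_nonneg m : (0:ℝ) ≤ m); intro h; linarith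
  simp only [Pi.div_apply, Pi.mul_apply, id_eq]
  field_simp
  ring
  all_goals rfl

lemma hasDerivAt_U1 {n : ℕ} (hn : 3 ≤ n) {r : ℝ} (hr : 0 < r) :
    HasDerivAt (U1 ω n) (U2 ω n r) r := by
  obtain ⟨m, rfl⟩ : ∃ m, n = m + 3 := ⟨n - 3, by omega⟩
  have hr0 : r ≠ 0 := hr.ne'
  have hc1 : c1 (m+3) ≠ 0 := (c1_pos hn).ne'
  have hc2 : c2 (m+3) ≠ 0 := (c2_pos hn).ne'
  have hF1 := hasDerivAt_F hωc (m+3) hr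
  have hF2 := hasDerivAt_F hωc (m+3+2) hr
  have hG1 := hasDerivAt_G hωc hωint 2 le_rfl hr
  have hG0 := hasDerivAt_G hωc hωint 0 (by norm_num) hr
  have hden : r ^ (m+3) * c1 (m+3) ≠ 0 := mul_ne_zero (pow_ne_zero _ hr0) hc1
  have hden2 : r ^ (m+3) * c2 (m+3) ≠ 0 := mul_ne_zero (pow_ne_zero _ hr0) hc2
  have h1 := (((hasDerivAt_pow 2 r).const_mul (3 - ((m:ℝ)+3))).div
      ((hasDerivAt_pow (m+3) r).mul_const (c1 (m+3))) hden).mul hF1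
  have h2 := ((hasDerivAt_const r (((m:ℝ)+3) - 1)).div
      ((hasDerivAt_pow (m+3) r).mul_const (c2 (m+3))) hden2).mul hF2
  have h3 := hG1.const_mul (1 / c1 (m+3))
  have h4 := (((hasDerivAt_pow 2 r).const_mul (3:ℝ)).div_const (c2 (m+3))).mul hG0
  have H := ((h1.add h2).add h3).sub h4
  have hfun : U1 ω (m+3) = fun x => (3 - ((m:ℝ)+3)) * x ^ 2 / (x ^ (m+3) * c1 (m+3)) * F ω (m+3) x
      + (((m:ℝ)+3) - 1) / (x ^ (m+3) * c2 (m+3)) * F ω (m+3+2) x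
      + 1 / c1 (m+3) * G ω 2 x - 3 * x ^ 2 / c2 (m+3) * G ω 0 x := by
    unfold U1; push_cast; rfl
  rw [hfun]
  convert H using 1
  show U2 ω (m+3) r = _
  simp only [U2, c1, c2] at hc1 hc2 ⊢
  push_cast at hc1 hc2 ⊢
  have hm1 : (m:ℝ) + 3 - 2 ≠ 0 := by have := (Nat.cast_nonneg m : (0:ℝ) ≤ m); intro h; linarith
  simp only [Pi.div_apply, Pi.mul_apply, id_eq]
  field_simp
  ring
  all_goals rfl

lemma hasDerivAt_U2 {n : ℕ} (hn : 3 ≤ n) {r : ℝ} (hr : 0 < r) :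
    HasDerivAt (U2 ω n) (U3 ω n r) r := by
  obtain ⟨m, rfl⟩ : ∃ m, n = m + 3 := ⟨n - 3, by omega⟩
  have hr0 : r ≠ 0 := hr.ne'
  have hc1 : c1 (m+3) ≠ 0 := (c1_pos hn).ne'
  have hc2 : c2 (m+3) ≠ 0 := (c2_pos hn).ne'
  have hF1 := hasDerivAt_F hωc (m+3) hr
  have hF2 := hasDerivAt_F hωc (m+3+2) hr
  have hG0 := hasDerivAt_G hωc hωint 0 (by norm_num) hr
  have hden : r ^ (m+3) * c1 (m+3) ≠ 0 := mul_ne_zero (pow_ne_zero _ hr0) hc1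
  have hden2 : r ^ (m+3) * r * c2 (m+3) ≠ 0 :=
    mul_ne_zero (mul_ne_zero (pow_ne_zero _ hr0) hr0) hc2
  have h1 := (((hasDerivAt_id r).const_mul ((3 - ((m:ℝ)+3)) * (2 - ((m:ℝ)+3)))).div
      ((hasDerivAt_pow (m+3) r).mul_const (c1 (m+3))) hden).mul hF1
  have h2 := ((hasDerivAt_const r (((m:ℝ)+3) * (((m:ℝ)+3) - 1))).div
      (((hasDerivAt_pow (m+3) r).mul (hasDerivAt_id r)).mul_const (c2 (m+3))) hden2).mul hF2
  have h4 := (((hasDerivAt_id r).const_mul (6:ℝ)).div_const (c2 (m+3))).mul hG0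
  have H := (h1.sub h2).sub h4
  have hfun : U2 ω (m+3) = fun x =>
      (3 - ((m:ℝ)+3)) * (2 - ((m:ℝ)+3)) * x / (x ^ (m+3) * c1 (m+3)) * F ω (m+3) x
      - ((m:ℝ)+3) * (((m:ℝ)+3) - 1) / (x ^ (m+3) * x * c2 (m+3)) * F ω (m+3+2) x
      - 6 * x / c2 (m+3) * G ω 0 x := by
    unfold U2; push_cast; rfl
  rw [hfun]
  convert H using 1
  show U3 ω (m+3) r = _
  simp only [U3, c1, c2] at hc1 hc2 ⊢
  push_cast at hc1 hc2 ⊢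
  have hm1 : (m:ℝ) + 3 - 2 ≠ 0 := by have := (Nat.cast_nonneg m : (0:ℝ) ≤ m); intro h; linarith
  simp only [Pi.div_apply, Pi.mul_apply, id_eq]
  field_simp
  ring
  all_goals rfl

lemma hasDerivAt_U3 {n : ℕ} (hn : 3 ≤ n) {r : ℝ} (hr : 0 < r) :
    HasDerivAt (U3 ω n) (U4 ω n r) r := by
  obtain ⟨m, rfl⟩ : ∃ m, n = m + 3 := ⟨n - 3, by omega⟩
  have hr0 : r ≠ 0 := hr.ne'
  have hc1 : c1 (m+3) ≠ 0 := (c1_pos hn).ne'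
  have hc2 : c2 (m+3) ≠ 0 := (c2_pos hn).ne'
  have hF1 := hasDerivAt_F hωc (m+3) hr
  have hF2 := hasDerivAt_F hωc (m+3+2) hr
  have hG0 := hasDerivAt_G hωc hωint 0 (by norm_num) hr
  have hden : r ^ (m+3) * c1 (m+3) ≠ 0 := mul_ne_zero (pow_ne_zero _ hr0) hc1
  have hden2 : r ^ (m+3) * r ^ 2 * c2 (m+3) ≠ 0 :=
    mul_ne_zero (mul_ne_zero (pow_ne_zero _ hr0) (pow_ne_zero _ hr0)) hc2
  have h1 := ((hasDerivAt_const r ((3 - ((m:ℝ)+3)) * (2 - ((m:ℝ)+3)) * (1 - ((m:ℝ)+3)))).div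
      ((hasDerivAt_pow (m+3) r).mul_const (c1 (m+3))) hden).mul hF1
  have h2 := ((hasDerivAt_const r (((m:ℝ)+3) * (((m:ℝ)+3) - 1) * (((m:ℝ)+3) + 1))).div
      (((hasDerivAt_pow (m+3) r).mul (hasDerivAt_pow 2 r)).mul_const (c2 (m+3))) hden2).mul hF2
  have h4 := hG0.const_mul (6 / c2 (m+3))
  have H := (h1.add h2).sub h4
  have hfun : U3 ω (m+3) = fun x =>
      (3 - ((m:ℝ)+3)) * (2 - ((m:ℝ)+3)) * (1 - ((m:ℝ)+3)) / (x ^ (m+3) * c1 (m+3)) * F ω (m+3) x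
      + ((m:ℝ)+3) * (((m:ℝ)+3) - 1) * (((m:ℝ)+3) + 1) / (x ^ (m+3) * x ^ 2 * c2 (m+3)) * F ω (m+3+2) x
      - 6 / c2 (m+3) * G ω 0 x := by
    unfold U3; push_cast; rfl
  rw [hfun]
  convert H using 1
  show U4 ω (m+3) r = _
  simp only [U4, c1, c2] at hc1 hc2 ⊢
  push_cast at hc1 hc2 ⊢
  have hm1 : (m:ℝ) + 3 - 2 ≠ 0 := by have := (Nat.cast_nonneg m : (0:ℝ) ≤ m); intro h; linarith
  simp only [Pi.div_apply, Pi.mul_apply, id_eq]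
  field_simp
  ring
  all_goals rfl

lemma hasDerivAt_W {n : ℕ} (hn : 3 ≤ n) {r : ℝ} (hr : 0 < r) :
    HasDerivAt (W ω n) (W1 ω n r) r := by
  obtain ⟨m, rfl⟩ : ∃ m, n = m + 3 := ⟨n - 3, by omega⟩
  have hr0 : r ≠ 0 := hr.ne'
  have hF1 := hasDerivAt_F hωc (m+3) hr
  have hG0 := hasDerivAt_G hωc hωint 0 (by norm_num) hr
  have hden : r ^ (m+3) ≠ 0 := pow_ne_zero _ hr0
  have h1 := (((hasDerivAt_id r).div (hasDerivAt_pow (m+3) r) hden)).mul hF1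
  have h2 := (hasDerivAt_id r).mul hG0
  have H := h1.add h2
  have hfun : W ω (m+3) = fun x => x / x ^ (m+3) * F ω (m+3) x + x * G ω 0 x := rfl
  rw [hfun]
  convert H using 1
  show W1 ω (m+3) r = _
  simp only [W1]
  push_cast
  simp only [Pi.div_apply, Pi.mul_apply, id_eq]
  field_simp
  ring
  all_goals rfl

lemma hasDerivAt_W1 {n : ℕ} (hn : 3 ≤ n) {r : ℝ} (hr : 0 < r) :
    HasDerivAt (W1 ω n) (W2 ω n r) r := by
  obtain ⟨m, rfl⟩ : ∃ m, n = m + 3 := ⟨n - 3, by omega⟩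
  have hr0 : r ≠ 0 := hr.ne'
  have hF1 := hasDerivAt_F hωc (m+3) hr
  have hG0 := hasDerivAt_G hωc hωint 0 (by norm_num) hr
  have hden : r ^ (m+3) ≠ 0 := pow_ne_zero _ hr0
  have h1 := ((hasDerivAt_const r (1 - ((m:ℝ)+3))).div (hasDerivAt_pow (m+3) r) hden).mul hF1
  have H := h1.add hG0
  have hfun : W1 ω (m+3) = fun x => (1 - ((m:ℝ)+3)) / x ^ (m+3) * F ω (m+3) x + G ω 0 x := by
    unfold W1; push_cast; rfl
  rw [hfun]
  convert H using 1
  show W2 ω (m+3) r = _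
  simp only [W2]
  push_cast
  simp only [Pi.div_apply, Pi.mul_apply, id_eq]
  field_simp
  ring
  all_goals rfl

end derivs

lemma LU_eq {n : ℕ} (hn : 3 ≤ n) {r : ℝ} (hr : 0 < r) :
    U2 ω n r + ((n:ℝ) - 1) / r * U1 ω n r - ((n:ℝ) - 1) / r ^ 2 * U0 ω n r
      = -(1 / (n:ℝ)) * W ω n r := by
  obtain ⟨m, rfl⟩ : ∃ m, n = m + 3 := ⟨n - 3, by omega⟩
  have hr0 : r ≠ 0 := hr.ne'
  have hc1 : c1 (m+3) ≠ 0 := (c1_pos hn).ne'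
  have hc2 : c2 (m+3) ≠ 0 := (c2_pos hn).ne'
  simp only [U0, U1, U2, W, c1, c2] at hc1 hc2 ⊢
  push_cast at hc1 hc2 ⊢
  have hm1 : (m:ℝ) + 3 - 2 ≠ 0 := by have := (Nat.cast_nonneg m : (0:ℝ) ≤ m); intro h; linarith
  field_simp
  ring

lemma LW_eq {n : ℕ} (hn : 3 ≤ n) {r : ℝ} (hr : 0 < r) :
    -(1 / (n:ℝ)) * W2 ω n r + ((n:ℝ) - 1) / r * (-(1 / (n:ℝ)) * W1 ω n r)
      - ((n:ℝ) - 1) / r ^ 2 * (-(1 / (n:ℝ)) * W ω n r) = ω r := by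
  obtain ⟨m, rfl⟩ : ∃ m, n = m + 3 := ⟨n - 3, by omega⟩
  have hr0 : r ≠ 0 := hr.ne'
  have hm : ((m:ℝ) + 3) ≠ 0 := by positivity
  simp only [W, W1, W2]
  push_cast
  field_simp
  ring

lemma contOn_F (hωc : ContinuousOn ω (Ici 0)) (k : ℕ) : ContinuousOn (F ω k) (Ioi 0) :=
  fun r hr => ((hasDerivAt_F hωc k hr).continuousAt).continuousWithinAt

lemma contOn_G (hωc : ContinuousOn ω (Ici 0))
    (hωint : IntegrableOn (fun s => (1 + s ^ 2) * |ω s|) (Ioi 0)) (k : ℕ) (hk : k ≤ 2) :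
    ContinuousOn (G ω k) (Ioi 0) :=
  fun r hr => ((hasDerivAt_G hωc hωint k hk hr).continuousAt).continuousWithinAt

lemma contOn_U4 (hωc : ContinuousOn ω (Ici 0))
    (hωint : IntegrableOn (fun s => (1 + s ^ 2) * |ω s|) (Ioi 0)) {n : ℕ} (hn : 3 ≤ n) :
    ContinuousOn (U4 ω n) (Ioi 0) := by
  have hc1 : c1 n ≠ 0 := (c1_pos hn).ne'
  have hc2 : c2 n ≠ 0 := (c2_pos hn).ne'
  unfold U4
  refine ContinuousOn.add (ContinuousOn.sub ?_ ?_) (hωc.mono Ioi_subset_Ici_self)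
  · refine (continuousOn_const.div ?_ ?_).mul (contOn_F hωc n)
    · exact (((continuous_pow n).mul continuous_id).mul continuous_const).continuousOn
    · intro x hx
      have hx0 : x ≠ 0 := (ne_of_gt hx)
      exact mul_ne_zero (mul_ne_zero (pow_ne_zero _ hx0) hx0) hc1
  · refine (continuousOn_const.div ?_ ?_).mul (contOn_F hωc (n+2))
    · exact (((continuous_pow n).mul (continuous_pow 3)).mul continuous_const).continuousOn
    · intro x hx
      have hx0 : x ≠ 0 := (ne_of_gt hx)
      exact mul_ne_zero (mul_ne_zero (pow_ne_zero _ hx0) (pow_ne_zero _ hx0)) hc2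

lemma U0_bound (hωc : ContinuousOn ω (Ici 0))
    (hωint : IntegrableOn (fun s => (1 + s ^ 2) * |ω s|) (Ioi 0)) {n : ℕ} (hn : 3 ≤ n)
    {r : ℝ} (hr : 0 < r) (hr1 : r ≤ 1) :
    |U0 ω n r| ≤ (2 / c1 n + 2 / c2 n) * (∫ s in Ioi (0:ℝ), (1 + s ^ 2) * |ω s|) * r := by
  set M := ∫ s in Ioi (0:ℝ), (1 + s ^ 2) * |ω s| with hM_def
  have hM : 0 ≤ M := setIntegral_nonneg measurableSet_Ioi (fun s _ => by positivity)
  have hc1 : 0 < c1 n := c1_pos hn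
  have hc2 : 0 < c2 n := c2_pos hn
  have hr0 : r ≠ 0 := hr.ne'
  have hF1 : |F ω n r| ≤ r ^ (n-2) * M := abs_F_le hωc hωint n (by omega) hr hr1
  have hF2 : |F ω (n+2) r| ≤ r ^ n * M := by
    have := abs_F_le hωc hωint (n+2) (by omega) hr hr1
    simpa [show n + 2 - 2 = n from rfl] using this
  have hG1 : |G ω 2 r| ≤ M := abs_G_le hωc hωint 2 le_rfl hr
  have hG0 : |G ω 0 r| ≤ M := abs_G_le hωc hωint 0 (by norm_num) hr
  have hco1 : 0 ≤ r ^ 3 / (r ^ n * c1 n) := by positivity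
  have hco2 : 0 ≤ r / (r ^ n * c2 n) := by positivity
  have t1 : |r ^ 3 / (r ^ n * c1 n) * F ω n r| ≤ M / c1 n * r := by
    rw [abs_mul, abs_of_nonneg hco1]
    calc r ^ 3 / (r ^ n * c1 n) * |F ω n r| ≤ r ^ 3 / (r ^ n * c1 n) * (r ^ (n-2) * M) := by
          exact mul_le_mul_of_nonneg_left hF1 hco1
      _ = M / c1 n * r := by
          obtain ⟨m, rfl⟩ : ∃ m, n = m + 3 := ⟨n - 3, by omega⟩
          show r ^ 3 / (r ^ (m+3) * c1 (m+3)) * (r ^ (m+1) * M) = _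
          field_simp
          ring
  have t2 : |r / (r ^ n * c2 n) * F ω (n+2) r| ≤ M / c2 n * r := by
    rw [abs_mul, abs_of_nonneg hco2]
    calc r / (r ^ n * c2 n) * |F ω (n+2) r| ≤ r / (r ^ n * c2 n) * (r ^ n * M) := by
          exact mul_le_mul_of_nonneg_left hF2 hco2
      _ = M / c2 n * r := by field_simp
  have t3 : |r / c1 n * G ω 2 r| ≤ M / c1 n * r := by
    rw [abs_mul, abs_of_nonneg (by positivity : (0:ℝ) ≤ r / c1 n)]
    calc r / c1 n * |G ω 2 r| ≤ r / c1 n * M := by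
          exact mul_le_mul_of_nonneg_left hG1 (by positivity)
      _ = M / c1 n * r := by ring
  have t4 : |r ^ 3 / c2 n * G ω 0 r| ≤ M / c2 n * r := by
    rw [abs_mul, abs_of_nonneg (by positivity : (0:ℝ) ≤ r ^ 3 / c2 n)]
    have hr3 : r ^ 3 ≤ r := by
      calc r ^ 3 ≤ r ^ 1 := pow_le_pow_of_le_one hr.le hr1 (by norm_num)
        _ = r := pow_one r
    calc r ^ 3 / c2 n * |G ω 0 r| ≤ r ^ 3 / c2 n * M := by
          exact mul_le_mul_of_nonneg_left hG0 (by positivity)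
      _ ≤ r / c2 n * M := by gcongr
      _ = M / c2 n * r := by ring
  have habs : ∀ a b c d : ℝ, |a - b + c - d| ≤ |a| + |b| + |c| + |d| := by
    intro a b c d
    have h1 := abs_add_le (a - b + c) (-d)
    have h2 := abs_add_le (a - b) c
    have h3 := abs_add_le a (-b)
    simp only [abs_neg, ← sub_eq_add_neg] at h1 h2 h3
    linarith
  have := habs (r ^ 3 / (r ^ n * c1 n) * F ω n r) (r / (r ^ n * c2 n) * F ω (n+2) r)
    (r / c1 n * G ω 2 r) (r ^ 3 / c2 n * G ω 0 r)
  unfold U0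
  calc |r ^ 3 / (r ^ n * c1 n) * F ω n r - r / (r ^ n * c2 n) * F ω (n + 2) r
      + r / c1 n * G ω 2 r - r ^ 3 / c2 n * G ω 0 r| ≤ _ := this
    _ ≤ M / c1 n * r + M / c2 n * r + M / c1 n * r + M / c2 n * r := by
        linarith
    _ = (2 / c1 n + 2 / c2 n) * M * r := by ring

end Gf

/-- Green-function inversion of the radial bi-Laplacian `Δ²` on `ℝⁿ`, `n ≥ 3`. -/
theorem greens_function_H2dot (n : ℕ) (hn : 3 ≤ n) (ω : ℝ → ℝ)
    (hωc : ContinuousOn ω (Ici 0))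
    (hωint : IntegrableOn (fun s => (1 + s ^ 2) * |ω s|) (Ioi 0))
    (φ δ : ℝ → ℝ → ℝ)
    (hφ : ∀ r s : ℝ, φ r s =
      s ^ ((2:ℤ) - (n:ℤ)) / (2 * (n:ℝ) * ((n:ℝ) - 2)) -
        r ^ 2 * s ^ (-(n:ℤ)) / (2 * (n:ℝ) * ((n:ℝ) + 2)))
    (hδ : ∀ r s : ℝ, δ r s = r * s * φ r s)
    (u : ℝ → ℝ)
    (hu : ∀ r : ℝ, 0 < r → u r =
      (∫ s in Ioc (0:ℝ) r, δ s r * s ^ (n - 1) * ω s) +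
        ∫ s in Ioi r, δ r s * s ^ (n - 1) * ω s) :
    ContDiffOn ℝ 4 u (Ioi 0) ∧
    Filter.Tendsto u (nhdsWithin 0 (Ioi 0)) (nhds 0) ∧
    ∀ r : ℝ, 0 < r → radialVecLaplacian n (radialVecLaplacian n u) r = ω r := by
  have hc1 : Gf.c1 n ≠ 0 := (Gf.c1_pos hn).ne'
  have hc2 : Gf.c2 n ≠ 0 := (Gf.c2_pos hn).ne'
  -- Step 1: splitting
  have hsplit : ∀ r : ℝ, 0 < r → u r = Gf.U0 ω n r := by
    intro r hr
    have hr0 : r ≠ 0 := hr.ne'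
    rw [hu r hr]
    have h1 : (∫ s in Ioc (0:ℝ) r, δ s r * s ^ (n - 1) * ω s)
        = ∫ s in Ioc (0:ℝ) r, (r ^ 3 / (r ^ n * Gf.c1 n) * (s ^ n * ω s)
            - r / (r ^ n * Gf.c2 n) * (s ^ (n + 2) * ω s)) := by
      refine setIntegral_congr_fun measurableSet_Ioc (fun s hs => ?_)
      rw [hδ, hφ]
      have hz1 : r ^ ((2:ℤ) - (n:ℤ)) = r ^ 2 / r ^ n := by
        rw [zpow_sub₀ hr0, zpow_natCast]; norm_num [zpow_ofNat]
      have hz2 : r ^ (-(n:ℤ)) = (r ^ n)⁻¹ := by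
        rw [zpow_neg, zpow_natCast]
      rw [hz1, hz2]
      obtain ⟨m, rfl⟩ : ∃ m, n = m + 3 := ⟨n - 3, by omega⟩
      simp only [Gf.c1, Gf.c2] at hc1 hc2 ⊢
      push_cast at hc1 hc2 ⊢
      show s * r * (r ^ 2 / r ^ (m+3) / _ - s ^ 2 * (r ^ (m+3))⁻¹ / _) * s ^ (m+2) * ω s = _
      field_simp
      ring
    have h2 : (∫ s in Ioi r, δ r s * s ^ (n - 1) * ω s)
        = ∫ s in Ioi r, (r / Gf.c1 n * (s ^ 2 * ω s) - r ^ 3 / Gf.c2 n * (s ^ 0 * ω s)) := by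
      refine setIntegral_congr_fun measurableSet_Ioi (fun s hs => ?_)
      have hs0 : s ≠ 0 := (hr.trans hs).ne'
      rw [hδ, hφ]
      have hz1 : s ^ ((2:ℤ) - (n:ℤ)) = s ^ 2 / s ^ n := by
        rw [zpow_sub₀ hs0, zpow_natCast]; norm_num [zpow_ofNat]
      have hz2 : s ^ (-(n:ℤ)) = (s ^ n)⁻¹ := by
        rw [zpow_neg, zpow_natCast]
      rw [hz1, hz2]
      obtain ⟨m, rfl⟩ : ∃ m, n = m + 3 := ⟨n - 3, by omega⟩
      simp only [Gf.c1, Gf.c2] at hc1 hc2 ⊢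
      push_cast at hc1 hc2 ⊢
      show r * s * (s ^ 2 / s ^ (m+3) / _ - r ^ 2 * (s ^ (m+3))⁻¹ / _) * s ^ (m+2) * ω s = _
      field_simp
      ring
    rw [h1, h2]
    rw [integral_sub ((Gf.intOnIoc hωc n r).const_mul _) ((Gf.intOnIoc hωc (n+2) r).const_mul _)]
    rw [integral_sub ((Gf.intOnIoi hωc hωint 2 le_rfl r hr.le).const_mul _)
      ((Gf.intOnIoi hωc hωint 0 (by norm_num) r hr.le).const_mul _)]
    rw [MeasureTheory.integral_const_mul, MeasureTheory.integral_const_mul,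
      MeasureTheory.integral_const_mul, MeasureTheory.integral_const_mul]
    simp only [Gf.U0, Gf.F, Gf.G]
    ring
  -- Step 2: derivative chain for u
  have hU0d : ∀ r ∈ Ioi (0:ℝ), HasDerivAt u (Gf.U1 ω n r) r := by
    intro r hr
    refine (Gf.hasDerivAt_U0 hωc hωint hn hr).congr_of_eventuallyEq ?_
    filter_upwards [Ioi_mem_nhds hr] with x hx
    exact hsplit x hx
  have hd1 : EqOn (deriv u) (Gf.U1 ω n) (Ioi 0) := fun r hr => (hU0d r hr).deriv
  have hd2 : ∀ r ∈ Ioi (0:ℝ), deriv (deriv u) r = Gf.U2 ω n r := by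
    intro r hr
    have he : deriv u =ᶠ[nhds r] Gf.U1 ω n :=
      Filter.eventuallyEq_of_mem (Ioi_mem_nhds hr) hd1
    rw [he.deriv_eq]
    exact (Gf.hasDerivAt_U1 hωc hωint hn hr).deriv
  refine ⟨?_, ?_, ?_⟩
  · -- ContDiffOn
    have hC0 : ContDiffOn ℝ 0 (Gf.U4 ω n) (Ioi 0) :=
      contDiffOn_zero.mpr (Gf.contOn_U4 hωc hωint hn)
    have hC1 : ContDiffOn ℝ 1 (Gf.U3 ω n) (Ioi 0) := by
      rw [show (1 : WithTop ℕ∞) = 0 + 1 by norm_num,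
        contDiffOn_succ_iff_deriv_of_isOpen isOpen_Ioi]
      refine ⟨fun r hr => (Gf.hasDerivAt_U3 hωc hωint hn hr).differentiableAt.differentiableWithinAt,
        by simp, ?_⟩
      exact hC0.congr (fun r hr => (Gf.hasDerivAt_U3 hωc hωint hn hr).deriv)
    have hC2 : ContDiffOn ℝ 2 (Gf.U2 ω n) (Ioi 0) := by
      rw [show (2 : WithTop ℕ∞) = 1 + 1 by norm_num,
        contDiffOn_succ_iff_deriv_of_isOpen isOpen_Ioi]
      refine ⟨fun r hr => (Gf.hasDerivAt_U2 hωc hωint hn hr).differentiableAt.differentiableWithinAt,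
        by simp, ?_⟩
      exact hC1.congr (fun r hr => (Gf.hasDerivAt_U2 hωc hωint hn hr).deriv)
    have hC3 : ContDiffOn ℝ 3 (Gf.U1 ω n) (Ioi 0) := by
      rw [show (3 : WithTop ℕ∞) = 2 + 1 by norm_num,
        contDiffOn_succ_iff_deriv_of_isOpen isOpen_Ioi]
      refine ⟨fun r hr => (Gf.hasDerivAt_U1 hωc hωint hn hr).differentiableAt.differentiableWithinAt,
        by simp, ?_⟩
      exact hC2.congr (fun r hr => (Gf.hasDerivAt_U1 hωc hωint hn hr).deriv)
    rw [show (4 : WithTop ℕ∞) = 3 + 1 by norm_num,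
      contDiffOn_succ_iff_deriv_of_isOpen isOpen_Ioi]
    refine ⟨fun r hr => (hU0d r hr).differentiableAt.differentiableWithinAt, by simp, ?_⟩
    exact hC3.congr hd1
  · -- Tendsto
    set M := ∫ s in Ioi (0:ℝ), (1 + s ^ 2) * |ω s| with hM_def
    have hb : ∀ᶠ r in nhdsWithin 0 (Ioi 0),
        ‖u r‖ ≤ (2 / Gf.c1 n + 2 / Gf.c2 n) * M * r := by
      filter_upwards [Ioo_mem_nhdsGT_of_mem (Set.mem_Ico.mpr ⟨le_rfl, zero_lt_one⟩)] with r hr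
      rw [Real.norm_eq_abs, hsplit r hr.1]
      exact Gf.U0_bound hωc hωint hn hr.1 hr.2.le
    have h : Filter.Tendsto (fun r : ℝ => (2 / Gf.c1 n + 2 / Gf.c2 n) * M * r)
        (nhds 0) (nhds 0) := by
      have hcont : Continuous (fun r : ℝ => (2 / Gf.c1 n + 2 / Gf.c2 n) * M * r) :=
        continuous_const.mul continuous_id
      simpa using hcont.tendsto 0
    exact squeeze_zero_norm' hb (h.mono_left nhdsWithin_le_nhds)
  · -- the ODE
    intro r hr
    have hvW : ∀ x ∈ Ioi (0:ℝ), radialVecLaplacian n u x = -(1 / (n:ℝ)) * Gf.W ω n x := by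
      intro x hx
      unfold radialVecLaplacian
      rw [hd2 x hx, hd1 hx, hsplit x hx]
      exact Gf.LU_eq hn hx
    have hvd1 : ∀ x ∈ Ioi (0:ℝ),
        HasDerivAt (radialVecLaplacian n u) (-(1 / (n:ℝ)) * Gf.W1 ω n x) x := by
      intro x hx
      refine ((Gf.hasDerivAt_W hωc hωint hn hx).const_mul (-(1 / (n:ℝ)))).congr_of_eventuallyEq ?_
      filter_upwards [Ioi_mem_nhds hx] with y hy
      exact hvW y hy
    have hvd1' : EqOn (deriv (radialVecLaplacian n u))
        (fun x => -(1 / (n:ℝ)) * Gf.W1 ω n x) (Ioi 0) := fun x hx => (hvd1 x hx).deriv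
    have hdd : deriv (deriv (radialVecLaplacian n u)) r = -(1 / (n:ℝ)) * Gf.W2 ω n r := by
      have he : deriv (radialVecLaplacian n u) =ᶠ[nhds r]
          (fun x => -(1 / (n:ℝ)) * Gf.W1 ω n x) :=
        Filter.eventuallyEq_of_mem (Ioi_mem_nhds hr) hvd1'
      rw [he.deriv_eq]
      exact ((Gf.hasDerivAt_W1 hωc hωint hn hr).const_mul (-(1 / (n:ℝ)))).deriv
    show deriv (deriv (radialVecLaplacian n u)) r
        + ((n:ℝ) - 1) / r * deriv (radialVecLaplacian n u) r
        - ((n:ℝ) - 1) / r ^ 2 * radialVecLaplacian n u r = ω r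
    rw [hdd, (hvd1 r hr).deriv, hvW r hr]
    exact Gf.LW_eq hn hr
end

section
/- Let n ≥ 1 be an integer and T > 0. Suppose u, ω : [0,T) × (0,∞) → ℝ are continuously differentiable and satisfy the radial transport equation ∂_t ω(t,r) + u(t,r) ∂_r ω(t,r) + 2 ∂_r u(t,r) ω(t,r) + ((n−1)/r) u(t,r) ω(t,r) = 0 for all t ∈ [0,T) and r > 0. Suppose γ : [0,T) × (0,∞) → (0,∞) is continuously differentiable with continuous mixed partial derivative ∂_t∂_r γ, satisfies γ(0,r) = r and ∂_r γ(0,r) = 1 for all r > 0, and ∂_t γ(t,r) = u(t, γ(t,r)) for all t, r. Then for all t ∈ [0,T) and r > 0: γ(t,r)^{n−1} (∂_r γ(t,r))² ω(t, γ(t,r)) = r^{n−1} ω(0,r). -/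
open Set

open Set Metric Filter Asymptotics MeasureTheory intervalIntegral
open scoped Topology

lemma aux_hasFDerivAt_of_partials {f fx : ℝ → ℝ → ℝ} {ft : ℝ} {p : ℝ × ℝ} {U : Set (ℝ × ℝ)}
    (hU : U ∈ 𝓝 p)
    (hft : HasDerivAt (fun τ => f τ p.2) ft p.1)
    (hfx : ∀ q ∈ U, HasDerivAt (fun y => f q.1 y) (fx q.1 q.2) q.2)
    (hfxc : ContinuousAt (fun q : ℝ × ℝ => fx q.1 q.2) p) :
    HasFDerivAt (fun q : ℝ × ℝ => f q.1 q.2)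
      (ft • (ContinuousLinearMap.fst ℝ ℝ ℝ) + fx p.1 p.2 • (ContinuousLinearMap.snd ℝ ℝ ℝ)) p := by
  rw [hasFDerivAt_iff_isLittleO]
  have h2 : (fun q : ℝ × ℝ => f q.1 p.2 - f p.1 p.2 - (q.1 - p.1) * ft) =o[𝓝 p]
      fun q : ℝ × ℝ => q - p := by
    have := (hasDerivAt_iff_isLittleO.1 hft).comp_tendsto
      (continuousAt_fst : ContinuousAt Prod.fst p)
    refine (this.trans_isBigO ?_)
    refine isBigO_of_le _ fun q => ?_
    simpa using norm_fst_le (q - p)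
  have h1 : (fun q : ℝ × ℝ => f q.1 q.2 - f q.1 p.2 - fx p.1 p.2 * (q.2 - p.2)) =o[𝓝 p]
      fun q : ℝ × ℝ => q - p := by
    rw [isLittleO_iff]
    intro ε hε
    have hev : ∀ᶠ q : ℝ × ℝ in 𝓝 p, q ∈ U ∧ |fx q.1 q.2 - fx p.1 p.2| ≤ ε := by
      filter_upwards [hU, hfxc (Metric.closedBall_mem_nhds (fx p.1 p.2) hε)] with q h1 h2
      exact ⟨h1, by simpa [Real.dist_eq, Metric.mem_closedBall] using h2⟩
    obtain ⟨δ, hδ, hball⟩ := Metric.mem_nhds_iff.1 hev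
    have : ∀ᶠ q : ℝ × ℝ in 𝓝 p, q ∈ ball p δ := ball_mem_nhds p hδ
    filter_upwards [this] with q hq
    have key : ∀ y ∈ uIcc p.2 q.2, (q.1, y) ∈ ball p δ := by
      intro y hy
      rw [mem_ball, Prod.dist_eq]
      rw [mem_ball, Prod.dist_eq] at hq
      refine max_lt (lt_of_le_of_lt (le_max_left _ _) hq) ?_
      have h1 : dist y p.2 ≤ dist q.2 p.2 := by
        rw [Real.dist_eq, Real.dist_eq]
        rcases le_total p.2 q.2 with h | h
        · rw [uIcc_of_le h] at hy
          rw [abs_of_nonneg (by linarith [hy.1]), abs_of_nonneg (by linarith)]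
          linarith [hy.2]
        · rw [uIcc_of_ge h] at hy
          rw [abs_of_nonpos (by linarith [hy.2]), abs_of_nonpos (by linarith)]
          linarith [hy.1]
      exact lt_of_le_of_lt (h1.trans (le_max_right _ _)) hq
    have mvt : ‖(f q.1 q.2 - fx p.1 p.2 * q.2) - (f q.1 p.2 - fx p.1 p.2 * p.2)‖
        ≤ ε * ‖q.2 - p.2‖ := by
      refine Convex.norm_image_sub_le_of_norm_hasDerivWithin_le
        (f := fun y => f q.1 y - fx p.1 p.2 * y) (f' := fun y => fx q.1 y - fx p.1 p.2)
        (s := uIcc p.2 q.2) (fun y hy => ?_) (fun y hy => ?_) (convex_uIcc _ _)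
        left_mem_uIcc right_mem_uIcc
      · have h := hfx (q.1, y) (hball (key y hy)).1
        exact (h.sub ((hasDerivAt_id y).const_mul (fx p.1 p.2))).hasDerivWithinAt.congr_deriv
          (by ring)
      · have := (hball (key y hy)).2
        simpa [Real.norm_eq_abs] using this
    calc ‖f q.1 q.2 - f q.1 p.2 - fx p.1 p.2 * (q.2 - p.2)‖
        = ‖(f q.1 q.2 - fx p.1 p.2 * q.2) - (f q.1 p.2 - fx p.1 p.2 * p.2)‖ := by ring_nf
      _ ≤ ε * ‖q.2 - p.2‖ := mvt
      _ ≤ ε * ‖q - p‖ := by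
          refine mul_le_mul_of_nonneg_left ?_ hε.le
          simpa using norm_snd_le (q - p)
  have := h1.add h2
  refine this.congr (fun q => ?_) (fun q => rfl)
  simp [ContinuousLinearMap.add_apply, ContinuousLinearMap.smul_apply,
    ContinuousLinearMap.coe_fst', ContinuousLinearMap.coe_snd', smul_eq_mul]
  ring

/-- momentum transport law for the radial EPDiff equation:
if `ω` solves `ω_t + uω_r + 2u_rω + ((n−1)/r)uω = 0` and `γ` is the Lagrangian flow of `u`,
then `γ^{n−1}·γ_r²·ω(t,γ) = r^{n−1}·ω(0,r)`. -/
theorem momentum_transport (n : ℕ) (hn : 1 ≤ n) (T : ℝ) (hT : 0 < T)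
    (u ω γ ut ur ωt ωr γr γtr : ℝ → ℝ → ℝ)
    (hucont : ContinuousOn (fun p : ℝ × ℝ => u p.1 p.2) (Ico 0 T ×ˢ Ioi 0))
    (hutcont : ContinuousOn (fun p : ℝ × ℝ => ut p.1 p.2) (Ico 0 T ×ˢ Ioi 0))
    (hurcont : ContinuousOn (fun p : ℝ × ℝ => ur p.1 p.2) (Ico 0 T ×ˢ Ioi 0))
    (hωcont : ContinuousOn (fun p : ℝ × ℝ => ω p.1 p.2) (Ico 0 T ×ˢ Ioi 0))
    (hωtcont : ContinuousOn (fun p : ℝ × ℝ => ωt p.1 p.2) (Ico 0 T ×ˢ Ioi 0))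
    (hωrcont : ContinuousOn (fun p : ℝ × ℝ => ωr p.1 p.2) (Ico 0 T ×ˢ Ioi 0))
    (hγcont : ContinuousOn (fun p : ℝ × ℝ => γ p.1 p.2) (Ico 0 T ×ˢ Ioi 0))
    (hγrcont : ContinuousOn (fun p : ℝ × ℝ => γr p.1 p.2) (Ico 0 T ×ˢ Ioi 0))
    (hγtrcont : ContinuousOn (fun p : ℝ × ℝ => γtr p.1 p.2) (Ico 0 T ×ˢ Ioi 0))
    (hut : ∀ t ∈ Ico (0:ℝ) T, ∀ r ∈ Ioi (0:ℝ),
      HasDerivWithinAt (fun τ => u τ r) (ut t r) (Ico 0 T) t)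
    (hur : ∀ t ∈ Ico (0:ℝ) T, ∀ r ∈ Ioi (0:ℝ), HasDerivAt (fun x => u t x) (ur t r) r)
    (hωt : ∀ t ∈ Ico (0:ℝ) T, ∀ r ∈ Ioi (0:ℝ),
      HasDerivWithinAt (fun τ => ω τ r) (ωt t r) (Ico 0 T) t)
    (hωr : ∀ t ∈ Ico (0:ℝ) T, ∀ r ∈ Ioi (0:ℝ), HasDerivAt (fun x => ω t x) (ωr t r) r)
    (hpde : ∀ t ∈ Ico (0:ℝ) T, ∀ r ∈ Ioi (0:ℝ),
      ωt t r + u t r * ωr t r + 2 * ur t r * ω t r + ((n:ℝ) - 1) / r * u t r * ω t r = 0)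
    (hγpos : ∀ t ∈ Ico (0:ℝ) T, ∀ r ∈ Ioi (0:ℝ), 0 < γ t r)
    (hγ0 : ∀ r ∈ Ioi (0:ℝ), γ 0 r = r)
    (hγr0 : ∀ r ∈ Ioi (0:ℝ), γr 0 r = 1)
    (hγt : ∀ t ∈ Ico (0:ℝ) T, ∀ r ∈ Ioi (0:ℝ),
      HasDerivWithinAt (fun τ => γ τ r) (u t (γ t r)) (Ico 0 T) t)
    (hγr : ∀ t ∈ Ico (0:ℝ) T, ∀ r ∈ Ioi (0:ℝ), HasDerivAt (fun x => γ t x) (γr t r) r)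
    (hγtr : ∀ t ∈ Ico (0:ℝ) T, ∀ r ∈ Ioi (0:ℝ),
      HasDerivWithinAt (fun τ => γr τ r) (γtr t r) (Ico 0 T) t) :
    ∀ t ∈ Ico (0:ℝ) T, ∀ r ∈ Ioi (0:ℝ),
      γ t r ^ (n - 1) * γr t r ^ 2 * ω t (γ t r) = r ^ (n - 1) * ω 0 r := by
  -- interior membership helpers
  have hIoosub : Ioo (0:ℝ) T ⊆ Ico 0 T := Ioo_subset_Ico_self
  have hnhds : ∀ {t : ℝ}, t ∈ Ioo (0:ℝ) T → Ico (0:ℝ) T ∈ 𝓝 t := fun ht =>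
    mem_of_superset (isOpen_Ioo.mem_nhds ht) hIoosub
  -- upgraded derivatives at interior times
  have hγt' : ∀ t ∈ Ioo (0:ℝ) T, ∀ x ∈ Ioi (0:ℝ),
      HasDerivAt (fun τ => γ τ x) (u t (γ t x)) t := fun t ht x hx =>
    (hγt t (hIoosub ht) x hx).hasDerivAt (hnhds ht)
  have hγtr' : ∀ t ∈ Ioo (0:ℝ) T, ∀ x ∈ Ioi (0:ℝ),
      HasDerivAt (fun τ => γr τ x) (γtr t x) t := fun t ht x hx =>
    (hγtr t (hIoosub ht) x hx).hasDerivAt (hnhds ht)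
  have hωt' : ∀ t ∈ Ioo (0:ℝ) T, ∀ x ∈ Ioi (0:ℝ),
      HasDerivAt (fun τ => ω τ x) (ωt t x) t := fun t ht x hx =>
    (hωt t (hIoosub ht) x hx).hasDerivAt (hnhds ht)
  -- continuity of slices in space
  have hslice : ∀ (f : ℝ → ℝ → ℝ), ContinuousOn (fun p : ℝ × ℝ => f p.1 p.2) (Ico 0 T ×ˢ Ioi 0) →
      ∀ t ∈ Ico (0:ℝ) T, ContinuousOn (fun y => f t y) (Ioi 0) := by
    intro f hf t ht
    exact hf.comp ((continuous_const.prodMk continuous_id).continuousOn)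
      (fun y hy => ⟨ht, hy⟩)
  -- continuity of slices in time
  have htslice : ∀ (f : ℝ → ℝ → ℝ), ContinuousOn (fun p : ℝ × ℝ => f p.1 p.2) (Ico 0 T ×ˢ Ioi 0) →
      ∀ x ∈ Ioi (0:ℝ), ContinuousOn (fun τ => f τ x) (Ico 0 T) := by
    intro f hf x hx
    exact hf.comp ((continuous_id.prodMk continuous_const).continuousOn)
      (fun τ hτ => ⟨hτ, hx⟩)
  have huIcc : ∀ {a b : ℝ}, a ∈ Ioi (0:ℝ) → b ∈ Ioi (0:ℝ) → uIcc a b ⊆ Ioi (0:ℝ) := by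
    intro a b ha hb y hy
    have := hy.1
    have h : min a b ≤ y := this
    have : (0:ℝ) < min a b := lt_min ha hb
    exact lt_of_lt_of_le this h
  -- Step B : FTC in space for γ
  have hBγ : ∀ t ∈ Ico (0:ℝ) T, ∀ a ∈ Ioi (0:ℝ), ∀ b ∈ Ioi (0:ℝ),
      ∫ y in a..b, γr t y = γ t b - γ t a := by
    intro t ht a ha b hb
    refine intervalIntegral.integral_eq_sub_of_hasDerivAt (fun y hy => hγr t ht y (huIcc ha hb hy)) ?_
    exact ((hslice γr hγrcont t ht).mono (huIcc ha hb)).intervalIntegrable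
  -- Step C : differentiation under the integral sign
  have hkey : ∀ t ∈ Ioo (0:ℝ) T, ∀ a ∈ Ioi (0:ℝ), ∀ b ∈ Ioi (0:ℝ),
      HasDerivAt (fun τ => ∫ y in a..b, γr τ y) (∫ y in a..b, γtr t y) t := by
    intro t ht a ha b hb
    obtain ⟨ε, εpos, hball⟩ : ∃ ε > 0, Metric.closedBall t ε ⊆ Ioo 0 T := by
      obtain ⟨ε, εpos, h⟩ := (Metric.nhds_basis_closedBall.mem_iff).1 (isOpen_Ioo.mem_nhds ht)
      exact ⟨ε, εpos, h⟩
    have hKc : IsCompact (Metric.closedBall t ε ×ˢ uIcc a b) :=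
      (isCompact_closedBall _ _).prod isCompact_uIcc
    have hKsub : Metric.closedBall t ε ×ˢ uIcc a b ⊆ Ico 0 T ×ˢ Ioi 0 := by
      intro q hq
      exact ⟨hIoosub (hball hq.1), huIcc ha hb hq.2⟩
    obtain ⟨C, hC⟩ := hKc.exists_bound_of_continuousOn (hγtrcont.mono hKsub)
    have hmeasτ : ∀ τ ∈ Ico (0:ℝ) T,
        AEStronglyMeasurable (fun y => γr τ y) (volume.restrict (Set.uIoc a b)) := by
      intro τ hτ
      refine ContinuousOn.aestronglyMeasurable ?_ measurableSet_uIoc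
      exact (hslice γr hγrcont τ hτ).mono ((Set.uIoc_subset_uIcc ..).trans (huIcc ha hb))
    refine (intervalIntegral.hasDerivAt_integral_of_dominated_loc_of_deriv_le
      (F := fun τ y => γr τ y) (F' := fun τ y => γtr τ y) (bound := fun _ => C)
      (Metric.ball_mem_nhds t εpos) ?_ ?_ ?_ ?_ ?_ ?_).2
    · filter_upwards [hnhds ht] with τ hτ using hmeasτ τ hτ
    · exact ((hslice γr hγrcont t (hIoosub ht)).mono (huIcc ha hb)).intervalIntegrable
    · refine ContinuousOn.aestronglyMeasurable ?_ measurableSet_uIoc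
      exact (hslice γtr hγtrcont t (hIoosub ht)).mono
        ((Set.uIoc_subset_uIcc ..).trans (huIcc ha hb))
    · refine Filter.Eventually.of_forall (fun y hy τ hτ => ?_)
      exact hC (τ, y) ⟨Metric.ball_subset_closedBall hτ, (Set.uIoc_subset_uIcc ..) hy⟩
    · exact intervalIntegrable_const
    · refine Filter.Eventually.of_forall (fun y hy τ hτ => ?_)
      exact hγtr' τ (hball (Metric.ball_subset_closedBall hτ)) y
        (huIcc ha hb ((Set.uIoc_subset_uIcc ..) hy))
  -- Step D : u t (γ t b) - u t (γ t a) = ∫ γtr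
  have hD : ∀ t ∈ Ioo (0:ℝ) T, ∀ a ∈ Ioi (0:ℝ), ∀ b ∈ Ioi (0:ℝ),
      u t (γ t b) - u t (γ t a) = ∫ y in a..b, γtr t y := by
    intro t ht a ha b hb
    have h1 : HasDerivAt (fun τ => γ τ b - γ τ a) (u t (γ t b) - u t (γ t a)) t :=
      (hγt' t ht b hb).sub (hγt' t ht a ha)
    have h2 : HasDerivAt (fun τ => γ τ b - γ τ a) (∫ y in a..b, γtr t y) t := by
      refine (hkey t ht a ha b hb).congr_of_eventuallyEq ?_
      filter_upwards [hnhds ht] with τ hτ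
      exact (hBγ τ hτ a ha b hb).symm
    exact h1.unique h2
  -- Step E : mixed partial identity
  have hmix : ∀ t ∈ Ioo (0:ℝ) T, ∀ x ∈ Ioi (0:ℝ), γtr t x = ur t (γ t x) * γr t x := by
    intro t ht x hx
    have hγtx : γ t x ∈ Ioi (0:ℝ) := hγpos t (hIoosub ht) x hx
    have hL : HasDerivAt (fun z => u t (γ t z)) (ur t (γ t x) * γr t x) x :=
      (hur t (hIoosub ht) (γ t x) hγtx).comp x (hγr t (hIoosub ht) x hx)
    have hFTC : HasDerivAt (fun z => ∫ y in x..z, γtr t y) (γtr t x) x := by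
      refine intervalIntegral.integral_hasDerivAt_right
        (ContinuousOn.intervalIntegrable (by simpa using
          ((hslice γtr hγtrcont t (hIoosub ht)).mono (huIcc hx hx)))) ?_ ?_
      · exact (ContinuousOn.stronglyMeasurableAtFilter isOpen_Ioi
          (hslice γtr hγtrcont t (hIoosub ht)) x hx)
      · exact (hslice γtr hγtrcont t (hIoosub ht)).continuousAt (isOpen_Ioi.mem_nhds hx)
    have hR : HasDerivAt (fun z => u t (γ t x) + ∫ y in x..z, γtr t y) (γtr t x) x :=
      hFTC.const_add _
    have hEq : (fun z => u t (γ t z)) =ᶠ[𝓝 x]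
        fun z => u t (γ t x) + ∫ y in x..z, γtr t y := by
      filter_upwards [isOpen_Ioi.mem_nhds hx] with z hz
      have := hD t ht x hx z hz
      linarith [this]
    exact (hR.congr_of_eventuallyEq hEq).unique hL
  -- Step F : derivative of ω along the flow
  have hωcomp : ∀ t ∈ Ioo (0:ℝ) T, ∀ r ∈ Ioi (0:ℝ),
      HasDerivAt (fun τ => ω τ (γ τ r))
        (ωt t (γ t r) + ωr t (γ t r) * u t (γ t r)) t := by
    intro t ht r hr
    have hx : γ t r ∈ Ioi (0:ℝ) := hγpos t (hIoosub ht) r hr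
    have hF : HasFDerivAt (fun q : ℝ × ℝ => ω q.1 q.2)
        (ωt t (γ t r) • (ContinuousLinearMap.fst ℝ ℝ ℝ) +
         ωr t (γ t r) • (ContinuousLinearMap.snd ℝ ℝ ℝ)) (t, γ t r) := by
      have a1 : (Ioo 0 T ×ˢ Ioi 0 : Set (ℝ × ℝ)) ∈ 𝓝 ((t, γ t r) : ℝ × ℝ) :=
        (isOpen_Ioo.prod isOpen_Ioi).mem_nhds ⟨ht, hx⟩
      have a2 : HasDerivAt (fun τ => ω τ ((t, γ t r) : ℝ × ℝ).2) (ωt t (γ t r)) ((t, γ t r) : ℝ × ℝ).1 :=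
        hωt' t ht (γ t r) hx
      have a3 : ∀ q ∈ (Ioo 0 T ×ˢ Ioi 0 : Set (ℝ × ℝ)), HasDerivAt (fun y => ω q.1 y) (ωr q.1 q.2) q.2 :=
        fun q hq => hωr q.1 (hIoosub hq.1) q.2 hq.2
      have a4 : ContinuousAt (fun q : ℝ × ℝ => ωr q.1 q.2) ((t, γ t r) : ℝ × ℝ) :=
        hωrcont.continuousAt (prod_mem_nhds (hnhds ht) (isOpen_Ioi.mem_nhds hx))
      exact aux_hasFDerivAt_of_partials a1 a2 a3 a4
    have hcurve : HasDerivAt (fun τ => ((τ, γ τ r) : ℝ × ℝ)) ((1:ℝ), u t (γ t r)) t :=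
      (hasDerivAt_id t).prodMk (hγt' t ht r hr)
    have hcomp := hF.comp_hasDerivAt t hcurve
    convert hcomp using 1
    case e'_4 => rfl
    case e'_5 => rfl
    case e'_8 => rfl
    simp [ContinuousLinearMap.add_apply, ContinuousLinearMap.smul_apply]
  -- Main argument
  intro t ht r hr
  rcases eq_or_lt_of_le ht.1 with h0 | h0
  · rw [← h0, hγ0 r hr, hγr0 r hr]; ring
  · have hIccsub : Icc (0:ℝ) t ⊆ Ico 0 T := fun τ hτ => ⟨hτ.1, lt_of_le_of_lt hτ.2 ht.2⟩
    have hγs : ContinuousOn (fun τ => γ τ r) (Icc 0 t) := (htslice γ hγcont r hr).mono hIccsub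
    have hγrs : ContinuousOn (fun τ => γr τ r) (Icc 0 t) := (htslice γr hγrcont r hr).mono hIccsub
    have hωs : ContinuousOn (fun τ => ω τ (γ τ r)) (Icc 0 t) := by
      refine hωcont.comp (continuousOn_id.prodMk hγs) (fun τ hτ => ?_)
      exact ⟨hIccsub hτ, hγpos τ (hIccsub hτ) r hr⟩
    have hcontF : ContinuousOn (fun τ => γ τ r ^ (n - 1) * γr τ r ^ 2 * ω τ (γ τ r)) (Icc 0 t) :=
      ((hγs.pow _).mul (hγrs.pow _)).mul hωs
    have hderiv : ∀ τ ∈ Ioo (0:ℝ) t,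
        HasDerivAt (fun σ => γ σ r ^ (n - 1) * γr σ r ^ 2 * ω σ (γ σ r)) 0 τ := by
      intro τ hτ
      have hτT : τ ∈ Ioo (0:ℝ) T := ⟨hτ.1, hτ.2.trans ht.2⟩
      have hc : γ τ r ∈ Ioi (0:ℝ) := hγpos τ (hIoosub hτT) r hr
      have hcne : γ τ r ≠ 0 := ne_of_gt hc
      have h1 : HasDerivAt (fun σ => γ σ r ^ (n - 1))
          (↑(n - 1) * γ τ r ^ (n - 1 - 1) * u τ (γ τ r)) τ := (hγt' τ hτT r hr).pow _
      have h2 : HasDerivAt (fun σ => γr σ r ^ 2)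
          (↑2 * γr τ r ^ (2 - 1) * γtr τ r) τ := (hγtr' τ hτT r hr).pow 2
      have h3 := hωcomp τ hτT r hr
      have hmul := (h1.mul h2).mul h3
      convert hmul using 1
      case e'_4 => rfl
      case e'_5 => rfl
      case e'_8 => rfl
      have hm := hmix τ hτT r hr
      have hp := hpde τ (hIoosub hτT) (γ τ r) hc
      have hcast : ((n - 1 : ℕ) : ℝ) = (n : ℝ) - 1 := by
        push_cast [Nat.cast_sub hn]; ring
      rw [hm, hcast]
      rcases eq_or_lt_of_le hn with h1' | h2'
      · have hn1 : n = 1 := h1'.symm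
        subst hn1
        norm_num at hp ⊢
        linear_combination (-(γr τ r ^ 2)) * hp
      · have hpow : γ τ r ^ (n - 1) = γ τ r ^ (n - 1 - 1) * γ τ r := by
          rw [← pow_succ]; congr 1; omega
        have hWt : ωt τ (γ τ r) = -(u τ (γ τ r) * ωr τ (γ τ r)) - 2 * ur τ (γ τ r) * ω τ (γ τ r)
            - ((n:ℝ) - 1) / γ τ r * u τ (γ τ r) * ω τ (γ τ r) := by linarith
        simp only [Pi.mul_apply]
        rw [hWt, hpow]
        field_simp
        ring
    have hzero := intervalIntegral.integral_eq_sub_of_hasDeriv_right_of_le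
      (f := fun τ => γ τ r ^ (n - 1) * γr τ r ^ 2 * ω τ (γ τ r)) (f' := fun _ => (0:ℝ))
      h0.le hcontF (fun τ hτ => (hderiv τ hτ).hasDerivWithinAt) intervalIntegrable_const
    simp only [intervalIntegral.integral_zero] at hzero
    have hFt : γ t r ^ (n - 1) * γr t r ^ 2 * ω t (γ t r)
        = γ 0 r ^ (n - 1) * γr 0 r ^ 2 * ω 0 (γ 0 r) := by linarith [hzero]
    rw [hFt, hγ0 r hr, hγr0 r hr]; ring
end

section
/- Let n ≥ 1 be an integer and let ω0 : [0,∞) → ℝ be continuous with ∫_0^∞ |ω0(s)| ds < ∞; set z0(s) = s^{n−1} ω0(s). Let T* ∈ (0,∞] and let γ, ρ : [0,T*) × [0,∞) → ℝ satisfy: ρ(t,·) is continuous, for every T' < T* there exist 0 < a ≤ b with a ≤ ρ(t,r) ≤ b for all t ∈ [0,T'] and r ≥ 0, γ(t,r) = ∫_0^r ρ(t,s) ds, γ(0,r) = r, ρ(0,r) = 1, t ↦ ρ(t,·) is differentiable into the bounded continuous functions with supremum norm, and for all t ∈ [0,T*) and r > 0: ∂_t γ(t,r) = (γ(t,r)^{1−n}/n)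 ∫_0^r γ(t,s) z0(s)/ρ(t,s) ds + (γ(t,r)/n) ∫_r^∞ γ(t,s)^{1−n} z0(s)/ρ(t,s) ds, and ∂_t ρ(t,r) = ((1−n)/n) γ(t,r)^{−n} ρ(t,r) ∫_0^r γ(t,s) z0(s)/ρ(t,s) ds + (ρ(t,r)/n) ∫_r^∞ γ(t,s)^{1−n} z0(s)/ρ(t,s) ds. Then for all t ∈ [0,T*) and r > 0: γ(t,r)^{n−1} ρ(t,r) = r^{n−1} (1 + (t/2) ∫_r^∞ ω0(s) ds)². In particular, if ∫_{r₀}^∞ ω0(s) ds < 0 for some r₀ > 0, then T* ≤ −2/∫_{r₀}^∞ ω0(s) ds. -/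
open MeasureTheory Set
open scoped ENNReal

section Aux
open Filter
open scoped Topology

lemma slope_dom_deriv {F G : ℝ → ℝ → ℝ} {μ : Measure ℝ} {S : Set ℝ} {t : ℝ}
    {bound : ℝ → ℝ}
    (hS : Convex ℝ S) (ht : t ∈ S)
    (hFmeas : ∀ τ ∈ S, AEStronglyMeasurable (F τ) μ)
    (hint : Integrable (F t) μ)
    (hbound : Integrable bound μ)
    (hb : ∀ᵐ s ∂μ, ∀ τ ∈ S, ‖G τ s‖ ≤ bound s)
    (hderiv : ∀ᵐ s ∂μ, ∀ τ ∈ S, HasDerivWithinAt (fun u => F u s) (G τ s) S τ) :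
    HasDerivWithinAt (fun τ => ∫ s, F τ s ∂μ) (∫ s, G t s ∂μ) S t := by
  have hlip : ∀ᵐ s ∂μ, ∀ τ ∈ S, ‖F τ s - F t s‖ ≤ bound s * ‖τ - t‖ := by
    filter_upwards [hb, hderiv] with s hbs hds τ hτ
    exact hS.norm_image_sub_le_of_norm_hasDerivWithin_le (f' := fun u => G u s)
      (fun x hx => hds x hx) (fun x hx => hbs x hx) ht hτ
  have hFint : ∀ τ ∈ S, Integrable (F τ) μ := by
    intro τ hτ
    refine Integrable.mono' (g := fun s => ‖F t s‖ + bound s * ‖τ - t‖)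
      (hint.norm.add (hbound.mul_const _)) (hFmeas τ hτ) ?_
    filter_upwards [hlip] with s h
    calc ‖F τ s‖ = ‖F t s + (F τ s - F t s)‖ := by ring_nf
      _ ≤ ‖F t s‖ + ‖F τ s - F t s‖ := norm_add_le _ _
      _ ≤ ‖F t s‖ + bound s * ‖τ - t‖ := by linarith [h τ hτ]
  rw [hasDerivWithinAt_iff_tendsto_slope]
  have hlim : ∀ᵐ s ∂μ, Tendsto (fun τ => slope (fun u => F u s) t τ)
      (𝓝[S \ {t}] t) (𝓝 (G t s)) := by
    filter_upwards [hderiv] with s hds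
    exact hasDerivWithinAt_iff_tendsto_slope.1 (hds t ht)
  have key := tendsto_integral_filter_of_dominated_convergence (μ := μ)
    (F := fun τ s => slope (fun u => F u s) t τ) (f := G t) bound ?_ ?_ hbound hlim
  · refine key.congr' ?_
    filter_upwards [self_mem_nhdsWithin] with τ hτ
    have hτS : τ ∈ S := hτ.1
    calc (∫ s, slope (fun u => F u s) t τ ∂μ)
        = (∫ s, (F τ s - F t s) ∂μ) / (τ - t) := by
          simp only [slope_def_field]; rw [integral_div]
      _ = slope (fun τ' => ∫ s, F τ' s ∂μ) t τ := by
          rw [integral_sub (hFint τ hτS) hint, slope_def_field]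
  · filter_upwards [self_mem_nhdsWithin] with τ hτ
    refine AEStronglyMeasurable.congr
      (((hFmeas τ hτ.1).sub (hFmeas t ht)).mul_const (τ - t)⁻¹) ?_
    filter_upwards with s
    simp [slope_def_field, div_eq_mul_inv]
  · filter_upwards [self_mem_nhdsWithin] with τ hτ
    have hτne : τ ≠ t := by simpa using hτ.2
    filter_upwards [hlip] with s h
    rw [slope_def_field, div_eq_mul_inv, norm_mul, norm_inv]
    calc ‖F τ s - F t s‖ * ‖τ - t‖⁻¹ ≤ (bound s * ‖τ - t‖) * ‖τ - t‖⁻¹ := by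
          gcongr; exact h τ hτ.1
      _ = bound s := by
          have h0 : ‖τ - t‖ ≠ 0 := by simpa [sub_eq_zero] using hτne
          rw [mul_assoc, mul_inv_cancel₀ h0, mul_one]

lemma zpow_one_sub_aux (n : ℕ) (hn : 1 ≤ n) (x : ℝ) :
    x ^ ((1:ℤ) - (n:ℤ)) = (x ^ (n-1))⁻¹ := by
  have h : (1:ℤ) - (n:ℤ) = -((n-1 : ℕ) : ℤ) := by omega
  rw [h, zpow_neg, zpow_natCast]

lemma zpow_neg_nat_aux (n : ℕ) (x : ℝ) : x ^ (-(n:ℤ)) = (x ^ n)⁻¹ := by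
  rw [zpow_neg, zpow_natCast]

lemma const_of_derivWithin_zero {f : ℝ → ℝ} {S : Set ℝ} (hS : Convex ℝ S)
    (h : ∀ x ∈ S, HasDerivWithinAt f 0 S x) {a b : ℝ} (ha : a ∈ S) (hb : b ∈ S) :
    f b = f a := by
  have h1 := hS.norm_image_sub_le_of_norm_hasDerivWithin_le (f' := fun _ => (0:ℝ))
    h (fun x _ => norm_zero.le) ha hb
  have h0 : ‖f b - f a‖ ≤ 0 := by simpa using h1
  have h2 : ‖f b - f a‖ = 0 := le_antisymm h0 (norm_nonneg _)
  rwa [norm_eq_zero, sub_eq_zero] at h2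

lemma primitive_contOn {f : ℝ → ℝ} (hf : ∀ b : ℝ, IntegrableOn f (Icc 0 b)) :
    ContinuousOn (fun x => ∫ t in Ioc (0:ℝ) x, f t) (Ici 0) := by
  intro s hs
  have h1 : ContinuousOn (fun x => ∫ t in Ioc (0:ℝ) x, f t) (Icc 0 (s+1)) :=
    intervalIntegral.continuousOn_primitive (hf (s+1))
  have hs' : s ∈ Icc (0:ℝ) (s+1) := ⟨hs, by linarith⟩
  refine (h1 s hs').mono_of_mem_nhdsWithin ?_
  rw [show Icc (0:ℝ) (s+1) = Ici 0 ∩ Iic (s+1) from (Ici_inter_Iic).symm]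
  exact inter_mem_nhdsWithin _ (Iic_mem_nhds (by linarith))

end Aux
set_option maxHeartbeats 1000000 in
/-- explicit solution of the radial Hunter–Saxton equation in Lagrangian
coordinates: `γ^{n−1}ρ = r^{n−1}(1 + (t/2)∫_r^∞ ω₀)²`, with the resulting bound on the
maximal existence time `T* ∈ (0,∞]` (encoded as `Tstar : ℝ≥0∞`, membership `t ∈ [0,T*)`
encoded by `0 ≤ t ∧ ENNReal.ofReal t < Tstar`). -/
theorem radial_hunter_saxton_explicit (n : ℕ) (hn : 1 ≤ n)
    (ω0 : ℝ → ℝ) (hω0c : ContinuousOn ω0 (Ici 0))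
    (hω0int : IntegrableOn (fun s => |ω0 s|) (Ioi 0))
    (z0 : ℝ → ℝ) (hz0 : ∀ s : ℝ, z0 s = s ^ (n - 1) * ω0 s)
    (Tstar : ℝ≥0∞) (hTpos : 0 < Tstar)
    (γ ρ : ℝ → ℝ → ℝ)
    (hρcont : ∀ t : ℝ, 0 ≤ t → ENNReal.ofReal t < Tstar → ContinuousOn (ρ t) (Ici 0))
    (hbounds : ∀ T' : ℝ, 0 ≤ T' → ENNReal.ofReal T' < Tstar →
      ∃ a b : ℝ, 0 < a ∧ a ≤ b ∧
        ∀ t ∈ Icc (0:ℝ) T', ∀ r : ℝ, 0 ≤ r → a ≤ ρ t r ∧ ρ t r ≤ b)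
    (hγint : ∀ t : ℝ, 0 ≤ t → ENNReal.ofReal t < Tstar → ∀ r : ℝ, 0 ≤ r →
      γ t r = ∫ s in Ioc (0:ℝ) r, ρ t s)
    (hγ0 : ∀ r : ℝ, 0 ≤ r → γ 0 r = r)
    (hρ0 : ∀ r : ℝ, 0 ≤ r → ρ 0 r = 1)
    (P : ℝ → BoundedContinuousFunction {r : ℝ // 0 ≤ r} ℝ)
    (hP : ∀ t : ℝ, 0 ≤ t → ENNReal.ofReal t < Tstar →
      ∀ x : {r : ℝ // 0 ≤ r}, P t x = ρ t x.1)
    (hPdiff : ∀ t : ℝ, 0 ≤ t → ENNReal.ofReal t < Tstar →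
      DifferentiableWithinAt ℝ P {τ : ℝ | 0 ≤ τ ∧ ENNReal.ofReal τ < Tstar} t)
    (hγeq : ∀ t : ℝ, 0 ≤ t → ENNReal.ofReal t < Tstar → ∀ r : ℝ, 0 < r →
      HasDerivWithinAt (fun τ => γ τ r)
        ((γ t r ^ ((1:ℤ) - (n:ℤ)) / n) * (∫ s in Ioc (0:ℝ) r, γ t s * z0 s / ρ t s) +
          (γ t r / n) * ∫ s in Ioi r, γ t s ^ ((1:ℤ) - (n:ℤ)) * z0 s / ρ t s)
        {τ : ℝ | 0 ≤ τ ∧ ENNReal.ofReal τ < Tstar} t)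
    (hρeq : ∀ t : ℝ, 0 ≤ t → ENNReal.ofReal t < Tstar → ∀ r : ℝ, 0 < r →
      HasDerivWithinAt (fun τ => ρ τ r)
        (((1 - (n:ℝ)) / n) * γ t r ^ (-(n:ℤ)) * ρ t r *
            (∫ s in Ioc (0:ℝ) r, γ t s * z0 s / ρ t s) +
          (ρ t r / n) * ∫ s in Ioi r, γ t s ^ ((1:ℤ) - (n:ℤ)) * z0 s / ρ t s)
        {τ : ℝ | 0 ≤ τ ∧ ENNReal.ofReal τ < Tstar} t) :
    (∀ t : ℝ, 0 ≤ t → ENNReal.ofReal t < Tstar → ∀ r : ℝ, 0 < r →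
      γ t r ^ (n - 1) * ρ t r = r ^ (n - 1) * (1 + t / 2 * ∫ s in Ioi r, ω0 s) ^ 2) ∧
    ∀ r₀ : ℝ, 0 < r₀ → (∫ s in Ioi r₀, ω0 s) < 0 →
      Tstar ≤ ENNReal.ofReal (-2 / ∫ s in Ioi r₀, ω0 s) := by
  set S : Set ℝ := {τ : ℝ | 0 ≤ τ ∧ ENNReal.ofReal τ < Tstar} with hSdef
  have hS0 : (0:ℝ) ∈ S := ⟨le_refl 0, by simpa using hTpos⟩
  have hmem : ∀ {x T' : ℝ}, T' ∈ S → x ∈ Icc (0:ℝ) T' → x ∈ S := by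
    rintro x T' ⟨_, hT2⟩ ⟨hx0, hx1⟩
    exact ⟨hx0, lt_of_le_of_lt (ENNReal.ofReal_le_ofReal hx1) hT2⟩
  have hSconv : Convex ℝ S :=
    Set.OrdConnected.convex ⟨fun x hx y hy z hz => hmem hy ⟨le_trans hx.1 hz.1, hz.2⟩⟩
  have hnext : ∀ t ∈ S, ∃ T', T' ∈ S ∧ t < T' := by
    intro t ht
    rcases eq_or_ne Tstar ⊤ with hT | hT
    · exact ⟨t+1, ⟨by linarith [ht.1], by simp [hT]⟩, by linarith⟩
    · have h1 : t < Tstar.toReal := (ENNReal.ofReal_lt_iff_lt_toReal ht.1 hT).1 ht.2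
      refine ⟨(t + Tstar.toReal)/2, ⟨by linarith [ht.1], ?_⟩, by linarith⟩
      rw [ENNReal.ofReal_lt_iff_lt_toReal (by linarith [ht.1]) hT]
      linarith
  have hz0c : ContinuousOn z0 (Ici 0) := by
    refine ContinuousOn.congr ((continuous_pow (n-1)).continuousOn.mul hω0c) ?_
    intro s _; exact hz0 s
  have hρint : ∀ t ∈ S, ∀ b : ℝ, IntegrableOn (ρ t) (Icc 0 b) := by
    intro t ht b
    exact ((hρcont t ht.1 ht.2).mono (Icc_subset_Ici_self)).integrableOn_Icc
  have hρpos : ∀ t ∈ S, ∀ s : ℝ, 0 ≤ s → 0 < ρ t s := by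
    intro t ht s hs
    obtain ⟨a, b, ha, _, hb⟩ := hbounds t ht.1 ht.2
    exact lt_of_lt_of_le ha (hb t ⟨ht.1, le_refl t⟩ s hs).1
  have hγlow : ∀ T' ∈ S, ∃ a : ℝ, 0 < a ∧
      ∀ t ∈ Icc (0:ℝ) T', ∀ s : ℝ, 0 ≤ s → (a ≤ ρ t s ∧ a * s ≤ γ t s) := by
    intro T' hT'
    obtain ⟨a, b, ha, _, hb⟩ := hbounds T' hT'.1 hT'.2
    refine ⟨a, ha, fun t htI s hs => ⟨(hb t htI s hs).1, ?_⟩⟩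
    have htS : t ∈ S := hmem hT' htI
    rw [hγint t htS.1 htS.2 s hs]
    have h1 : IntegrableOn (ρ t) (Ioc 0 s) := (hρint t htS s).mono_set Ioc_subset_Icc_self
    have h2 : ∫ _u in Ioc (0:ℝ) s, a ≤ ∫ u in Ioc (0:ℝ) s, ρ t u := by
      refine setIntegral_mono_on (integrableOn_const ?_) h1 measurableSet_Ioc ?_
      · rw [Real.volume_Ioc]; exact ENNReal.ofReal_ne_top
      · intro x hx; exact (hb t htI x (le_of_lt hx.1)).1
    calc a * s = ∫ _u in Ioc (0:ℝ) s, a := by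
          rw [setIntegral_const, measureReal_def, Real.volume_Ioc, sub_zero, ENNReal.toReal_ofReal hs,
            smul_eq_mul, mul_comm]
      _ ≤ _ := h2
  have hγpos : ∀ t ∈ S, ∀ s : ℝ, 0 < s → 0 < γ t s := by
    intro t ht s hs
    obtain ⟨a, ha, hb⟩ := hγlow t ht
    calc (0:ℝ) < a * s := mul_pos ha hs
      _ ≤ γ t s := (hb t ⟨ht.1, le_refl t⟩ s hs.le).2
  have hγcont : ∀ t ∈ S, ContinuousOn (γ t) (Ici 0) := by
    intro t ht
    refine ContinuousOn.congr (primitive_contOn (hρint t ht)) ?_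
    intro s hs; exact hγint t ht.1 ht.2 s hs
  -- continuity of the integrand F t on (0, ∞)
  have hFcont : ∀ t ∈ S,
      ContinuousOn (fun s => γ t s ^ ((1:ℤ) - (n:ℤ)) * z0 s / ρ t s) (Ioi 0) := by
    intro t ht
    have hγc := (hγcont t ht).mono Ioi_subset_Ici_self
    have hρc := (hρcont t ht.1 ht.2).mono Ioi_subset_Ici_self
    have hzc := hz0c.mono Ioi_subset_Ici_self
    refine ContinuousOn.div ?_ hρc (fun s hs => ne_of_gt (hρpos t ht s (le_of_lt hs)))
    exact (hγc.zpow₀ _ (fun s hs => Or.inl (ne_of_gt (hγpos t ht s hs)))).mul hzc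
  -- pointwise bound on F
  have hFbd : ∀ T' ∈ S, ∃ K : ℝ, 0 < K ∧ ∀ t ∈ Icc (0:ℝ) T', ∀ s : ℝ, 0 < s →
      |γ t s ^ ((1:ℤ) - (n:ℤ)) * z0 s / ρ t s| ≤ K * |ω0 s| := by
    intro T' hT'
    obtain ⟨a, ha, hb⟩ := hγlow T' hT'
    refine ⟨(a ^ (n-1) * a)⁻¹, by positivity, ?_⟩
    intro t htI s hs
    have htS : t ∈ S := hmem hT' htI
    have hg := hγpos t htS s hs
    have hp := hρpos t htS s hs.le
    have hga : a * s ≤ γ t s := (hb t htI s hs.le).2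
    have hpa : a ≤ ρ t s := (hb t htI s hs.le).1
    rw [zpow_one_sub_aux n hn, hz0 s]
    rw [abs_div, abs_mul, abs_mul, abs_inv, abs_pow, abs_pow,
      abs_of_pos hg, abs_of_pos hp, abs_of_pos hs]
    rw [inv_mul_eq_div, div_div]
    calc s ^ (n-1) * |ω0 s| / (γ t s ^ (n-1) * ρ t s)
        ≤ s ^ (n-1) * |ω0 s| / ((a*s) ^ (n-1) * a) := by
          gcongr
      _ = (a ^ (n-1) * a)⁻¹ * |ω0 s| := by
          rw [mul_pow]
          have hne : s ^ (n-1) ≠ 0 := pow_ne_zero _ (ne_of_gt hs)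
          field_simp
  -- integrability of F t on Ioi r
  have hFintOn : ∀ t ∈ S, ∀ r : ℝ, 0 ≤ r →
      IntegrableOn (fun s => γ t s ^ ((1:ℤ) - (n:ℤ)) * z0 s / ρ t s) (Ioi r) := by
    intro t ht r hr
    obtain ⟨K, hK, hKb⟩ := hFbd t ht
    have hsub : Ioi r ⊆ Ioi (0:ℝ) := Ioi_subset_Ioi hr
    refine Integrable.mono' (g := fun s => K * |ω0 s|)
      ((hω0int.mono_set hsub).const_mul K)
      (((hFcont t ht).mono hsub).aestronglyMeasurable measurableSet_Ioi) ?_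
    filter_upwards [ae_restrict_mem measurableSet_Ioi] with s hsr
    have hs0 : 0 < s := lt_of_le_of_lt hr hsr
    rw [Real.norm_eq_abs]
    exact hKb t ⟨ht.1, le_refl t⟩ s hs0
  -- bound on the tail integral B
  have hBbd : ∀ T' ∈ S, ∃ K2 : ℝ, 0 ≤ K2 ∧ ∀ t ∈ Icc (0:ℝ) T', ∀ s : ℝ, 0 < s →
      |∫ u in Ioi s, γ t u ^ ((1:ℤ) - (n:ℤ)) * z0 u / ρ t u| ≤ K2 := by
    intro T' hT'
    obtain ⟨K, hK, hKb⟩ := hFbd T' hT'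
    refine ⟨K * ∫ u in Ioi (0:ℝ), |ω0 u|, by positivity, ?_⟩
    intro t htI s hs
    have hsub : Ioi s ⊆ Ioi (0:ℝ) := Ioi_subset_Ioi hs.le
    have h1 : ‖∫ u in Ioi s, γ t u ^ ((1:ℤ) - (n:ℤ)) * z0 u / ρ t u‖
        ≤ ∫ u in Ioi s, K * |ω0 u| := by
      refine norm_integral_le_of_norm_le ((hω0int.mono_set hsub).const_mul K) ?_
      filter_upwards [ae_restrict_mem measurableSet_Ioi] with u hu
      rw [Real.norm_eq_abs]
      exact hKb t htI u (lt_trans hs hu)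
    have h2 : ∫ u in Ioi s, K * |ω0 u| ≤ ∫ u in Ioi (0:ℝ), K * |ω0 u| := by
      refine setIntegral_mono_set (hω0int.const_mul K) ?_ (HasSubset.Subset.eventuallyLE hsub)
      filter_upwards with u
      positivity
    rw [Real.norm_eq_abs] at h1
    calc |∫ u in Ioi s, γ t u ^ ((1:ℤ) - (n:ℤ)) * z0 u / ρ t u| ≤ _ := h1
      _ ≤ ∫ u in Ioi (0:ℝ), K * |ω0 u| := h2
      _ = K * ∫ u in Ioi (0:ℝ), |ω0 u| := integral_const_mul _ _
  -- splitting of tail integrals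
  have hBsplit : ∀ t ∈ S, ∀ s : ℝ, 0 ≤ s →
      (∫ u in Ioi s, γ t u ^ ((1:ℤ) - (n:ℤ)) * z0 u / ρ t u)
        = (∫ u in Ioi (0:ℝ), γ t u ^ ((1:ℤ) - (n:ℤ)) * z0 u / ρ t u)
          - ∫ u in Ioc (0:ℝ) s, γ t u ^ ((1:ℤ) - (n:ℤ)) * z0 u / ρ t u := by
    intro t ht s hs
    have hU : Ioc (0:ℝ) s ∪ Ioi s = Ioi 0 := Ioc_union_Ioi_eq_Ioi hs
    have hdisj : Disjoint (Ioc (0:ℝ) s) (Ioi s) := Ioc_disjoint_Ioi (le_refl s)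
    have h1 := setIntegral_union hdisj measurableSet_Ioi
      ((hFintOn t ht 0 le_rfl).mono_set Ioc_subset_Ioi_self)
      ((hFintOn t ht 0 le_rfl).mono_set (Ioi_subset_Ioi hs))
    rw [hU] at h1
    rw [h1]; ring
  -- continuity of s ↦ B t s on (0,∞)
  have hBcont : ∀ t ∈ S, ContinuousOn
      (fun s => ∫ u in Ioi s, γ t u ^ ((1:ℤ) - (n:ℤ)) * z0 u / ρ t u) (Ioi 0) := by
    intro t ht
    have hprim : ContinuousOn
        (fun s => ∫ u in Ioc (0:ℝ) s, γ t u ^ ((1:ℤ) - (n:ℤ)) * z0 u / ρ t u) (Ici 0) := by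
      refine primitive_contOn ?_
      intro b
      exact ((hFintOn t ht 0 le_rfl).mono_set Ioc_subset_Ioi_self).congr_set_ae
        Ioc_ae_eq_Icc.symm
    have hcc : ContinuousOn (fun s : ℝ =>
        (∫ u in Ioi (0:ℝ), γ t u ^ ((1:ℤ) - (n:ℤ)) * z0 u / ρ t u)
          - ∫ u in Ioc (0:ℝ) s, γ t u ^ ((1:ℤ) - (n:ℤ)) * z0 u / ρ t u) (Ioi 0) :=
      (continuousOn_const.sub hprim).mono Ioi_subset_Ici_self
    refine ContinuousOn.congr hcc ?_
    intro s hs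
    exact hBsplit t ht s (le_of_lt hs)
  -- spatial derivative of B t
  have hBspat : ∀ t ∈ S, ∀ s : ℝ, 0 < s →
      HasDerivAt (fun x => ∫ u in Ioi x, γ t u ^ ((1:ℤ) - (n:ℤ)) * z0 u / ρ t u)
        (-(γ t s ^ ((1:ℤ) - (n:ℤ)) * z0 s / ρ t s)) s := by
    intro t ht s hs
    have hFTC : HasDerivAt (fun x => ∫ u in (0:ℝ)..x, γ t u ^ ((1:ℤ) - (n:ℤ)) * z0 u / ρ t u)
        (γ t s ^ ((1:ℤ) - (n:ℤ)) * z0 s / ρ t s) s := by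
      refine intervalIntegral.integral_hasDerivAt_right ?_ ?_ ?_
      · rw [intervalIntegrable_iff_integrableOn_Ioc_of_le hs.le]
        exact (hFintOn t ht 0 le_rfl).mono_set Ioc_subset_Ioi_self
      · exact (hFcont t ht).stronglyMeasurableAtFilter isOpen_Ioi s hs
      · exact (hFcont t ht).continuousAt (Ioi_mem_nhds hs)
    have h1 := (hasDerivAt_const s
      (∫ u in Ioi (0:ℝ), γ t u ^ ((1:ℤ) - (n:ℤ)) * z0 u / ρ t u)).sub hFTC
    rw [zero_sub] at h1
    refine h1.congr_of_eventuallyEq ?_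
    filter_upwards [Ioi_mem_nhds hs] with x hx
    rw [hBsplit t ht x (le_of_lt hx)]
    simp only [Pi.sub_apply]
    rw [intervalIntegral.integral_of_le (le_of_lt hx)]
  -- B t s → 0 as s → ∞
  have hBtend0 : ∀ t ∈ S, Filter.Tendsto
      (fun s => ∫ u in Ioi s, γ t u ^ ((1:ℤ) - (n:ℤ)) * z0 u / ρ t u)
      Filter.atTop (nhds 0) := by
    intro t ht
    have h1 := intervalIntegral_tendsto_integral_Ioi (0:ℝ) (hFintOn t ht 0 le_rfl)
      Filter.tendsto_id
    have h2 := (tendsto_const_nhds (x := ∫ u in Ioi (0:ℝ),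
      γ t u ^ ((1:ℤ) - (n:ℤ)) * z0 u / ρ t u) (f := Filter.atTop)).sub h1
    rw [sub_self] at h2
    refine h2.congr' ?_
    filter_upwards [Filter.Ioi_mem_atTop (0:ℝ)] with s hs
    rw [hBsplit t ht s (le_of_lt hs)]
    simp only [id_eq]
    rw [intervalIntegral.integral_of_le (le_of_lt hs)]
  -- key spatial identity: ∫_r^∞ F·B = B(r)²/2 (with sign)
  have hkey2 : ∀ t ∈ S, ∀ r : ℝ, 0 < r →
      (∫ s in Ioi r, -(γ t s ^ ((1:ℤ) - (n:ℤ)) * z0 s / ρ t s)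
          * ∫ u in Ioi s, γ t u ^ ((1:ℤ) - (n:ℤ)) * z0 u / ρ t u)
        = -((∫ s in Ioi r, γ t s ^ ((1:ℤ) - (n:ℤ)) * z0 s / ρ t s)
            * ∫ s in Ioi r, γ t s ^ ((1:ℤ) - (n:ℤ)) * z0 s / ρ t s) / 2 := by
    intro t ht r hr
    obtain ⟨K, hK, hKb⟩ := hFbd t ht
    obtain ⟨K2, hK2, hK2b⟩ := hBbd t ht
    have hFGint : IntegrableOn (fun s => -(γ t s ^ ((1:ℤ) - (n:ℤ)) * z0 s / ρ t s)
        * ∫ u in Ioi s, γ t u ^ ((1:ℤ) - (n:ℤ)) * z0 u / ρ t u) (Ioi r) := by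
      have hsub : Ioi r ⊆ Ioi (0:ℝ) := Ioi_subset_Ioi hr.le
      refine Integrable.mono' (g := fun s => K * |ω0 s| * K2)
        (((hω0int.mono_set hsub).const_mul K).mul_const K2) ?_ ?_
      · exact ((((hFcont t ht).neg.mul (hBcont t ht)).mono hsub).aestronglyMeasurable
          measurableSet_Ioi)
      · filter_upwards [ae_restrict_mem measurableSet_Ioi] with s hsr
        have hs0 : 0 < s := lt_trans hr hsr
        rw [Real.norm_eq_abs, abs_mul, abs_neg]
        exact mul_le_mul (hKb t ⟨ht.1, le_refl t⟩ s hs0) (hK2b t ⟨ht.1, le_refl t⟩ s hs0)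
          (abs_nonneg _) (by positivity)
    have hder : ∀ s ∈ Ioi r, HasDerivAt
        (fun x => (∫ u in Ioi x, γ t u ^ ((1:ℤ) - (n:ℤ)) * z0 u / ρ t u)
          * (∫ u in Ioi x, γ t u ^ ((1:ℤ) - (n:ℤ)) * z0 u / ρ t u) / 2)
        (-(γ t s ^ ((1:ℤ) - (n:ℤ)) * z0 s / ρ t s)
          * ∫ u in Ioi s, γ t u ^ ((1:ℤ) - (n:ℤ)) * z0 u / ρ t u) s := by
      intro s hs
      have hs0 : 0 < s := lt_trans hr hs
      have h1 := ((hBspat t ht s hs0).mul (hBspat t ht s hs0)).div_const 2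
      convert h1 using 1
      · rfl
      · rfl
      · rfl
      ring
    have hcont : ContinuousWithinAt
        (fun x => (∫ u in Ioi x, γ t u ^ ((1:ℤ) - (n:ℤ)) * z0 u / ρ t u)
          * (∫ u in Ioi x, γ t u ^ ((1:ℤ) - (n:ℤ)) * z0 u / ρ t u) / 2) (Ici r) r := by
      have := ((hBcont t ht).mul (hBcont t ht)).div_const 2
      exact (this.continuousAt (Ioi_mem_nhds hr)).continuousWithinAt
    have htend : Filter.Tendsto
        (fun x => (∫ u in Ioi x, γ t u ^ ((1:ℤ) - (n:ℤ)) * z0 u / ρ t u)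
          * (∫ u in Ioi x, γ t u ^ ((1:ℤ) - (n:ℤ)) * z0 u / ρ t u) / 2)
        Filter.atTop (nhds 0) := by
      have := ((hBtend0 t ht).mul (hBtend0 t ht)).div_const 2
      simpa using this
    have := integral_Ioi_of_hasDerivAt_of_tendsto hcont hder hFGint htend
    rw [this]
    ring
  -- time derivative of the integrand F
  have hFtime : ∀ t ∈ S, ∀ s : ℝ, 0 < s →
      HasDerivWithinAt (fun τ => γ τ s ^ ((1:ℤ) - (n:ℤ)) * z0 s / ρ τ s)
        (-(γ t s ^ ((1:ℤ) - (n:ℤ)) * z0 s / ρ t s)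
          * ∫ u in Ioi s, γ t u ^ ((1:ℤ) - (n:ℤ)) * z0 u / ρ t u) S t := by
    intro t ht s hs
    have hg := hγpos t ht s hs
    have hp := hρpos t ht s hs.le
    have h1 := hγeq t ht.1 ht.2 s hs
    have h2 := hρeq t ht.1 ht.2 s hs
    have hzp := (hasDerivAt_zpow ((1:ℤ) - (n:ℤ)) (γ t s)
      (Or.inl (ne_of_gt hg))).comp_hasDerivWithinAt t h1
    have h3 := (hzp.mul_const (z0 s)).div h2 (ne_of_gt hp)
    convert h3 using 1
    · rfl
    · rfl
    · rfl
    simp only [Function.comp_apply]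
    have he1 : γ t s ^ ((1:ℤ) - (n:ℤ)) = (γ t s ^ (n-1))⁻¹ := zpow_one_sub_aux n hn _
    have he2 : γ t s ^ ((1:ℤ) - (n:ℤ) - 1) = (γ t s ^ n)⁻¹ := by
      rw [show (1:ℤ) - (n:ℤ) - 1 = -(n:ℤ) by ring, zpow_neg_nat_aux]
    have he3 : γ t s ^ (-(n:ℤ)) = (γ t s ^ n)⁻¹ := zpow_neg_nat_aux n _
    rw [he1, he2, he3]
    have hgn : γ t s ^ n = γ t s ^ (n-1) * γ t s := by
      conv_lhs => rw [show n = (n-1)+1 by omega]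
      rw [pow_succ]
    rw [hgn]
    have h4 : γ t s ^ (n-1) ≠ 0 := pow_ne_zero _ (ne_of_gt hg)
    have h5 : (n:ℝ) ≠ 0 := Nat.cast_ne_zero.2 (by omega)
    have h6 : γ t s ≠ 0 := ne_of_gt hg
    have h7 : ρ t s ≠ 0 := ne_of_gt hp
    push_cast
    field_simp
    ring
  -- time derivative of B(·, r)
  have hBtime : ∀ t ∈ S, ∀ r : ℝ, 0 < r →
      HasDerivWithinAt (fun τ => ∫ s in Ioi r, γ τ s ^ ((1:ℤ) - (n:ℤ)) * z0 s / ρ τ s)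
        (-((∫ s in Ioi r, γ t s ^ ((1:ℤ) - (n:ℤ)) * z0 s / ρ t s)
            * ∫ s in Ioi r, γ t s ^ ((1:ℤ) - (n:ℤ)) * z0 s / ρ t s) / 2) S t := by
    intro t ht r hr
    obtain ⟨T', hT', htT'⟩ := hnext t ht
    obtain ⟨K, hK, hKb⟩ := hFbd T' hT'
    obtain ⟨K2, hK2, hK2b⟩ := hBbd T' hT'
    have hS'sub : S ∩ Iio T' ⊆ S := inter_subset_left
    have hS'Icc : S ∩ Iio T' ⊆ Icc 0 T' := fun x hx => ⟨hx.1.1, le_of_lt hx.2⟩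
    have hsub : Ioi r ⊆ Ioi (0:ℝ) := Ioi_subset_Ioi hr.le
    have key := slope_dom_deriv (μ := volume.restrict (Ioi r))
      (S := S ∩ Iio T') (t := t)
      (F := fun τ s => γ τ s ^ ((1:ℤ) - (n:ℤ)) * z0 s / ρ τ s)
      (G := fun τ s => -(γ τ s ^ ((1:ℤ) - (n:ℤ)) * z0 s / ρ τ s)
        * ∫ u in Ioi s, γ τ u ^ ((1:ℤ) - (n:ℤ)) * z0 u / ρ τ u)
      (bound := fun s => K * |ω0 s| * K2)
      (hSconv.inter (convex_Iio T')) ⟨ht, htT'⟩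
      (fun τ hτ => ((hFcont τ hτ.1).mono hsub).aestronglyMeasurable measurableSet_Ioi)
      (hFintOn t ht r hr.le)
      (((hω0int.mono_set hsub).const_mul K).mul_const K2) ?_ ?_
    · have key2 : HasDerivWithinAt
          (fun τ => ∫ s in Ioi r, γ τ s ^ ((1:ℤ) - (n:ℤ)) * z0 s / ρ τ s)
          (∫ s in Ioi r, -(γ t s ^ ((1:ℤ) - (n:ℤ)) * z0 s / ρ t s)
            * ∫ u in Ioi s, γ t u ^ ((1:ℤ) - (n:ℤ)) * z0 u / ρ t u) S t :=
        (hasDerivWithinAt_inter (Iio_mem_nhds htT')).1 key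
      rwa [hkey2 t ht r hr] at key2
    · filter_upwards [ae_restrict_mem measurableSet_Ioi] with s hsr τ hτ
      have hs0 : 0 < s := lt_trans hr hsr
      rw [Real.norm_eq_abs, abs_mul, abs_neg]
      exact mul_le_mul (hKb τ (hS'Icc hτ) s hs0) (hK2b τ (hS'Icc hτ) s hs0)
        (abs_nonneg _) (by positivity)
    · filter_upwards [ae_restrict_mem measurableSet_Ioi] with s hsr τ hτ
      have hs0 : 0 < s := lt_trans hr hsr
      exact (hFtime τ hτ.1 s hs0).mono inter_subset_left
  -- time derivative of φ = γ^{n-1} ρ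
  have hφtime : ∀ t ∈ S, ∀ r : ℝ, 0 < r →
      HasDerivWithinAt (fun τ => γ τ r ^ (n-1) * ρ τ r)
        ((γ t r ^ (n-1) * ρ t r)
          * ∫ s in Ioi r, γ t s ^ ((1:ℤ) - (n:ℤ)) * z0 s / ρ t s) S t := by
    intro t ht r hr
    have hg := hγpos t ht r hr
    have hp := hρpos t ht r hr.le
    have h1 := hγeq t ht.1 ht.2 r hr
    have h2 := hρeq t ht.1 ht.2 r hr
    have h3 := (h1.pow (n-1)).mul h2
    convert h3 using 1
    · rfl
    · rfl
    · rfl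
    simp only [Pi.pow_apply]
    have he1 : γ t r ^ ((1:ℤ) - (n:ℤ)) = (γ t r ^ (n-1))⁻¹ := zpow_one_sub_aux n hn _
    have he3 : γ t r ^ (-(n:ℤ)) = (γ t r ^ n)⁻¹ := zpow_neg_nat_aux n _
    rw [he1, he3]
    obtain ⟨m, rfl⟩ : ∃ m, n = m + 1 := ⟨n - 1, by omega⟩
    simp only [Nat.add_sub_cancel]
    rcases Nat.eq_zero_or_pos m with hm | hm
    · subst hm
      simp only [pow_zero, pow_one, Nat.cast_zero, Nat.cast_one, zero_mul, one_mul]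
      push_cast
      ring
    · obtain ⟨k, rfl⟩ : ∃ k, m = k + 1 := ⟨m - 1, by omega⟩
      simp only [Nat.add_sub_cancel, pow_succ]
      have h4 : γ t r ^ k ≠ 0 := pow_ne_zero _ (ne_of_gt hg)
      have h5 : ((k:ℝ) + 1 + 1) ≠ 0 := by positivity
      have h6 : γ t r ≠ 0 := ne_of_gt hg
      have h7 : ρ t r ≠ 0 := ne_of_gt hp
      push_cast
      field_simp
      ring
  -- value of B at time 0
  have hB0 : ∀ r : ℝ, 0 < r →
      (∫ s in Ioi r, γ 0 s ^ ((1:ℤ) - (n:ℤ)) * z0 s / ρ 0 s) = ∫ s in Ioi r, ω0 s := by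
    intro r hr
    refine setIntegral_congr_fun measurableSet_Ioi ?_
    intro s hs
    have hs0 : 0 < s := lt_trans hr hs
    show γ 0 s ^ ((1:ℤ) - (n:ℤ)) * z0 s / ρ 0 s = ω0 s
    rw [hγ0 s hs0.le, hρ0 s hs0.le, hz0 s, zpow_one_sub_aux n hn, div_one,
      ← mul_assoc, inv_mul_cancel₀ (pow_ne_zero _ (ne_of_gt hs0)), one_mul]
  -- positivity of φ
  have hφpos : ∀ t ∈ S, ∀ r : ℝ, 0 < r → 0 < γ t r ^ (n-1) * ρ t r := by
    intro t ht r hr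
    exact mul_pos (pow_pos (hγpos t ht r hr) _) (hρpos t ht r hr.le)
  -- the main identity
  have main : ∀ t ∈ S, ∀ r : ℝ, 0 < r →
      γ t r ^ (n-1) * ρ t r = r ^ (n-1) * (1 + t/2 * ∫ s in Ioi r, ω0 s)^2 := by
    intro t ht r hr
    have hψd : ∀ τ ∈ S, HasDerivWithinAt (fun u => Real.sqrt (γ u r ^ (n-1) * ρ u r))
        (Real.sqrt (γ τ r ^ (n-1) * ρ τ r)
          * (∫ s in Ioi r, γ τ s ^ ((1:ℤ) - (n:ℤ)) * z0 s / ρ τ s) / 2) S τ := by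
      intro τ hτ
      have hpos := hφpos τ hτ r hr
      have h2 := (hφtime τ hτ r hr).sqrt (ne_of_gt hpos)
      convert h2 using 1
      have hsq : Real.sqrt (γ τ r ^ (n-1) * ρ τ r) ^ 2 = γ τ r ^ (n-1) * ρ τ r :=
        Real.sq_sqrt hpos.le
      have hsn : (2:ℝ) * Real.sqrt (γ τ r ^ (n-1) * ρ τ r) ≠ 0 := by
        have := Real.sqrt_pos.2 hpos; positivity
      rw [eq_div_iff hsn]
      linear_combination (∫ s in Ioi r, γ τ s ^ ((1:ℤ) - (n:ℤ)) * z0 s / ρ τ s) * hsq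
    have hχd : ∀ τ ∈ S, HasDerivWithinAt
        (fun u => Real.sqrt (γ u r ^ (n-1) * ρ u r)
          * (∫ s in Ioi r, γ u s ^ ((1:ℤ) - (n:ℤ)) * z0 s / ρ u s) / 2) 0 S τ := by
      intro τ hτ
      have h1 := ((hψd τ hτ).mul (hBtime τ hτ r hr)).div_const 2
      convert h1 using 1
      · rfl
      · rfl
      · rfl
      ring
    have hχ0 : Real.sqrt (γ 0 r ^ (n-1) * ρ 0 r)
        * (∫ s in Ioi r, γ 0 s ^ ((1:ℤ) - (n:ℤ)) * z0 s / ρ 0 s) / 2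
        = Real.sqrt (r ^ (n-1)) * (∫ s in Ioi r, ω0 s) / 2 := by
      rw [hγ0 r hr.le, hρ0 r hr.le, mul_one, hB0 r hr]
    have hχconst : ∀ τ ∈ S, Real.sqrt (γ τ r ^ (n-1) * ρ τ r)
        * (∫ s in Ioi r, γ τ s ^ ((1:ℤ) - (n:ℤ)) * z0 s / ρ τ s) / 2
        = Real.sqrt (r ^ (n-1)) * (∫ s in Ioi r, ω0 s) / 2 := by
      intro τ hτ
      exact (const_of_derivWithin_zero hSconv hχd hS0 hτ).trans hχ0
    have hηd : ∀ τ ∈ S, HasDerivWithinAt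
        (fun u => Real.sqrt (γ u r ^ (n-1) * ρ u r)
          - (Real.sqrt (r ^ (n-1)) * (∫ s in Ioi r, ω0 s) / 2) * u) 0 S τ := by
      intro τ hτ
      have h1 := (hψd τ hτ).sub
        ((hasDerivWithinAt_id τ S).const_mul
          (Real.sqrt (r ^ (n-1)) * (∫ s in Ioi r, ω0 s) / 2))
      convert h1 using 1
      · rfl
      · rfl
      · rfl
      rw [hχconst τ hτ]
      ring
    have hη : Real.sqrt (γ t r ^ (n-1) * ρ t r)
        - (Real.sqrt (r ^ (n-1)) * (∫ s in Ioi r, ω0 s) / 2) * t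
        = Real.sqrt (γ 0 r ^ (n-1) * ρ 0 r)
          - (Real.sqrt (r ^ (n-1)) * (∫ s in Ioi r, ω0 s) / 2) * 0 :=
      const_of_derivWithin_zero hSconv hηd hS0 ht
    rw [hγ0 r hr.le, hρ0 r hr.le, mul_one, mul_zero, sub_zero] at hη
    have hψt : Real.sqrt (γ t r ^ (n-1) * ρ t r)
        = Real.sqrt (r ^ (n-1)) * (1 + t/2 * ∫ s in Ioi r, ω0 s) := by
      linear_combination hη
    calc γ t r ^ (n-1) * ρ t r
        = Real.sqrt (γ t r ^ (n-1) * ρ t r) ^ 2 :=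
          (Real.sq_sqrt (hφpos t ht r hr).le).symm
      _ = Real.sqrt (r ^ (n-1)) ^ 2 * (1 + t/2 * ∫ s in Ioi r, ω0 s)^2 := by
          rw [hψt]; ring
      _ = r ^ (n-1) * (1 + t/2 * ∫ s in Ioi r, ω0 s)^2 := by
          rw [Real.sq_sqrt (pow_nonneg hr.le _)]
  refine ⟨fun t ht1 ht2 r hr => main t ⟨ht1, ht2⟩ r hr, ?_⟩
  intro r₀ hr₀ hW
  by_contra hcon
  push_neg at hcon
  have htpos : 0 < -2 / ∫ s in Ioi r₀, ω0 s := by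
    apply div_pos_of_neg_of_neg (by norm_num) hW
  have htS : (-2 / ∫ s in Ioi r₀, ω0 s) ∈ S := ⟨htpos.le, hcon⟩
  have h1 := main _ htS r₀ hr₀
  have hWne : (∫ s in Ioi r₀, ω0 s) ≠ 0 := ne_of_lt hW
  have h2 : 1 + (-2 / ∫ s in Ioi r₀, ω0 s)/2 * (∫ s in Ioi r₀, ω0 s) = 0 := by
    field_simp
    ring
  rw [h2] at h1
  have h3 := hφpos _ htS r₀ hr₀
  rw [h1] at h3
  simp at h3
end

section
/- Let φ : D → (0,∞) be smooth and satisfy ∂²/∂r∂s ln φ(r,s) ≥ 0 for all (r,s) ∈ D, and suppose there is a constant C > 0 such that S(r) := (r ∂₁φ(r,r) φ(0,r) − r φ(r,r) ∂₂φ(0,r))/φ(0,r)² ≥ C for all r > 0. Define δ(r,s) = r s φ(r,s) on D and Q(r) = 1/(r φ(0,r)) for r > 0. Then for all 0 < s ≤ r: (Q'(r)/Q(r)) δ(s,r) + ∂₂δ(s,r) ≥ 0; and for all 0 < r ≤ s: (Q'(r)/Q(r)) δ(r,s) + ∂₁δ(r,s) ≥ C/Q(s). -/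
open Set Filter Topology

/-- If `f` is monotone on `[a,b]` and has a (one-sided) derivative `D` at the right
endpoint `b` within `[a,b]`, then `D ≥ 0`. -/
private lemma endpoint_deriv_nonneg {f : ℝ → ℝ} {a b D : ℝ} (hab : a < b)
    (hmono : MonotoneOn f (Icc a b)) (hd : HasDerivWithinAt f D (Icc a b) b) : 0 ≤ D := by
  rw [hasDerivWithinAt_iff_tendsto_slope, Icc_sdiff_right] at hd
  haveI hne : (𝓝[Ico a b] b).NeBot := by
    apply mem_closure_iff_nhdsWithin_neBot.1
    rw [closure_Ico hab.ne]
    exact right_mem_Icc.2 hab.le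
  refine ge_of_tendsto hd ?_
  filter_upwards [self_mem_nhdsWithin] with x hx
  have h1 : f x ≤ f b := hmono (Ico_subset_Icc_self hx) (right_mem_Icc.2 hab.le) hx.2.le
  have h2 : x - b < 0 := sub_neg.2 hx.2
  rw [slope_def_field, ← neg_div_neg_eq]
  exact div_nonneg (by linarith) (by linarith)

/-- pointwise kernel inequalities for a positive, log-supermodular kernel
`φ` on `D = {(r,s) : 0 ≤ r ≤ s} \ {(0,0)}` satisfying `S(r) ≥ C`.  Here `φ1, φ2` are the
partial derivatives of `φ` (one-sided, within `D`), `ψ = ∂₂ log φ` and `ψ1 = ∂₁∂₂ log φ`,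
`δ(r,s) = r·s·φ(r,s)` and `Q(r) = 1/(r·φ(0,r))`. -/
theorem kernel_inequalities (C : ℝ) (hC : 0 < C)
    (φ φ1 φ2 ψ ψ1 : ℝ → ℝ → ℝ)
    (hφsmooth : ContDiffOn ℝ (⊤ : ℕ∞) (fun p : ℝ × ℝ => φ p.1 p.2)
      {p : ℝ × ℝ | 0 ≤ p.1 ∧ p.1 ≤ p.2 ∧ p ≠ (0, 0)})
    (hφpos : ∀ r s : ℝ, 0 ≤ r → r ≤ s → (r, s) ≠ ((0:ℝ), (0:ℝ)) → 0 < φ r s)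
    (hφ1 : ∀ r s : ℝ, 0 ≤ r → r ≤ s → (r, s) ≠ ((0:ℝ), (0:ℝ)) →
      HasDerivWithinAt (fun x => φ x s) (φ1 r s) (Icc 0 s) r)
    (hφ2 : ∀ r s : ℝ, 0 ≤ r → r ≤ s → (r, s) ≠ ((0:ℝ), (0:ℝ)) →
      HasDerivWithinAt (fun y => φ r y) (φ2 r s) (Ici r) s)
    (hψ : ∀ r s : ℝ, 0 ≤ r → r ≤ s → (r, s) ≠ ((0:ℝ), (0:ℝ)) →
      HasDerivWithinAt (fun y => Real.log (φ r y)) (ψ r s) (Ici r) s)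
    (hψ1 : ∀ r s : ℝ, 0 ≤ r → r ≤ s → (r, s) ≠ ((0:ℝ), (0:ℝ)) →
      HasDerivWithinAt (fun x => ψ x s) (ψ1 r s) (Icc 0 s) r)
    (hlogsuper : ∀ r s : ℝ, 0 ≤ r → r ≤ s → (r, s) ≠ ((0:ℝ), (0:ℝ)) → 0 ≤ ψ1 r s)
    (hS : ∀ r : ℝ, 0 < r →
      C ≤ (r * φ1 r r * φ 0 r - r * φ r r * φ2 0 r) / (φ 0 r) ^ 2)
    (δ : ℝ → ℝ → ℝ) (hδ : ∀ r s : ℝ, δ r s = r * s * φ r s)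
    (Q : ℝ → ℝ) (hQ : ∀ r : ℝ, 0 < r → Q r = 1 / (r * φ 0 r)) :
    (∀ r s : ℝ, 0 < s → s ≤ r →
      0 ≤ deriv Q r / Q r * δ s r + (s * φ s r + s * r * φ2 s r)) ∧
    (∀ r s : ℝ, 0 < r → r ≤ s →
      C / Q s ≤ deriv Q r / Q r * δ r s + (s * φ r s + r * s * φ1 r s)) := by
  -- points with positive second coordinate are in the domain
  have hD : ∀ (x y : ℝ), 0 < y → (x, y) ≠ ((0:ℝ), (0:ℝ)) := by
    intro x y hy h
    simp only [Prod.mk.injEq] at h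
    exact hy.ne' h.2
  -- ψ = φ2 / φ
  have hpsi_eq : ∀ x y : ℝ, 0 ≤ x → x ≤ y → 0 < y → ψ x y = φ2 x y / φ x y := by
    intro x y hx hxy hy
    have hne := hD x y hy
    have h1 := (hφ2 x y hx hxy hne).log (hφpos x y hx hxy hne).ne'
    have h2 := hψ x y hx hxy hne
    have hu : UniqueDiffWithinAt ℝ (Ici x) y := (uniqueDiffOn_Ici x) y hxy
    rw [← h2.derivWithin hu, h1.derivWithin hu]
  -- ψ is monotone in the first variable
  have hpsi_mono : ∀ y : ℝ, 0 < y → MonotoneOn (fun t => ψ t y) (Icc 0 y) := by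
    intro y hy
    apply monotoneOn_of_hasDerivWithinAt_nonneg (convex_Icc 0 y) (f' := fun t => ψ1 t y)
    · intro t ht
      exact (hψ1 t y ht.1 ht.2 (hD _ _ hy)).continuousWithinAt
    · intro t ht
      rw [interior_Icc] at ht ⊢
      exact (hψ1 t y ht.1.le ht.2.le (hD _ _ hy)).mono Ioo_subset_Icc_self
    · intro t ht
      rw [interior_Icc] at ht
      exact hlogsuper t y ht.1.le ht.2.le (hD _ _ hy)
  -- rectangle (log-supermodularity) inequality
  have hrect : ∀ x x' u v : ℝ, 0 ≤ x → x ≤ x' → x' ≤ u → u ≤ v → 0 < u →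
      Real.log (φ x' u) + Real.log (φ x v) ≤ Real.log (φ x' v) + Real.log (φ x u) := by
    intro x x' u v hx hxx' hx'u huv hu
    have hx' : 0 ≤ x' := hx.trans hxx'
    have hder : ∀ y ∈ Icc u v,
        HasDerivWithinAt (fun y => Real.log (φ x' y) - Real.log (φ x y))
          (ψ x' y - ψ x y) (Icc u v) y := by
      intro y hy
      have hy0 : 0 < y := hu.trans_le hy.1
      have hs1 : Icc u v ⊆ Ici x' := fun z hz => le_trans hx'u hz.1
      have hs2 : Icc u v ⊆ Ici x := fun z hz => le_trans (hxx'.trans hx'u) hz.1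
      exact ((hψ x' y hx' (hx'u.trans hy.1) (hD _ _ hy0)).mono hs1).sub
        ((hψ x y hx ((hxx'.trans hx'u).trans hy.1) (hD _ _ hy0)).mono hs2)
    have hmono : MonotoneOn (fun y => Real.log (φ x' y) - Real.log (φ x y)) (Icc u v) := by
      apply monotoneOn_of_hasDerivWithinAt_nonneg (convex_Icc u v)
        (f' := fun y => ψ x' y - ψ x y)
      · intro y hy; exact (hder y hy).continuousWithinAt
      · intro y hy
        rw [interior_Icc] at hy ⊢
        exact (hder y (Ioo_subset_Icc_self hy)).mono Ioo_subset_Icc_self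
      · intro y hy
        rw [interior_Icc] at hy
        have hy0 : 0 < y := hu.trans hy.1
        have := hpsi_mono y hy0 ⟨hx, (hxx'.trans hx'u).trans hy.1.le⟩
          ⟨hx', hx'u.trans hy.1.le⟩ hxx'
        simpa using sub_nonneg.2 this
    have h := hmono ⟨le_rfl, huv⟩ ⟨huv, le_rfl⟩ huv
    dsimp only at h
    linarith
  -- multiplicative form of the rectangle inequality
  have hrectm : ∀ x x' u v : ℝ, 0 ≤ x → x ≤ x' → x' ≤ u → u ≤ v → 0 < u →
      φ x' u * φ x v ≤ φ x' v * φ x u := by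
    intro x x' u v hx hxx' hx'u huv hu
    have hx' : 0 ≤ x' := hx.trans hxx'
    have hv : 0 < v := hu.trans_le huv
    have p1 : 0 < φ x' u := hφpos x' u hx' hx'u (hD _ _ hu)
    have p2 : 0 < φ x v := hφpos x v hx ((hxx'.trans hx'u).trans huv) (hD _ _ hv)
    have p3 : 0 < φ x' v := hφpos x' v hx' (hx'u.trans huv) (hD _ _ hv)
    have p4 : 0 < φ x u := hφpos x u hx (hxx'.trans hx'u) (hD _ _ hu)
    have h := hrect x x' u v hx hxx' hx'u huv hu
    rw [← Real.log_mul p1.ne' p2.ne', ← Real.log_mul p3.ne' p4.ne'] at h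
    exact (Real.log_le_log_iff (by positivity) (by positivity)).1 h
  -- logarithmic derivative of Q
  have hQder : ∀ t : ℝ, 0 < t → deriv Q t / Q t = -((φ 0 t + t * φ2 0 t) / (t * φ 0 t)) := by
    intro t ht
    have hA : 0 < φ 0 t := hφpos 0 t le_rfl ht.le (hD _ _ ht)
    have hg : HasDerivAt (fun y => φ 0 y) (φ2 0 t) t :=
      (hφ2 0 t le_rfl ht.le (hD _ _ ht)).hasDerivAt (Ici_mem_nhds ht)
    have hF : HasDerivAt (fun y => y * φ 0 y) (1 * φ 0 t + t * φ2 0 t) t :=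
      (hasDerivAt_id t).mul hg
    have hinv : HasDerivAt (fun y => (y * φ 0 y)⁻¹)
        (-(1 * φ 0 t + t * φ2 0 t) / (t * φ 0 t) ^ 2) t := hF.inv (by positivity)
    have hev : Q =ᶠ[𝓝 t] fun y => (y * φ 0 y)⁻¹ := by
      filter_upwards [Ioi_mem_nhds ht] with y hy
      rw [hQ y hy, one_div]
    have hderiv : deriv Q t = -(1 * φ 0 t + t * φ2 0 t) / (t * φ 0 t) ^ 2 := by
      rw [hev.deriv_eq, hinv.deriv]
    rw [hderiv, hQ t ht]
    field_simp
  constructor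
  · -- first inequality: 0 < s ≤ r
    intro r s hs hsr
    have hr : 0 < r := hs.trans_le hsr
    have hA : 0 < φ 0 r := hφpos 0 r le_rfl hr.le (hD _ _ hr)
    have hP : 0 < φ s r := hφpos s r hs.le hsr (hD _ _ hr)
    -- ψ 0 r ≤ ψ s r
    have hm : ψ 0 r ≤ ψ s r :=
      hpsi_mono r hr ⟨le_rfl, hr.le⟩ ⟨hs.le, hsr⟩ hs.le
    rw [hpsi_eq 0 r le_rfl hr.le hr, hpsi_eq s r hs.le hsr hr] at hm
    have hkey : φ2 0 r * φ s r ≤ φ2 s r * φ 0 r := (div_le_div_iff₀ hA hP).1 hm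
    rw [hδ, hQder r hr]
    have hRHS : -((φ 0 r + r * φ2 0 r) / (r * φ 0 r)) * (s * r * φ s r)
        + (s * φ s r + s * r * φ2 s r)
        = s * r * (φ2 s r * φ 0 r - φ s r * φ2 0 r) / φ 0 r := by
      field_simp
      ring
    rw [hRHS]
    apply div_nonneg _ hA.le
    have : 0 ≤ φ2 s r * φ 0 r - φ s r * φ2 0 r := by linarith [hkey]
    positivity
  · -- second inequality: 0 < r ≤ s
    intro r s hr hrs
    have hs0 : 0 < s := hr.trans_le hrs
    have hA : 0 < φ 0 r := hφpos 0 r le_rfl hr.le (hD _ _ hr)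
    have hAs : 0 < φ 0 s := hφpos 0 s le_rfl hs0.le (hD _ _ hs0)
    have hP : 0 < φ r s := hφpos r s hr.le hrs (hD _ _ hs0)
    have hPd : 0 < φ r r := hφpos r r hr.le le_rfl (hD _ _ hr)
    -- Step A: φ1 r r / φ r r ≤ φ1 r s / φ r s
    have hF : ∀ x ∈ Icc (0:ℝ) r,
        HasDerivWithinAt (fun t => Real.log (φ t s) - Real.log (φ t r))
          (φ1 x s / φ x s - φ1 x r / φ x r) (Icc 0 r) x := by
      intro x hx
      have h1 : HasDerivWithinAt (fun t => Real.log (φ t s)) (φ1 x s / φ x s) (Icc 0 r) x :=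
        ((hφ1 x s hx.1 (hx.2.trans hrs) (hD _ _ hs0)).log
          (hφpos x s hx.1 (hx.2.trans hrs) (hD _ _ hs0)).ne').mono (Icc_subset_Icc le_rfl hrs)
      have h2 : HasDerivWithinAt (fun t => Real.log (φ t r)) (φ1 x r / φ x r) (Icc 0 r) x :=
        (hφ1 x r hx.1 hx.2 (hD _ _ hr)).log (hφpos x r hx.1 hx.2 (hD _ _ hr)).ne'
      exact h1.sub h2
    have hmonoF : MonotoneOn (fun t => Real.log (φ t s) - Real.log (φ t r)) (Icc 0 r) := by
      intro x hx x' hx' hxx'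
      have := hrect x x' r s hx.1 hxx' hx'.2 hrs hr
      simp only
      linarith
    have hDnn : 0 ≤ φ1 r s / φ r s - φ1 r r / φ r r :=
      endpoint_deriv_nonneg hr hmonoF (hF r ⟨hr.le, le_rfl⟩)
    have h2 : φ1 r r * φ r s ≤ φ1 r s * φ r r :=
      (div_le_div_iff₀ hPd hP).1 (by linarith)
    -- Step B: rectangle inequality
    have h3 : φ r r * φ 0 s ≤ φ r s * φ 0 r := hrectm 0 r r s le_rfl hr.le le_rfl hrs hr
    -- S(r) ≥ C
    have h1 : C * (φ 0 r) ^ 2 ≤ r * φ1 r r * φ 0 r - r * φ r r * φ2 0 r :=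
      (le_div_iff₀ (by positivity)).1 (hS r hr)
    -- the key combined inequality
    have key : C * (φ 0 s * φ 0 r) ≤ r * (φ1 r s * φ 0 r - φ r s * φ2 0 r) := by
      have hcancel : φ r r * (C * (φ 0 s * φ 0 r))
          ≤ φ r r * (r * (φ1 r s * φ 0 r - φ r s * φ2 0 r)) := by
        have k1 : C * (φ 0 r) ^ 2 * φ r s
            ≤ (r * φ1 r r * φ 0 r - r * φ r r * φ2 0 r) * φ r s :=
          mul_le_mul_of_nonneg_right h1 hP.le
        have k2 : r * φ 0 r * (φ1 r r * φ r s) ≤ r * φ 0 r * (φ1 r s * φ r r) :=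
          mul_le_mul_of_nonneg_left h2 (by positivity)
        have k3 : C * φ 0 r * (φ r r * φ 0 s) ≤ C * φ 0 r * (φ r s * φ 0 r) :=
          mul_le_mul_of_nonneg_left h3 (by positivity)
        nlinarith [k1, k2, k3]
      exact le_of_mul_le_mul_left hcancel hPd
    rw [hδ, hQder r hr, hQ s hs0, one_div, div_eq_mul_inv, inv_inv]
    have hRHS : -((φ 0 r + r * φ2 0 r) / (r * φ 0 r)) * (r * s * φ r s)
        + (s * φ r s + r * s * φ1 r s)
        = s * (r * (φ1 r s * φ 0 r - φ r s * φ2 0 r)) / φ 0 r := by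
      field_simp
      ring
    rw [hRHS, le_div_iff₀ hA]
    nlinarith [mul_le_mul_of_nonneg_left key hs0.le]
end
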